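/- arXiv:1808.07751 — 11 statements merged into one kernel-verified Lean document; each statement's English description precedes it below -/
import Mathlib

section
/- Let (λ_n) be a sequence with 0 ≤ λ_0 < λ_1 < ⋯ → ∞ and let (a_n) be a sequence of real numbers such that the generalized Dirichlet series ∑ a_n e^{-λ_n s} converges for every s > 0 and tends to a limit L as s → 0⁺. If (λ_n/(λ_n − λ_{n−1}))·|a_n| → 0 as n → ∞ (with the convention λ_{−1} = 0), then ∑ a_n converges to L. -/
open Filter Real Topology

private lemma exp_diff_key (x y : ℝ) (h : x ≤ y) :
    (y - x) * Real.exp (-y) ≤ Real.exp (-x) - Real.exp (-y) := by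
  have h1 : (y - x) + 1 ≤ Real.exp (y - x) := Real.add_one_le_exp _
  have h2 : Real.exp (-x) = Real.exp (-y) * Real.exp (y - x) := by
    rw [← Real.exp_add]; ring_nf
  nlinarith [Real.exp_pos (-y)]

private lemma one_sub_exp_le (x : ℝ) : 1 - Real.exp (-x) ≤ x := by
  have := Real.add_one_le_exp (-x); linarith

set_option maxHeartbeats 2000000 in
/-- Tauberian theorem for generalized Dirichlet series (λ_{-1} = 0 convention). -/
theorem dirichlet_tauberian_o
    (lam : ℕ → ℝ) (hlam0 : 0 ≤ lam 0) (hmono : StrictMono lam)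
    (hinf : Tendsto lam atTop atTop)
    (a : ℕ → ℝ) (g : ℝ → ℝ) (L : ℝ)
    (hconv : ∀ s : ℝ, 0 < s →
      Tendsto (fun N => ∑ n ∈ Finset.range N, a n * Real.exp (-(lam n) * s))
        atTop (𝓝 (g s)))
    (hlim : Tendsto g (𝓝[>] (0 : ℝ)) (𝓝 L))
    (htauber : Tendsto
      (fun n => lam n / (lam n - (if n = 0 then 0 else lam (n - 1))) * |a n|)
      atTop (𝓝 0)) :
    Tendsto (fun N => ∑ n ∈ Finset.range N, a n) atTop (𝓝 L) := by
  classical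
  set F : ℕ → ℝ := fun n => if n = 0 then 0 else lam (n - 1) with hFdef
  set eps : ℕ → ℝ := fun n => lam n / (lam n - F n) * |a n| with hepsdef
  have hFsucc : ∀ n : ℕ, F (n + 1) = lam n := by intro n; simp [hFdef]
  have hlamnn : ∀ n, 0 ≤ lam n := fun n => le_trans hlam0 (hmono.monotone (Nat.zero_le n))
  have hFle : ∀ n, F n ≤ lam n := by
    intro n
    cases n with
    | zero => simpa [hFdef] using hlam0
    | succ m => simpa [hFdef] using (hmono (Nat.lt_succ_self m)).le
  have hFnn : ∀ n, 0 ≤ F n := by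
    intro n; cases n with
    | zero => simp [hFdef]
    | succ m => simpa [hFdef] using hlamnn m
  have hlampos : ∀ n : ℕ, 1 ≤ n → 0 < lam n := by
    intro n hn
    exact lt_of_le_of_lt hlam0 (hmono (by omega : 0 < n))
  have hdpos : ∀ n : ℕ, 1 ≤ n → 0 < lam n - F n := by
    intro n hn
    cases n with
    | zero => omega
    | succ m =>
        have := hmono (Nat.lt_succ_self m)
        have : lam m < lam (m + 1) := this
        simp only [hFdef, Nat.succ_ne_zero, if_false, Nat.add_sub_cancel]
        linarith
  have hdnn : ∀ n, 0 ≤ lam n - F n := fun n => sub_nonneg.2 (hFle n)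
  have hepsnn : ∀ n, 0 ≤ eps n :=
    fun n => mul_nonneg (div_nonneg (hlamnn n) (hdnn n)) (abs_nonneg _)
  -- key pointwise identity/bound
  have key1 : ∀ n, lam n * |a n| ≤ eps n * (lam n - F n) := by
    intro n
    by_cases h : lam n - F n = 0
    · rcases Nat.eq_zero_or_pos n with h0 | h0
      · subst h0
        have : lam 0 = 0 := by simpa [hFdef] using h
        simp [hepsdef, this, h]
      · exact absurd h (ne_of_gt (hdpos n h0))
    · have : eps n * (lam n - F n) = lam n * |a n| := by
        simp only [hepsdef]; rw [div_mul_eq_mul_div, div_mul_cancel₀ _ h]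
      rw [this]
  -- the tendsto hypothesis is about eps
  have htaub' : Tendsto eps atTop (𝓝 0) := htauber
  rw [Metric.tendsto_atTop]
  intro ε hε
  set δ : ℝ := min 1 ((ε / 8) ^ 2) with hδdef
  have hδpos : 0 < δ := lt_min one_pos (by positivity)
  set c : ℝ := Real.sqrt δ with hcdef
  have hcpos : 0 < c := Real.sqrt_pos.2 hδpos
  have hcsq : c ^ 2 = δ := Real.sq_sqrt hδpos.le
  have hcle : c ≤ ε / 8 := by
    have : δ ≤ (ε / 8) ^ 2 := min_le_right _ _
    calc c = Real.sqrt δ := rfl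
      _ ≤ Real.sqrt ((ε / 8) ^ 2) := Real.sqrt_le_sqrt this
      _ = ε / 8 := by rw [Real.sqrt_sq (by positivity)]
  -- choose K with eps n ≤ δ for n ≥ K
  obtain ⟨K, hK⟩ := (Metric.tendsto_atTop.1 htaub' δ hδpos)
  have hKeps : ∀ n, K ≤ n → eps n ≤ δ := by
    intro n hn
    have := hK n hn
    rw [Real.dist_eq, sub_zero] at this
    exact le_of_lt (lt_of_le_of_lt (le_abs_self _) this)
  set C : ℝ := ∑ n ∈ Finset.range K, lam n * |a n| with hCdef
  have hCnn : 0 ≤ C :=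
    Finset.sum_nonneg fun n _ => mul_nonneg (hlamnn n) (abs_nonneg _)
  -- bound on sum of lam n * |a n| over range N, for N ≥ K
  have hsum1 : ∀ N, K ≤ N → ∑ n ∈ Finset.range N, lam n * |a n| ≤ C + δ * lam N := by
    intro N hN
    rw [← Finset.sum_range_add_sum_Ico _ hN]
    have h1 : ∑ n ∈ Finset.Ico K N, lam n * |a n| ≤
        ∑ n ∈ Finset.Ico K N, δ * (F (n + 1) - F n) := by
      apply Finset.sum_le_sum
      intro n hn
      have hn' : K ≤ n := (Finset.mem_Ico.1 hn).1
      calc lam n * |a n| ≤ eps n * (lam n - F n) := key1 n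
        _ ≤ δ * (lam n - F n) := by
            exact mul_le_mul_of_nonneg_right (hKeps n hn') (hdnn n)
        _ = δ * (F (n + 1) - F n) := by rw [hFsucc]
    have h2 : ∑ n ∈ Finset.Ico K N, δ * (F (n + 1) - F n) = δ * (F N - F K) := by
      rw [← Finset.mul_sum]
      congr 1
      rw [Finset.sum_Ico_eq_sub _ hN, Finset.sum_range_sub, Finset.sum_range_sub]
      cases K with
      | zero => simp
      | succ k => ring
    have h3 : δ * (F N - F K) ≤ δ * lam N := by
      apply mul_le_mul_of_nonneg_left _ hδpos.le
      have := hFnn K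
      have := hFle N
      linarith
    linarith
  -- tail bound: for N ≥ max K 1, s > 0:
  have htail : ∀ N, K ≤ N → 1 ≤ N → ∀ s : ℝ, 0 < s →
      |g s - ∑ n ∈ Finset.range N, a n * Real.exp (-(lam n) * s)| ≤ δ / (s * lam N) := by
    intro N hKN h1N s hs
    have hlNpos := hlampos N h1N
    -- partial tail sums are bounded
    have hbound : ∀ M, N ≤ M →
        |∑ n ∈ Finset.Ico N M, a n * Real.exp (-(lam n) * s)| ≤ δ / (s * lam N) := by
      intro M hM
      have habs : |∑ n ∈ Finset.Ico N M, a n * Real.exp (-(lam n) * s)| ≤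
          ∑ n ∈ Finset.Ico N M, |a n| * Real.exp (-(lam n) * s) := by
        refine le_trans (Finset.abs_sum_le_sum_abs _ _) ?_
        apply Finset.sum_le_sum
        intro n _
        rw [abs_mul, abs_of_pos (Real.exp_pos _)]
      have hterm : ∀ n ∈ Finset.Ico N M, |a n| * Real.exp (-(lam n) * s) ≤
          δ / (s * lam N) * (Real.exp (-(s * F n)) - Real.exp (-(s * F (n + 1)))) := by
        intro n hn
        obtain ⟨hNn, _⟩ := Finset.mem_Ico.1 hn
        have h1n : 1 ≤ n := le_trans h1N hNn
        have hlpos := hlampos n h1n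
        have hd := hdpos n h1n
        have habsa : |a n| = eps n * (lam n - F n) / lam n := by
          simp only [hepsdef]
          rw [div_mul_eq_mul_div, div_mul_cancel₀ _ hd.ne', mul_div_cancel_left₀ _ hlpos.ne']
        have hexp : (lam n - F n) * Real.exp (-(lam n) * s) ≤
            (Real.exp (-(s * F n)) - Real.exp (-(s * lam n))) / s := by
          have := exp_diff_key (s * F n) (s * lam n)
            (by nlinarith [hFle n])
          rw [le_div_iff₀ hs]
          calc (lam n - F n) * Real.exp (-(lam n) * s) * s
              = (s * lam n - s * F n) * Real.exp (-(s * lam n)) := by ring_nf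
            _ ≤ _ := this
        have heps : eps n ≤ δ := hKeps n (le_trans hKN hNn)
        have hlam_le : lam N ≤ lam n := hmono.monotone hNn
        have hnn2 : 0 ≤ Real.exp (-(s * F n)) - Real.exp (-(s * lam n)) := by
          apply sub_nonneg.2
          apply Real.exp_le_exp.2
          nlinarith [hFle n]
        have hXnn : 0 ≤ (lam n - F n) * Real.exp (-(lam n) * s) :=
          mul_nonneg (hdnn n) (Real.exp_pos _).le
        calc |a n| * Real.exp (-(lam n) * s)
            = eps n * ((lam n - F n) * Real.exp (-(lam n) * s)) / lam n := by
              rw [habsa]; ring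
          _ ≤ δ * ((Real.exp (-(s * F n)) - Real.exp (-(s * lam n))) / s) / lam N := by
              gcongr
          _ = δ / (s * lam N) * (Real.exp (-(s * F n)) - Real.exp (-(s * lam n))) := by
              field_simp
          _ = δ / (s * lam N) * (Real.exp (-(s * F n)) - Real.exp (-(s * F (n + 1)))) := by
              rw [hFsucc]
      have hsum : ∑ n ∈ Finset.Ico N M, |a n| * Real.exp (-(lam n) * s) ≤
          δ / (s * lam N) * ∑ n ∈ Finset.Ico N M,
            (Real.exp (-(s * F n)) - Real.exp (-(s * F (n + 1)))) := by
        rw [Finset.mul_sum]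
        exact Finset.sum_le_sum hterm
      have htel : ∑ n ∈ Finset.Ico N M,
          (Real.exp (-(s * F n)) - Real.exp (-(s * F (n + 1))))
          = Real.exp (-(s * F N)) - Real.exp (-(s * F M)) := by
        have : ∀ (f : ℕ → ℝ), ∑ n ∈ Finset.Ico N M, (f n - f (n + 1)) = f N - f M := by
          intro f
          rw [Finset.sum_Ico_eq_sub _ hM]
          have e1 : ∑ n ∈ Finset.range M, (f n - f (n+1)) = f 0 - f M := by
            have := Finset.sum_range_sub (fun n => -f n) M
            simp only [neg_sub_neg] at this
            linarith [this]
          have e2 : ∑ n ∈ Finset.range N, (f n - f (n+1)) = f 0 - f N := by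
            have := Finset.sum_range_sub (fun n => -f n) N
            simp only [neg_sub_neg] at this
            linarith [this]
          rw [e1, e2]; ring
        exact this (fun n => Real.exp (-(s * F n)))
      have hone : Real.exp (-(s * F N)) - Real.exp (-(s * F M)) ≤ 1 := by
        have := Real.exp_pos (-(s * F M))
        have h2 : Real.exp (-(s * F N)) ≤ 1 := by
          rw [Real.exp_le_one_iff]
          nlinarith [hFnn N]
        linarith
      calc |∑ n ∈ Finset.Ico N M, a n * Real.exp (-(lam n) * s)|
          ≤ ∑ n ∈ Finset.Ico N M, |a n| * Real.exp (-(lam n) * s) := habs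
        _ ≤ δ / (s * lam N) * (Real.exp (-(s * F N)) - Real.exp (-(s * F M))) := by
            rw [← htel] at *; exact le_trans hsum (le_refl _)
        _ ≤ δ / (s * lam N) * 1 := by
            apply mul_le_mul_of_nonneg_left hone (by positivity)
        _ = δ / (s * lam N) := mul_one _
    -- take limit
    have hlimtail : Tendsto (fun M => ∑ n ∈ Finset.Ico N M, a n * Real.exp (-(lam n) * s))
        atTop (𝓝 (g s - ∑ n ∈ Finset.range N, a n * Real.exp (-(lam n) * s))) := by
      have h1 := (hconv s hs).sub_const (∑ n ∈ Finset.range N, a n * Real.exp (-(lam n) * s))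
      apply h1.congr'
      filter_upwards [eventually_ge_atTop N] with M hM
      rw [Finset.sum_Ico_eq_sub _ hM]
    have : Tendsto (fun M => |∑ n ∈ Finset.Ico N M, a n * Real.exp (-(lam n) * s)|)
        atTop (𝓝 |g s - ∑ n ∈ Finset.range N, a n * Real.exp (-(lam n) * s)|) :=
      hlimtail.abs
    apply le_of_tendsto this
    filter_upwards [eventually_ge_atTop N] with M hM using hbound M hM
  -- now assemble
  have hsN : Tendsto (fun N : ℕ => c / lam N) atTop (𝓝[>] (0:ℝ)) := by
    apply tendsto_nhdsWithin_of_tendsto_nhds_of_eventually_within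
    · exact Tendsto.div_atTop tendsto_const_nhds hinf
    · filter_upwards [eventually_ge_atTop 1] with N hN
      exact Set.mem_Ioi.2 (div_pos hcpos (hlampos N hN))
  have hg : Tendsto (fun N : ℕ => g (c / lam N)) atTop (𝓝 L) := hlim.comp hsN
  obtain ⟨N₁, hN₁⟩ := Metric.tendsto_atTop.1 hg (ε/8) (by positivity)
  have hCC : Tendsto (fun N : ℕ => c * C / lam N) atTop (𝓝 0) :=
    Tendsto.div_atTop tendsto_const_nhds hinf
  obtain ⟨N₂, hN₂⟩ := Metric.tendsto_atTop.1 hCC (ε/8) (by positivity)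
  refine ⟨max (max K 1) (max N₁ N₂), ?_⟩
  intro N hN
  have hKN : K ≤ N := le_trans (le_trans (le_max_left _ _) (le_max_left _ _)) hN
  have h1N : 1 ≤ N := le_trans (le_trans (le_max_right _ _) (le_max_left _ _)) hN
  have hN1 : N₁ ≤ N := le_trans (le_trans (le_max_left _ _) (le_max_right _ _)) hN
  have hN2 : N₂ ≤ N := le_trans (le_trans (le_max_right _ _) (le_max_right _ _)) hN
  have hlN : 0 < lam N := hlampos N h1N
  set s : ℝ := c / lam N with hsdef
  have hspos : 0 < s := div_pos hcpos hlN
  -- part 1: partial sum vs truncated Dirichlet sum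
  have hpart1 : |∑ n ∈ Finset.range N, a n - ∑ n ∈ Finset.range N, a n * Real.exp (-(lam n) * s)|
      ≤ s * (C + δ * lam N) := by
    rw [← Finset.sum_sub_distrib]
    calc |∑ n ∈ Finset.range N, (a n - a n * Real.exp (-(lam n) * s))|
        ≤ ∑ n ∈ Finset.range N, |a n - a n * Real.exp (-(lam n) * s)| :=
          Finset.abs_sum_le_sum_abs _ _
      _ ≤ ∑ n ∈ Finset.range N, s * (lam n * |a n|) := by
          apply Finset.sum_le_sum
          intro n _
          have h1 : a n - a n * Real.exp (-(lam n) * s) = a n * (1 - Real.exp (-(lam n) * s)) := by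
            ring
          rw [h1, abs_mul]
          have h2 : 0 ≤ 1 - Real.exp (-(lam n) * s) := by
            have : Real.exp (-(lam n) * s) ≤ 1 := by
              rw [Real.exp_le_one_iff]
              nlinarith [hlamnn n]
            linarith
          rw [abs_of_nonneg h2]
          have h3 : 1 - Real.exp (-(lam n) * s) ≤ lam n * s := by
            have := one_sub_exp_le (lam n * s)
            have he : -(lam n) * s = -(lam n * s) := by ring
            rw [he]
            exact this
          calc |a n| * (1 - Real.exp (-(lam n) * s)) ≤ |a n| * (lam n * s) :=
                mul_le_mul_of_nonneg_left h3 (abs_nonneg _)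
            _ = s * (lam n * |a n|) := by ring
      _ = s * ∑ n ∈ Finset.range N, lam n * |a n| := by rw [Finset.mul_sum]
      _ ≤ s * (C + δ * lam N) := mul_le_mul_of_nonneg_left (hsum1 N hKN) hspos.le
  have hpart2 := htail N hKN h1N s hspos
  have hgL : |g s - L| < ε / 8 := by
    have := hN₁ N hN1
    rwa [Real.dist_eq] at this
  have hcc : c * C / lam N < ε / 8 := by
    have := hN₂ N hN2
    rw [Real.dist_eq, sub_zero] at this
    exact lt_of_le_of_lt (le_abs_self _) this
  -- numeric bounds
  have e1 : s * (C + δ * lam N) = c * C / lam N + c * δ := by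
    rw [hsdef]; field_simp
  have e2 : δ / (s * lam N) = c := by
    rw [hsdef]
    have : c / lam N * lam N = c := div_mul_cancel₀ _ (ne_of_gt hlN)
    rw [this, ← hcsq]
    rw [pow_two]
    rw [mul_div_assoc, div_self (ne_of_gt hcpos), mul_one]
  have hδle1 : δ ≤ 1 := min_le_left _ _
  have hcδ : c * δ ≤ ε / 8 := by
    calc c * δ ≤ c * 1 := mul_le_mul_of_nonneg_left hδle1 hcpos.le
      _ = c := mul_one _
      _ ≤ ε / 8 := hcle
  rw [Real.dist_eq]
  have htri : |∑ n ∈ Finset.range N, a n - L| ≤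
      |∑ n ∈ Finset.range N, a n - ∑ n ∈ Finset.range N, a n * Real.exp (-(lam n) * s)|
      + |g s - ∑ n ∈ Finset.range N, a n * Real.exp (-(lam n) * s)|
      + |g s - L| := by
    have := abs_sub_le (∑ n ∈ Finset.range N, a n)
      (∑ n ∈ Finset.range N, a n * Real.exp (-(lam n) * s)) L
    have h2 := abs_sub_le (∑ n ∈ Finset.range N, a n * Real.exp (-(lam n) * s)) (g s) L
    have h3 : |∑ n ∈ Finset.range N, a n * Real.exp (-(lam n) * s) - g s|
        = |g s - ∑ n ∈ Finset.range N, a n * Real.exp (-(lam n) * s)| := abs_sub_comm _ _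
    linarith
  rw [e1] at hpart1
  rw [e2] at hpart2
  calc |∑ n ∈ Finset.range N, a n - L| ≤ _ := htri
    _ < (c * C / lam N + c * δ) + c + ε / 8 + ε/8 := by
        linarith
    _ ≤ ε/8 + ε/8 + ε/8 + ε/8 + ε/8 := by linarith [hcc, hcδ, hcle]
    _ < ε := by linarith
end

section
/- Let (λ_n) be a sequence with 0 ≤ λ_0 < λ_1 < ⋯ → ∞ and (a_n) a real sequence such that ∑ a_n e^{-λ_n s} converges for every s > 0 and is bounded as s → 0⁺. If (λ_n/(λ_n − λ_{n−1}))·|a_n| = O(1), then the partial sums ∑_{k=0}^n a_k form a bounded sequence. -/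
open Filter Real Topology

/-- Boundedness Tauberian theorem for generalized Dirichlet series. -/
theorem dirichlet_tauberian_O
    (lam : ℕ → ℝ) (hlam0 : 0 ≤ lam 0) (hmono : StrictMono lam)
    (hinf : Tendsto lam atTop atTop)
    (a : ℕ → ℝ) (g : ℝ → ℝ)
    (hconv : ∀ s : ℝ, 0 < s →
      Tendsto (fun N => ∑ n ∈ Finset.range N, a n * Real.exp (-(lam n) * s))
        atTop (𝓝 (g s)))
    (hbdd : ∃ C : ℝ, ∀ᶠ s in 𝓝[>] (0 : ℝ), |g s| ≤ C)
    (htauber : ∃ C : ℝ, ∀ n,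
      lam n / (lam n - (if n = 0 then 0 else lam (n - 1))) * |a n| ≤ C) :
    ∃ M : ℝ, ∀ N, |∑ n ∈ Finset.range N, a n| ≤ M := by
  obtain ⟨C', hC'⟩ := htauber
  set C₀ : ℝ := max C' 0 with hC₀def
  have hC₀nonneg : 0 ≤ C₀ := le_max_right _ _
  -- the auxiliary sequence F with F 0 = 0, F (n+1) = lam n
  set F : ℕ → ℝ := fun n => if n = 0 then 0 else lam (n - 1) with hFdef
  have hF0 : F 0 = 0 := rfl
  have hFsucc : ∀ n, F (n + 1) = lam n := by intro n; simp [hFdef]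
  have hC₀ : ∀ n, lam n / (lam n - F n) * |a n| ≤ C₀ :=
    fun n => (hC' n).trans (le_max_left _ _)
  have hFstep : ∀ n, F n ≤ F (n + 1) := by
    intro n
    cases n with
    | zero => simpa [hF0, hFsucc] using hlam0
    | succ k => rw [hFsucc, hFsucc]; exact (hmono (Nat.lt_succ_self k)).le
  have hFmono : Monotone F := monotone_nat_of_le_succ hFstep
  have hFnonneg : ∀ n, 0 ≤ F n := by
    intro n; have := hFmono (Nat.zero_le n); simpa [hF0] using this
  have hlamnonneg : ∀ n, 0 ≤ lam n := by
    intro n; have := hFnonneg (n + 1); rwa [hFsucc] at this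
  have hFle : ∀ n, F n ≤ lam n := by
    intro n; have := hFstep n; rwa [hFsucc] at this
  have hFlt : ∀ n, 0 < lam n → F n < lam n := by
    intro n hn
    cases n with
    | zero => simpa [hF0] using hn
    | succ k => rw [hFsucc]; exact hmono (Nat.lt_succ_self k)
  -- key consequence of the Tauberian hypothesis
  have habound : ∀ n, 0 < lam n → |a n| * lam n ≤ C₀ * (lam n - F n) := by
    intro n hn
    have hd : 0 < lam n - F n := sub_pos.mpr (hFlt n hn)
    have h := hC₀ n
    rw [div_mul_eq_mul_div, div_le_iff₀ hd] at h
    nlinarith [h]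
  -- extract the bound on g near 0
  obtain ⟨Cg, hCg⟩ := hbdd
  obtain ⟨ε, hε, hball⟩ := (nhdsGT_basis (0 : ℝ)).eventually_iff.mp hCg
  -- choose N₀ beyond which lam N is large
  obtain ⟨N₀, hN₀⟩ := Filter.eventually_atTop.mp (hinf.eventually_gt_atTop (max ε⁻¹ 1))
  have key : ∀ N, N₀ ≤ N → |∑ n ∈ Finset.range N, a n| ≤ Cg + 2 * C₀ := by
    intro N hN
    have hlamN : max ε⁻¹ 1 < lam N := hN₀ N hN
    have hlamNpos : 0 < lam N := lt_of_lt_of_le one_pos ((le_max_right _ _).trans hlamN.le)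
    set s : ℝ := (lam N)⁻¹ with hs
    have hspos : 0 < s := inv_pos.mpr hlamNpos
    have hsmul : lam N * s = 1 := mul_inv_cancel₀ hlamNpos.ne'
    have hsε : s < ε := by
      have h1 : ε⁻¹ < lam N := lt_of_le_of_lt (le_max_left _ _) hlamN
      have := inv_strictAnti₀ (inv_pos.mpr hε) h1
      rwa [inv_inv] at this
    have hgs : |g s| ≤ Cg := hball ⟨hspos, hsε⟩
    -- Front estimate: |S_N - P_N(s)| ≤ C₀
    have front : |∑ n ∈ Finset.range N, a n -
        ∑ n ∈ Finset.range N, a n * Real.exp (-(lam n) * s)| ≤ C₀ := by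
      rw [← Finset.sum_sub_distrib]
      calc |∑ n ∈ Finset.range N, (a n - a n * Real.exp (-(lam n) * s))|
          ≤ ∑ n ∈ Finset.range N, |a n - a n * Real.exp (-(lam n) * s)| :=
            Finset.abs_sum_le_sum_abs _ _
        _ ≤ ∑ n ∈ Finset.range N, C₀ * s * (F (n + 1) - F n) := by
            apply Finset.sum_le_sum
            intro n _
            have hexple : Real.exp (-(lam n) * s) ≤ 1 := by
              rw [← Real.exp_zero]
              apply Real.exp_le_exp.mpr
              nlinarith [hlamnonneg n, hspos.le]
            have h1e : 1 - Real.exp (-(lam n) * s) ≤ lam n * s := by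
              nlinarith [Real.add_one_le_exp (-(lam n) * s)]
            have habs : |a n - a n * Real.exp (-(lam n) * s)|
                = |a n| * (1 - Real.exp (-(lam n) * s)) := by
              rw [← mul_one_sub, abs_mul, abs_of_nonneg (show (0:ℝ) ≤ 1 - Real.exp (-(lam n) * s) by linarith)]
            rw [habs, hFsucc]
            rcases eq_or_lt_of_le (hlamnonneg n) with h0 | hpos
            · have hl0 : lam n = 0 := h0.symm
              have hF0' : F n = 0 := le_antisymm (hl0 ▸ hFle n) (hFnonneg n)
              rw [hl0, hF0']
              simp
            · have hab := habound n hpos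
              nlinarith [abs_nonneg (a n), hspos.le, Real.exp_pos (-(lam n) * s)]
        _ = C₀ * s * F N := by
            rw [← Finset.mul_sum]
            congr 1
            have := Finset.sum_range_sub (f := F) N
            rw [this, hF0, sub_zero]
        _ ≤ C₀ := by
            nlinarith [mul_le_mul_of_nonneg_right (hFle N) hspos.le, hsmul, hC₀nonneg,
              hFnonneg N, hspos.le]
    -- Tail estimate: the partial tails are uniformly bounded by C₀
    have tailsum : ∀ M, N ≤ M →
        |∑ n ∈ Finset.range M, a n * Real.exp (-(lam n) * s) -
         ∑ n ∈ Finset.range N, a n * Real.exp (-(lam n) * s)| ≤ C₀ := by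
      intro M hM
      rw [← Finset.sum_Ico_eq_sub _ hM]
      have term : ∀ n ∈ Finset.Ico N M, |a n * Real.exp (-(lam n) * s)| ≤
          C₀ * (Real.exp (-(F n) * s) - Real.exp (-(F (n + 1)) * s)) := by
        intro n hn
        have hNn : N ≤ n := (Finset.mem_Ico.mp hn).1
        have hlamge : lam N ≤ lam n := hmono.monotone hNn
        have hlamnpos : 0 < lam n := lt_of_lt_of_le hlamNpos hlamge
        have hab := habound n hlamnpos
        -- |a n| ≤ C₀ * ((lam n - F n) * s)
        have h1 : |a n| ≤ C₀ * ((lam n - F n) * s) := by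
          have h2 : 1 ≤ lam n * s := by nlinarith
          nlinarith [abs_nonneg (a n), hspos.le]
        -- (lam n - F n) * s * exp(-(lam n) s) ≤ exp(-(F n) s) - exp(-(lam n) s)
        have h3 : (lam n - F n) * s * Real.exp (-(lam n) * s) ≤
            Real.exp (-(F n) * s) - Real.exp (-(lam n) * s) := by
          have h4 := Real.add_one_le_exp ((lam n - F n) * s)
          have h5 : Real.exp ((lam n - F n) * s) * Real.exp (-(lam n) * s)
              = Real.exp (-(F n) * s) := by
            rw [← Real.exp_add]; ring_nf
          nlinarith [Real.exp_pos (-(lam n) * s)]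
        rw [abs_mul, abs_of_pos (Real.exp_pos _), hFsucc]
        nlinarith [Real.exp_pos (-(lam n) * s), (Real.exp_pos (-(lam n) * s)).le]
      calc |∑ n ∈ Finset.Ico N M, a n * Real.exp (-(lam n) * s)|
          ≤ ∑ n ∈ Finset.Ico N M, |a n * Real.exp (-(lam n) * s)| :=
            Finset.abs_sum_le_sum_abs _ _
        _ ≤ ∑ n ∈ Finset.Ico N M, C₀ * (Real.exp (-(F n) * s) - Real.exp (-(F (n + 1)) * s)) :=
            Finset.sum_le_sum term
        _ = C₀ * (Real.exp (-(F N) * s) - Real.exp (-(F M) * s)) := by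
            rw [← Finset.mul_sum]
            congr 1
            rw [Finset.sum_Ico_eq_sub _ hM,
              Finset.sum_range_sub' (fun n => Real.exp (-(F n) * s)),
              Finset.sum_range_sub' (fun n => Real.exp (-(F n) * s))]
            ring
        _ ≤ C₀ := by
            have hGN : Real.exp (-(F N) * s) ≤ 1 := by
              rw [← Real.exp_zero]
              apply Real.exp_le_exp.mpr
              nlinarith [hFnonneg N, hspos.le]
            nlinarith [Real.exp_pos (-(F M) * s)]
    -- limit argument
    have hlim := hconv s hspos
    have htail : |g s - ∑ n ∈ Finset.range N, a n * Real.exp (-(lam n) * s)| ≤ C₀ := by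
      have hlim2 : Tendsto (fun M => |∑ n ∈ Finset.range M, a n * Real.exp (-(lam n) * s) -
          ∑ n ∈ Finset.range N, a n * Real.exp (-(lam n) * s)|) atTop
          (𝓝 |g s - ∑ n ∈ Finset.range N, a n * Real.exp (-(lam n) * s)|) :=
        ((hlim.sub_const _).abs)
      exact le_of_tendsto hlim2 (Filter.eventually_atTop.mpr ⟨N, tailsum⟩)
    calc |∑ n ∈ Finset.range N, a n| =
        |(∑ n ∈ Finset.range N, a n - ∑ n ∈ Finset.range N, a n * Real.exp (-(lam n) * s))
          + (∑ n ∈ Finset.range N, a n * Real.exp (-(lam n) * s) - g s) + g s| := by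
            congr 1; ring
      _ ≤ |(∑ n ∈ Finset.range N, a n - ∑ n ∈ Finset.range N, a n * Real.exp (-(lam n) * s))
          + (∑ n ∈ Finset.range N, a n * Real.exp (-(lam n) * s) - g s)| + |g s| :=
            abs_add_le _ _
      _ ≤ |∑ n ∈ Finset.range N, a n - ∑ n ∈ Finset.range N, a n * Real.exp (-(lam n) * s)|
          + |∑ n ∈ Finset.range N, a n * Real.exp (-(lam n) * s) - g s| + |g s| := by
            linarith [abs_add_le (∑ n ∈ Finset.range N, a n -
              ∑ n ∈ Finset.range N, a n * Real.exp (-(lam n) * s))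
              (∑ n ∈ Finset.range N, a n * Real.exp (-(lam n) * s) - g s)]
      _ ≤ Cg + 2 * C₀ := by
            rw [abs_sub_comm (∑ n ∈ Finset.range N, a n * Real.exp (-(lam n) * s)) (g s)]
            linarith
  -- combine with the finitely many initial partial sums
  refine ⟨max (Cg + 2 * C₀)
    ((Finset.range (N₀ + 1)).sup' ⟨0, Finset.mem_range.mpr (Nat.succ_pos _)⟩
      (fun N => |∑ n ∈ Finset.range N, a n|)), ?_⟩
  intro N
  rcases le_or_gt N₀ N with h | h
  · exact (key N h).trans (le_max_left _ _)
  · refine le_trans ?_ (le_max_right _ _)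
    exact Finset.le_sup' (fun N => |∑ n ∈ Finset.range N, a n|)
      (Finset.mem_range.mpr (Nat.lt_succ_of_lt h))
end

section
/- Let 0 < λ_0 < λ_1 < ⋯ → ∞ with ∑ 1/λ_n = ∞, and let (a_n) be a real sequence such that ∑_{n=0}^∞ a_n · (λ_0⋯λ_n)/((s+λ_0)⋯(s+λ_n)) converges for every s > 0 and tends to L as s → 0⁺. If λ_n·(∑_{r=0}^n 1/λ_r)·|a_n| → 0 as n → ∞, then ∑ a_n converges to L. -/
open Filter Real Topology

lemma fto_Q_pos (lam : ℕ → ℝ) (hpos : ∀ r, 0 < lam r) {s : ℝ} (hs : 0 ≤ s) (m : ℕ) :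
    0 < ∏ r ∈ Finset.range m, lam r / (s + lam r) :=
  Finset.prod_pos fun r _ => div_pos (hpos r) (by linarith [hpos r])

lemma fto_Q_le_one (lam : ℕ → ℝ) (hpos : ∀ r, 0 < lam r) {s : ℝ} (hs : 0 ≤ s) (m : ℕ) :
    ∏ r ∈ Finset.range m, lam r / (s + lam r) ≤ 1 :=
  Finset.prod_le_one (fun r _ => (div_pos (hpos r) (by linarith [hpos r])).le)
    (fun r _ => by rw [div_le_one (by linarith [hpos r])]; linarith)

lemma fto_Q_step (lam : ℕ → ℝ) (hpos : ∀ r, 0 < lam r) {s : ℝ} (hs : 0 < s) (n : ℕ) :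
    (∏ r ∈ Finset.range (n+1), lam r / (s + lam r)) * s / lam n
      = (∏ r ∈ Finset.range n, lam r / (s + lam r))
        - ∏ r ∈ Finset.range (n+1), lam r / (s + lam r) := by
  rw [Finset.prod_range_succ]
  have h1 := hpos n
  have h2 : s + lam n ≠ 0 := by positivity
  have : (∏ r ∈ Finset.range n, lam r / (s + lam r)) * (lam n / (s + lam n)) * s / lam n
      = (∏ r ∈ Finset.range n, lam r / (s + lam r)) * (lam n / (s + lam n) * s / lam n) := by
    ring
  rw [this]
  have h3 : lam n / (s + lam n) * s / lam n = 1 - lam n / (s + lam n) := by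
    field_simp; ring
  rw [h3]; ring

lemma fto_one_sub_Q_le (lam : ℕ → ℝ) (hpos : ∀ r, 0 < lam r) {s : ℝ} (hs : 0 ≤ s) (m : ℕ) :
    1 - ∏ r ∈ Finset.range m, lam r / (s + lam r)
      ≤ s * ∑ r ∈ Finset.range m, 1 / lam r := by
  induction m with
  | zero => simp
  | succ m ih =>
    rw [Finset.prod_range_succ, Finset.sum_range_succ]
    have hQ1 := fto_Q_le_one lam hpos hs m
    have hQ0 := (fto_Q_pos lam hpos hs m).le
    have h1 := hpos m
    have key : (∏ r ∈ Finset.range m, lam r / (s + lam r)) * (1 - lam m / (s + lam m))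
        ≤ s * (1 / lam m) := by
      have h3 : 1 - lam m / (s + lam m) = s / (s + lam m) := by
        field_simp; ring
      rw [h3]
      calc (∏ r ∈ Finset.range m, lam r / (s + lam r)) * (s / (s + lam m))
          ≤ 1 * (s / (s + lam m)) := by
            apply mul_le_mul_of_nonneg_right hQ1 (by positivity)
        _ ≤ s * (1 / lam m) := by
            rw [one_mul, div_le_iff₀ (by linarith)]
            have hinv : 1 / lam m * lam m = 1 := one_div_mul_cancel h1.ne'
            have h4 : 0 < 1 / lam m := by positivity
            nlinarith [mul_nonneg (mul_nonneg h4.le hs) hs]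
    nlinarith [key]

lemma fto_main_bound (lam : ℕ → ℝ) (hpos : ∀ r, 0 < lam r) (a : ℕ → ℝ)
    (ε' : ℝ) (hε' : 0 < ε') (N₀ N M : ℕ) (hN₀N : N₀ ≤ N) (hNM : N ≤ M)
    (hN₀ : ∀ n, N₀ ≤ n → lam n * (∑ r ∈ Finset.range (n+1), 1 / lam r) * |a n| ≤ ε')
    {s : ℝ} (hs : 0 < s)
    (hsΛ : s * ∑ r ∈ Finset.range N, 1 / lam r = 1) :
    |(∑ n ∈ Finset.range N, a n)
        - ∑ n ∈ Finset.range M, a n * ∏ r ∈ Finset.range (n+1), lam r / (s + lam r)|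
      ≤ (∑ n ∈ Finset.range N₀, |a n|) * (∑ r ∈ Finset.range N₀, 1 / lam r) * s
        + ε' + ε' := by
  have hΛnonneg : ∀ m, 0 ≤ ∑ r ∈ Finset.range m, 1 / lam r :=
    fun m => Finset.sum_nonneg fun r _ => one_div_nonneg.mpr (hpos r).le
  have hΛmono : Monotone (fun m => ∑ r ∈ Finset.range m, 1 / lam r) := by
    intro i j hij
    exact Finset.sum_le_sum_of_subset_of_nonneg (Finset.range_subset_range.mpr hij)
      (fun r _ _ => one_div_nonneg.mpr (hpos r).le)
  have hQpos : ∀ m, 0 < ∏ r ∈ Finset.range m, lam r / (s + lam r) :=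
    fto_Q_pos lam hpos hs.le
  have hQ1 : ∀ m, ∏ r ∈ Finset.range m, lam r / (s + lam r) ≤ 1 :=
    fto_Q_le_one lam hpos hs.le
  have hone : (∑ r ∈ Finset.range N, 1 / lam r) * s = 1 := by
    rw [mul_comm]; exact hsΛ
  -- split the big sum
  have hsplit : ∑ n ∈ Finset.range M, a n * ∏ r ∈ Finset.range (n+1), lam r / (s + lam r)
      = (∑ n ∈ Finset.range N, a n * ∏ r ∈ Finset.range (n+1), lam r / (s + lam r))
        + ∑ n ∈ Finset.Ico N M, a n * ∏ r ∈ Finset.range (n+1), lam r / (s + lam r) :=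
    (Finset.sum_range_add_sum_Ico _ hNM).symm
  have e1 : (∑ n ∈ Finset.range N, a n * (1 - ∏ r ∈ Finset.range (n+1), lam r / (s + lam r)))
      = (∑ n ∈ Finset.range N, a n)
        - ∑ n ∈ Finset.range N, a n * ∏ r ∈ Finset.range (n+1), lam r / (s + lam r) := by
    rw [← Finset.sum_sub_distrib]
    exact Finset.sum_congr rfl fun n _ => by ring
  have habs1 : |(∑ n ∈ Finset.range N, a n)
        - ∑ n ∈ Finset.range M, a n * ∏ r ∈ Finset.range (n+1), lam r / (s + lam r)|
      ≤ (∑ n ∈ Finset.range N, |a n| * (1 - ∏ r ∈ Finset.range (n+1), lam r / (s + lam r)))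
        + ∑ n ∈ Finset.Ico N M, |a n| * ∏ r ∈ Finset.range (n+1), lam r / (s + lam r) := by
    rw [hsplit]
    have e2 : (∑ n ∈ Finset.range N, a n)
        - ((∑ n ∈ Finset.range N, a n * ∏ r ∈ Finset.range (n+1), lam r / (s + lam r))
          + ∑ n ∈ Finset.Ico N M, a n * ∏ r ∈ Finset.range (n+1), lam r / (s + lam r))
        = (∑ n ∈ Finset.range N, a n * (1 - ∏ r ∈ Finset.range (n+1), lam r / (s + lam r)))
          - ∑ n ∈ Finset.Ico N M, a n * ∏ r ∈ Finset.range (n+1), lam r / (s + lam r) := by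
      rw [e1]; ring
    rw [e2]
    calc |(∑ n ∈ Finset.range N, a n * (1 - ∏ r ∈ Finset.range (n+1), lam r / (s + lam r)))
          - ∑ n ∈ Finset.Ico N M, a n * ∏ r ∈ Finset.range (n+1), lam r / (s + lam r)|
        ≤ |∑ n ∈ Finset.range N, a n * (1 - ∏ r ∈ Finset.range (n+1), lam r / (s + lam r))|
          + |∑ n ∈ Finset.Ico N M, a n * ∏ r ∈ Finset.range (n+1), lam r / (s + lam r)| :=
          abs_sub _ _
      _ ≤ (∑ n ∈ Finset.range N, |a n| * (1 - ∏ r ∈ Finset.range (n+1), lam r / (s + lam r)))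
          + ∑ n ∈ Finset.Ico N M, |a n| * ∏ r ∈ Finset.range (n+1), lam r / (s + lam r) := by
          apply add_le_add
          · refine (Finset.abs_sum_le_sum_abs _ _).trans (Finset.sum_le_sum fun n _ => ?_)
            have h7 : |1 - ∏ r ∈ Finset.range (n+1), lam r / (s + lam r)|
                = 1 - ∏ r ∈ Finset.range (n+1), lam r / (s + lam r) :=
              abs_of_nonneg (by linarith [hQ1 (n+1)])
            rw [abs_mul, h7]
          · refine (Finset.abs_sum_le_sum_abs _ _).trans (Finset.sum_le_sum fun n _ => ?_)
            have h7 : |∏ r ∈ Finset.range (n+1), lam r / (s + lam r)|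
                = ∏ r ∈ Finset.range (n+1), lam r / (s + lam r) :=
              abs_of_nonneg (hQpos (n+1)).le
            rw [abs_mul, h7]
  -- bound the first (A) part
  have hA : (∑ n ∈ Finset.range N, |a n| * (1 - ∏ r ∈ Finset.range (n+1), lam r / (s + lam r)))
      ≤ (∑ n ∈ Finset.range N₀, |a n|) * (∑ r ∈ Finset.range N₀, 1 / lam r) * s + ε' := by
    rw [← Finset.sum_range_add_sum_Ico _ hN₀N]
    apply add_le_add
    · -- A1
      calc ∑ n ∈ Finset.range N₀, |a n| * (1 - ∏ r ∈ Finset.range (n+1), lam r / (s + lam r))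
          ≤ ∑ n ∈ Finset.range N₀, |a n| * ((∑ r ∈ Finset.range N₀, 1 / lam r) * s) := by
            apply Finset.sum_le_sum
            intro n hn
            apply mul_le_mul_of_nonneg_left _ (abs_nonneg _)
            calc 1 - ∏ r ∈ Finset.range (n+1), lam r / (s + lam r)
                ≤ s * ∑ r ∈ Finset.range (n+1), 1 / lam r := fto_one_sub_Q_le lam hpos hs.le _
              _ ≤ s * ∑ r ∈ Finset.range N₀, 1 / lam r := by
                  apply mul_le_mul_of_nonneg_left (hΛmono (Finset.mem_range.mp hn)) hs.le
              _ = (∑ r ∈ Finset.range N₀, 1 / lam r) * s := mul_comm _ _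
        _ = (∑ n ∈ Finset.range N₀, |a n|) * (∑ r ∈ Finset.range N₀, 1 / lam r) * s := by
            rw [← Finset.sum_mul, mul_assoc]
    · -- A2
      calc ∑ n ∈ Finset.Ico N₀ N, |a n| * (1 - ∏ r ∈ Finset.range (n+1), lam r / (s + lam r))
          ≤ ∑ n ∈ Finset.Ico N₀ N, ε' * s * (1 / lam n) := by
            apply Finset.sum_le_sum
            intro n hn
            obtain ⟨hn1, hn2⟩ := Finset.mem_Ico.mp hn
            have h5 := hN₀ n hn1
            have hln := hpos n
            have hΛn := hΛnonneg (n+1)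
            calc |a n| * (1 - ∏ r ∈ Finset.range (n+1), lam r / (s + lam r))
                ≤ |a n| * (s * ∑ r ∈ Finset.range (n+1), 1 / lam r) :=
                  mul_le_mul_of_nonneg_left (fto_one_sub_Q_le lam hpos hs.le _) (abs_nonneg _)
              _ ≤ ε' * s * (1 / lam n) := by
                  rw [mul_one_div, le_div_iff₀ hln]
                  nlinarith [abs_nonneg (a n), mul_le_mul_of_nonneg_right h5 hs.le]
        _ = ε' * s * ∑ n ∈ Finset.Ico N₀ N, 1 / lam n := by rw [← Finset.mul_sum]
        _ ≤ ε' * s * ∑ n ∈ Finset.range N, 1 / lam n := by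
            apply mul_le_mul_of_nonneg_left _ (mul_nonneg hε'.le hs.le)
            rw [Finset.range_eq_Ico]
            exact Finset.sum_le_sum_of_subset_of_nonneg
              (Finset.Ico_subset_Ico (Nat.zero_le _) le_rfl)
              (fun r _ _ => one_div_nonneg.mpr (hpos r).le)
        _ = ε' := by rw [mul_assoc, hsΛ, mul_one]
  -- bound the tail (B) part
  have hB : (∑ n ∈ Finset.Ico N M, |a n| * ∏ r ∈ Finset.range (n+1), lam r / (s + lam r))
      ≤ ε' := by
    have key : ∀ n ∈ Finset.Ico N M,
        |a n| * ∏ r ∈ Finset.range (n+1), lam r / (s + lam r)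
        ≤ ε' * ((∏ r ∈ Finset.range n, lam r / (s + lam r))
            - ∏ r ∈ Finset.range (n+1), lam r / (s + lam r)) := by
      intro n hn
      obtain ⟨hn1, hn2⟩ := Finset.mem_Ico.mp hn
      have h5 : lam n * (∑ r ∈ Finset.range N, 1 / lam r) * |a n| ≤ ε' := by
        refine le_trans ?_ (hN₀ n (hN₀N.trans hn1))
        have := hΛmono (Nat.le_succ_of_le hn1)
        nlinarith [abs_nonneg (a n), (hpos n).le,
          mul_nonneg (hpos n).le (abs_nonneg (a n))]
      have h6 : lam n * |a n| ≤ ε' * s := by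
        have e : lam n * |a n| = lam n * (∑ r ∈ Finset.range N, 1 / lam r) * |a n| * s := by
          rw [show lam n * (∑ r ∈ Finset.range N, 1 / lam r) * |a n| * s
              = lam n * |a n| * ((∑ r ∈ Finset.range N, 1 / lam r) * s) from by ring,
            hone, mul_one]
        rw [e]
        exact mul_le_mul_of_nonneg_right h5 hs.le
      rw [← fto_Q_step lam hpos hs n, ← mul_div_assoc, le_div_iff₀ (hpos n)]
      nlinarith [mul_le_mul_of_nonneg_right h6 (hQpos (n+1)).le]
    calc (∑ n ∈ Finset.Ico N M, |a n| * ∏ r ∈ Finset.range (n+1), lam r / (s + lam r))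
        ≤ ∑ n ∈ Finset.Ico N M, ε' * ((∏ r ∈ Finset.range n, lam r / (s + lam r))
            - ∏ r ∈ Finset.range (n+1), lam r / (s + lam r)) := Finset.sum_le_sum key
      _ = ε' * ((∏ r ∈ Finset.range N, lam r / (s + lam r))
            - ∏ r ∈ Finset.range M, lam r / (s + lam r)) := by
          rw [← Finset.mul_sum]
          congr 1
          rw [Finset.sum_Ico_eq_sub _ hNM,
            Finset.sum_range_sub' (fun n => ∏ r ∈ Finset.range n, lam r / (s + lam r)),
            Finset.sum_range_sub' (fun n => ∏ r ∈ Finset.range n, lam r / (s + lam r))]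
          simp
      _ ≤ ε' * 1 := by
          apply mul_le_mul_of_nonneg_left _ hε'.le
          linarith [hQ1 N, (hQpos M).le]
      _ = ε' := mul_one _
  linarith [habs1, hA, hB]


/-- Tauberian theorem for generalized factorial series. -/
theorem factorial_tauberian_o
    (lam : ℕ → ℝ) (hlam0 : 0 < lam 0) (hmono : StrictMono lam)
    (hinf : Tendsto lam atTop atTop)
    (hdiv : ¬ Summable (fun n => 1 / lam n))
    (a : ℕ → ℝ) (g : ℝ → ℝ) (L : ℝ)
    (hconv : ∀ s : ℝ, 0 < s →
      Tendsto (fun N => ∑ n ∈ Finset.range N,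
          a n * ∏ r ∈ Finset.range (n + 1), lam r / (s + lam r))
        atTop (𝓝 (g s)))
    (hlim : Tendsto g (𝓝[>] (0 : ℝ)) (𝓝 L))
    (htauber : Tendsto
      (fun n => lam n * (∑ r ∈ Finset.range (n + 1), 1 / lam r) * |a n|)
      atTop (𝓝 0)) :
    Tendsto (fun N => ∑ n ∈ Finset.range N, a n) atTop (𝓝 L) := by
  have hpos : ∀ r, 0 < lam r := fun r => lt_of_lt_of_le hlam0 (hmono.monotone (Nat.zero_le r))
  have hΛnonneg : ∀ m, 0 ≤ ∑ r ∈ Finset.range m, 1 / lam r :=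
    fun m => Finset.sum_nonneg fun r _ => one_div_nonneg.mpr (hpos r).le
  have hΛtop : Tendsto (fun m => ∑ r ∈ Finset.range m, 1 / lam r) atTop atTop :=
    (not_summable_iff_tendsto_nat_atTop_of_nonneg
      (fun n => one_div_nonneg.mpr (hpos n).le)).mp hdiv
  have hΛpos' : ∀ᶠ N in atTop, 0 < ∑ r ∈ Finset.range N, 1 / lam r :=
    hΛtop.eventually_gt_atTop 0
  have hinvT : Tendsto (fun N => (∑ r ∈ Finset.range N, 1 / lam r)⁻¹) atTop (𝓝[>] 0) := by
    rw [tendsto_nhdsWithin_iff]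
    constructor
    · exact tendsto_inv_atTop_zero.comp hΛtop
    · filter_upwards [hΛpos'] with N hN
      exact Set.mem_Ioi.mpr (inv_pos.mpr hN)
  have hgT : Tendsto (fun N => g ((∑ r ∈ Finset.range N, 1 / lam r)⁻¹)) atTop (𝓝 L) :=
    hlim.comp hinvT
  rw [Metric.tendsto_atTop]
  intro ε hε
  have hε6 : 0 < ε / 6 := by linarith
  obtain ⟨N₀, hN₀'⟩ := Metric.tendsto_atTop.mp htauber (ε / 6) hε6
  have hN₀ : ∀ n, N₀ ≤ n → lam n * (∑ r ∈ Finset.range (n + 1), 1 / lam r) * |a n| ≤ ε / 6 := by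
    intro n hn
    have h := hN₀' n hn
    rw [Real.dist_eq, sub_zero] at h
    exact (le_abs_self _).trans h.le
  have hCnonneg : 0 ≤ ∑ n ∈ Finset.range N₀, |a n| :=
    Finset.sum_nonneg fun n _ => abs_nonneg _
  have hEv1 : ∀ᶠ N in atTop,
      (∑ n ∈ Finset.range N₀, |a n|) * (∑ r ∈ Finset.range N₀, 1 / lam r) + 1
        ≤ (ε / 6) * ∑ r ∈ Finset.range N, 1 / lam r := by
    filter_upwards [hΛtop.eventually_ge_atTop
      (((∑ n ∈ Finset.range N₀, |a n|) * (∑ r ∈ Finset.range N₀, 1 / lam r) + 1) * (6 / ε))]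
      with N hN
    have h2 := mul_le_mul_of_nonneg_left hN hε6.le
    calc (∑ n ∈ Finset.range N₀, |a n|) * (∑ r ∈ Finset.range N₀, 1 / lam r) + 1
        = (ε / 6) * (((∑ n ∈ Finset.range N₀, |a n|) * (∑ r ∈ Finset.range N₀, 1 / lam r) + 1)
            * (6 / ε)) := by
          field_simp
      _ ≤ (ε / 6) * ∑ r ∈ Finset.range N, 1 / lam r := h2
  obtain ⟨N₂, hN₂⟩ := Metric.tendsto_atTop.mp hgT (ε / 3) (by linarith)
  rw [eventually_atTop] at hEv1 hΛpos'
  obtain ⟨N₁, hN₁⟩ := hEv1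
  obtain ⟨N₃, hN₃⟩ := hΛpos'
  refine ⟨max (max N₀ N₁) (max N₂ N₃), fun N hN => ?_⟩
  have hNN₀ : N₀ ≤ N := le_trans (le_trans (le_max_left _ _) (le_max_left _ _)) hN
  have hNN₁ : N₁ ≤ N := le_trans (le_trans (le_max_right _ _) (le_max_left _ _)) hN
  have hNN₂ : N₂ ≤ N := le_trans (le_trans (le_max_left _ _) (le_max_right _ _)) hN
  have hNN₃ : N₃ ≤ N := le_trans (le_trans (le_max_right _ _) (le_max_right _ _)) hN
  have hΛN : 0 < ∑ r ∈ Finset.range N, 1 / lam r := hN₃ N hNN₃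
  set s : ℝ := (∑ r ∈ Finset.range N, 1 / lam r)⁻¹ with hsdef
  have hs : 0 < s := inv_pos.mpr hΛN
  have hsΛ : s * ∑ r ∈ Finset.range N, 1 / lam r = 1 := inv_mul_cancel₀ hΛN.ne'
  -- distance from g s
  have hclaim : |(∑ n ∈ Finset.range N, a n) - g s|
      ≤ (∑ n ∈ Finset.range N₀, |a n|) * (∑ r ∈ Finset.range N₀, 1 / lam r) * s
        + ε / 6 + ε / 6 := by
    have habs : Tendsto (fun M => |(∑ n ∈ Finset.range N, a n)
        - ∑ n ∈ Finset.range M, a n * ∏ r ∈ Finset.range (n + 1), lam r / (s + lam r)|)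
        atTop (𝓝 |(∑ n ∈ Finset.range N, a n) - g s|) :=
      (tendsto_const_nhds.sub (hconv s hs)).abs
    apply le_of_tendsto habs
    filter_upwards [eventually_ge_atTop N] with M hM
    exact fto_main_bound lam hpos a (ε / 6) hε6 N₀ N M hNN₀ hM hN₀ hs hsΛ
  have hsmall : (∑ n ∈ Finset.range N₀, |a n|) * (∑ r ∈ Finset.range N₀, 1 / lam r) * s
      < ε / 6 := by
    rw [hsdef, mul_inv_lt_iff₀ hΛN]
    have := hN₁ N hNN₁
    linarith
  have hg := hN₂ N hNN₂
  rw [Real.dist_eq] at hg ⊢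
  calc |(∑ n ∈ Finset.range N, a n) - L|
      ≤ |(∑ n ∈ Finset.range N, a n) - g s| + |g s - L| := abs_sub_le _ _ _
    _ < ((∑ n ∈ Finset.range N₀, |a n|) * (∑ r ∈ Finset.range N₀, 1 / lam r) * s
          + ε / 6 + ε / 6) + ε / 3 := by
        apply add_lt_add_of_le_of_lt hclaim hg
    _ < ε := by linarith [hsmall]
end

section
/- Let 0 < λ_0 < λ_1 < ⋯ → ∞ with ∑ 1/λ_n divergent, and let (a_n) be a real sequence such that the generalized factorial series ∑_{n=0}^∞ a_n ∏_{r=0}^n λ_r/(s+λ_r) converges for all s > 0 and is bounded as s → 0⁺. If λ_n·(∑_{r=0}^n 1/λ_r)·|a_n| = O(1), then the partial sums of ∑ a_n are bounded. -/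
open Filter Real Topology

private lemma aux_one_add_sum_le_prod (f : ℕ → ℝ) (hf : ∀ i, 0 ≤ f i) (n : ℕ) :
    1 + ∑ i ∈ Finset.range n, f i ≤ ∏ i ∈ Finset.range n, (1 + f i) := by
  induction n with
  | zero => simp
  | succ n ih =>
    rw [Finset.sum_range_succ, Finset.prod_range_succ]
    have h1 : 0 ≤ ∑ i ∈ Finset.range n, f i := Finset.sum_nonneg fun i _ => hf i
    nlinarith [hf n, mul_le_mul_of_nonneg_right ih (by linarith [hf n] : (0:ℝ) ≤ 1 + f n),
      mul_nonneg h1 (hf n)]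

private lemma aux_telescope (f : ℕ → ℝ) (N M : ℕ) (h : N ≤ M) :
    ∑ n ∈ Finset.Ico N M, (f n - f (n+1)) = f N - f M := by
  induction M, h using Nat.le_induction with
  | base => simp
  | succ M hM ih => rw [Finset.sum_Ico_succ_top hM, ih]; ring

/-- Boundedness Tauberian theorem for generalized factorial series. -/
theorem factorial_tauberian_O
    (lam : ℕ → ℝ) (hlam0 : 0 < lam 0) (hmono : StrictMono lam)
    (hinf : Tendsto lam atTop atTop)
    (hdiv : ¬ Summable (fun n => 1 / lam n))
    (a : ℕ → ℝ) (g : ℝ → ℝ)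
    (hconv : ∀ s : ℝ, 0 < s →
      Tendsto (fun N => ∑ n ∈ Finset.range N,
          a n * ∏ r ∈ Finset.range (n + 1), lam r / (s + lam r))
        atTop (𝓝 (g s)))
    (hbdd : ∃ C : ℝ, ∀ᶠ s in 𝓝[>] (0 : ℝ), |g s| ≤ C)
    (htauber : ∃ C : ℝ, ∀ n,
      lam n * (∑ r ∈ Finset.range (n + 1), 1 / lam r) * |a n| ≤ C) :
    ∃ M : ℝ, ∀ N, |∑ n ∈ Finset.range N, a n| ≤ M := by
  classical
  obtain ⟨Cg, hCg⟩ := hbdd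
  obtain ⟨C, hC⟩ := htauber
  have hpos : ∀ n, 0 < lam n := by
    intro n
    rcases Nat.eq_zero_or_pos n with h | h
    · simpa [h] using hlam0
    · exact hlam0.trans (hmono h)
  -- partial sums of 1/lam
  set P : ℕ → ℝ := fun N => ∑ r ∈ Finset.range N, 1 / lam r with hPdef
  have hPmono : Monotone P := by
    intro m n h
    exact Finset.sum_le_sum_of_subset_of_nonneg (Finset.range_subset_range.2 h)
      (fun i _ _ => by have := hpos i; positivity)
  have hPpos : ∀ N, 1 ≤ N → 0 < P N := by
    intro N hN
    have h1 : 0 < P 1 := by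
      have := hpos 0
      simp only [hPdef, Finset.sum_range_one]
      positivity
    exact h1.trans_le (hPmono hN)
  have hPstep : ∀ n, P (n+1) = P n + 1 / lam n := by
    intro n; simp [hPdef, Finset.sum_range_succ]
  have hPtop : Tendsto P atTop atTop := by
    have := (not_summable_iff_tendsto_nat_atTop_of_nonneg
      (f := fun n => 1 / lam n) (fun n => by have := hpos n; positivity)).1 hdiv
    exact this
  have hC0 : 0 ≤ C := by
    refine le_trans ?_ (hC 0)
    have h1 : (0:ℝ) ≤ ∑ r ∈ Finset.range 1, 1 / lam r :=
      Finset.sum_nonneg fun i _ => by have := hpos i; positivity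
    have := hpos 0
    positivity
  have habs : ∀ n, |a n| ≤ C / (lam n * P (n+1)) := by
    intro n
    have hd : 0 < lam n * P (n+1) := mul_pos (hpos n) (hPpos (n+1) (Nat.le_add_left 1 n))
    rw [le_div_iff₀ hd]
    calc |a n| * (lam n * P (n+1)) = lam n * (∑ r ∈ Finset.range (n+1), 1 / lam r) * |a n| := by
          simp only [hPdef]; ring
      _ ≤ C := hC n
  -- the key estimate for large N
  have key : ∀ N : ℕ, 1 ≤ N → |g (1 / P N)| ≤ Cg →
      |∑ n ∈ Finset.range N, a n| ≤ Cg + 2*C := by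
    intro N hN1 hg
    have hPN : 0 < P N := hPpos N hN1
    set s : ℝ := 1 / P N with hsdef
    have hs : 0 < s := by positivity
    set p : ℕ → ℝ := fun n => ∏ r ∈ Finset.range (n+1), lam r / (s + lam r) with hpdef
    have hppos : ∀ n, 0 < p n := by
      intro n
      exact Finset.prod_pos fun r _ => div_pos (hpos r) (by linarith [hpos r])
    have hple1 : ∀ n, p n ≤ 1 := by
      intro n
      apply Finset.prod_le_one
      · intro r _; exact le_of_lt (div_pos (hpos r) (by linarith [hpos r]))
      · intro r _
        rw [div_le_one (by linarith [hpos r])]; linarith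
    have h1mp : ∀ n, 1 - p n ≤ s * P (n+1) := by
      intro n
      induction n with
      | zero =>
        have h0 := hpos 0
        simp only [hpdef, hPdef, zero_add, Finset.prod_range_one, Finset.sum_range_one]
        have hkey : 1 - lam 0 / (s + lam 0) = s / (s + lam 0) := by
          field_simp
          ring
        rw [hkey, mul_one_div]
        apply div_le_div_of_nonneg_left hs.le h0
        linarith
      | succ n ih =>
        have hx1 : lam (n+1) / (s + lam (n+1)) ≤ 1 := by
          rw [div_le_one (by linarith [hpos (n+1)])]; linarith
        have hx0 : 0 < lam (n+1) / (s + lam (n+1)) :=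
          div_pos (hpos (n+1)) (by linarith [hpos (n+1)])
        have hxs : 1 - lam (n+1) / (s + lam (n+1)) ≤ s / lam (n+1) := by
          have h0 := hpos (n+1)
          have hkey : 1 - lam (n+1) / (s + lam (n+1)) = s / (s + lam (n+1)) := by
            field_simp
            ring
          rw [hkey]
          apply div_le_div_of_nonneg_left hs.le h0; linarith
        have hpsucc : p (n+1) = p n * (lam (n+1) / (s + lam (n+1))) := by
          simp only [hpdef]
          rw [Finset.prod_range_succ]
        rw [hpsucc, hPstep (n+1), mul_add]
        have hp0 := hppos n
        have hp1 := hple1 n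
        set x := lam (n+1) / (s + lam (n+1)) with hxdef
        have hid : 1 - p n * x = (1 - p n) + p n * (1 - x) := by ring
        have hmul : p n * (1 - x) ≤ 1 * (1 - x) :=
          mul_le_mul_of_nonneg_right hp1 (by linarith)
        have hdiv2 : s * (1 / lam (n+1)) = s / lam (n+1) := by
          rw [mul_one_div]
        rw [hdiv2]
        linarith
    have hpinv : ∀ n, p n ≤ 1 / (s * P (n+1)) := by
      intro n
      have hP1 : 0 < P (n+1) := hPpos (n+1) (Nat.le_add_left 1 n)
      have hsP : 0 < s * P (n+1) := mul_pos hs hP1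
      have hprodeq : (p n)⁻¹ = ∏ r ∈ Finset.range (n+1), (1 + s / lam r) := by
        rw [hpdef]
        rw [← Finset.prod_inv_distrib]
        apply Finset.prod_congr rfl
        intro r _
        have h0 := hpos r
        rw [inv_div, add_div, div_self h0.ne']
        ring
      have hge : s * P (n+1) ≤ (p n)⁻¹ := by
        rw [hprodeq]
        have := aux_one_add_sum_le_prod (fun r => s / lam r)
          (fun r => le_of_lt (div_pos hs (hpos r))) (n+1)
        have heq : s * P (n+1) = ∑ i ∈ Finset.range (n+1), s / lam i := by
          rw [hPdef, Finset.mul_sum]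
          apply Finset.sum_congr rfl
          intro r _; ring
        rw [heq]
        calc ∑ i ∈ Finset.range (n+1), s / lam i
            ≤ 1 + ∑ i ∈ Finset.range (n+1), s / lam i := by linarith
          _ ≤ _ := this
      calc p n = ((p n)⁻¹)⁻¹ := by rw [inv_inv]
        _ ≤ (s * P (n+1))⁻¹ := by
            apply inv_anti₀ hsP hge
        _ = 1 / (s * P (n+1)) := by rw [one_div]
    -- part 1 : the head
    have part1 : ∑ n ∈ Finset.range N, |a n| * (1 - p n) ≤ C := by
      have hterm : ∀ n, |a n| * (1 - p n) ≤ C * s * (1 / lam n) := by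
        intro n
        have hd : 0 < lam n * P (n+1) := mul_pos (hpos n) (hPpos (n+1) (Nat.le_add_left 1 n))
        have hnn : 0 ≤ C / (lam n * P (n+1)) := div_nonneg hC0 hd.le
        calc |a n| * (1 - p n) ≤ (C / (lam n * P (n+1))) * (s * P (n+1)) := by
              apply mul_le_mul (habs n) (h1mp n) (by linarith [hple1 n]) hnn
          _ = C * s * (1 / lam n) := by
              have h1 := (hpos n).ne'
              have h2 := (hPpos (n+1) (Nat.le_add_left 1 n)).ne'
              field_simp
      calc ∑ n ∈ Finset.range N, |a n| * (1 - p n)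
          ≤ ∑ n ∈ Finset.range N, C * s * (1 / lam n) :=
            Finset.sum_le_sum fun n _ => hterm n
        _ = C * s * P N := by rw [hPdef, ← Finset.mul_sum]
        _ = C := by rw [hsdef]; field_simp
    -- part 2 : the tail partial sums
    have part2 : ∀ M, N ≤ M → ∑ n ∈ Finset.Ico N M, |a n| * p n ≤ C := by
      intro M hM
      have hterm : ∀ n, N ≤ n → |a n| * p n ≤ (C / s) * (1 / P n - 1 / P (n+1)) := by
        intro n hn
        have hPn : 0 < P n := hPpos n (le_trans hN1 hn)
        have hPn1 : 0 < P (n+1) := hPpos (n+1) (Nat.le_add_left 1 n)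
        have hln := hpos n
        have hd : 0 < lam n * P (n+1) := mul_pos hln hPn1
        have hnn : 0 ≤ C / (lam n * P (n+1)) := div_nonneg hC0 hd.le
        have hstep : 1 / lam n = P (n+1) - P n := by rw [hPstep n]; ring
        calc |a n| * p n ≤ (C / (lam n * P (n+1))) * (1 / (s * P (n+1))) :=
              mul_le_mul (habs n) (hpinv n) (hppos n).le hnn
          _ = (C / s) * ((1/lam n) / (P (n+1) * P (n+1))) := by
              have h1 := hln.ne'
              have h2 := hPn1.ne'
              have h3 := hs.ne'
              field_simp
              try ring
              try tauto
          _ = (C / s) * ((P (n+1) - P n) / (P (n+1) * P (n+1))) := by rw [hstep]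
          _ ≤ (C / s) * ((P (n+1) - P n) / (P n * P (n+1))) := by
              have hge : 0 ≤ P (n+1) - P n := by
                rw [← hstep]; positivity
              have hle : P n * P (n+1) ≤ P (n+1) * P (n+1) :=
                mul_le_mul_of_nonneg_right (hPmono (Nat.le_succ n)) hPn1.le
              have hCs : 0 ≤ C / s := div_nonneg hC0 hs.le
              gcongr
          _ = (C / s) * (1 / P n - 1 / P (n+1)) := by
              have h1 := hPn.ne'
              have h2 := hPn1.ne'
              have h3 := hs.ne'
              field_simp
              try ring
              try tauto
      calc ∑ n ∈ Finset.Ico N M, |a n| * p n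
          ≤ ∑ n ∈ Finset.Ico N M, (C / s) * (1 / P n - 1 / P (n+1)) := by
            apply Finset.sum_le_sum
            intro n hn
            exact hterm n (Finset.mem_Ico.1 hn).1
        _ = (C / s) * (1 / P N - 1 / P M) := by
            rw [← Finset.mul_sum, aux_telescope (fun n => 1 / P n) N M hM]
        _ ≤ (C / s) * (1 / P N) := by
            apply mul_le_mul_of_nonneg_left _ (div_nonneg hC0 hs.le)
            have hPM : 0 < P M := hPpos M (le_trans hN1 hM)
            have : 0 ≤ 1 / P M := by positivity
            linarith
        _ = C := by rw [hsdef]; field_simp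
    -- combine: distance of partial sum S_N from the M-th partial sum of the series at s
    have hdiff : ∀ M, N ≤ M →
        |∑ n ∈ Finset.range N, a n - ∑ n ∈ Finset.range M, a n * p n| ≤ 2*C := by
      intro M hM
      have hsplit : ∑ n ∈ Finset.range M, a n * p n
          = ∑ n ∈ Finset.range N, a n * p n + ∑ n ∈ Finset.Ico N M, a n * p n :=
        (Finset.sum_range_add_sum_Ico _ hM).symm
      have heq : ∑ n ∈ Finset.range N, a n - ∑ n ∈ Finset.range M, a n * p n
          = ∑ n ∈ Finset.range N, (a n * (1 - p n)) - ∑ n ∈ Finset.Ico N M, a n * p n := by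
        rw [hsplit]
        have h4 : ∑ n ∈ Finset.range N, (a n * (1 - p n))
            = ∑ n ∈ Finset.range N, (a n - a n * p n) :=
          Finset.sum_congr rfl fun n _ => by ring
        rw [h4, Finset.sum_sub_distrib]
        ring
      rw [heq]
      have h1 : |∑ n ∈ Finset.range N, (a n * (1 - p n))| ≤ C := by
        calc |∑ n ∈ Finset.range N, (a n * (1 - p n))|
            ≤ ∑ n ∈ Finset.range N, |a n * (1 - p n)| := Finset.abs_sum_le_sum_abs _ _
          _ = ∑ n ∈ Finset.range N, |a n| * (1 - p n) := by
              apply Finset.sum_congr rfl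
              intro n _
              rw [abs_mul, abs_of_nonneg (by linarith [hple1 n] : (0:ℝ) ≤ 1 - p n)]
          _ ≤ C := part1
      have h2 : |∑ n ∈ Finset.Ico N M, a n * p n| ≤ C := by
        calc |∑ n ∈ Finset.Ico N M, a n * p n|
            ≤ ∑ n ∈ Finset.Ico N M, |a n * p n| := Finset.abs_sum_le_sum_abs _ _
          _ = ∑ n ∈ Finset.Ico N M, |a n| * p n := by
              apply Finset.sum_congr rfl
              intro n _
              rw [abs_mul, abs_of_pos (hppos n)]
          _ ≤ C := part2 M hM
      calc |∑ n ∈ Finset.range N, (a n * (1 - p n)) - ∑ n ∈ Finset.Ico N M, a n * p n|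
          ≤ |∑ n ∈ Finset.range N, (a n * (1 - p n))| + |∑ n ∈ Finset.Ico N M, a n * p n| :=
            abs_sub _ _
        _ ≤ 2*C := by linarith
    have hlim := hconv s hs
    have htendsto : Tendsto (fun M => |∑ n ∈ Finset.range N, a n
        - ∑ n ∈ Finset.range M, a n * p n|) atTop
        (𝓝 |∑ n ∈ Finset.range N, a n - g s|) := by
      exact (tendsto_const_nhds.sub hlim).abs
    have hfinal : |∑ n ∈ Finset.range N, a n - g s| ≤ 2*C :=
      le_of_tendsto htendsto (eventually_atTop.2 ⟨N, hdiff⟩)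
    calc |∑ n ∈ Finset.range N, a n|
        ≤ |∑ n ∈ Finset.range N, a n - g s| + |g s| := by
          have := abs_sub_abs_le_abs_sub (∑ n ∈ Finset.range N, a n) (g s)
          have habs2 := abs_add_le (∑ n ∈ Finset.range N, a n - g s) (g s)
          simp only [sub_add_cancel] at habs2
          linarith
      _ ≤ 2*C + Cg := by
          have : |g s| ≤ Cg := by rw [hsdef]; exact hg
          linarith
      _ = Cg + 2*C := by ring
  -- find N₀ from the boundedness hypothesis on g
  have hseq : Tendsto (fun N => 1 / P N) atTop (𝓝[>] (0:ℝ)) := by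
    rw [tendsto_nhdsWithin_iff]
    constructor
    · exact hPtop.inv_tendsto_atTop.congr (fun N => (one_div (P N)).symm)
    · filter_upwards [eventually_ge_atTop 1] with N hN
      exact Set.mem_Ioi.2 (by have := hPpos N hN; positivity)
  have hev : ∀ᶠ N in atTop, |g (1 / P N)| ≤ Cg ∧ 1 ≤ N :=
    (hseq.eventually hCg).and (eventually_ge_atTop 1)
  obtain ⟨N₀, hN₀⟩ := eventually_atTop.1 hev
  refine ⟨max (Cg + 2*C) 0 + ∑ k ∈ Finset.range N₀, |∑ n ∈ Finset.range k, a n|, ?_⟩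
  intro N
  have hsum_nonneg : 0 ≤ ∑ k ∈ Finset.range N₀, |∑ n ∈ Finset.range k, a n| :=
    Finset.sum_nonneg fun k _ => abs_nonneg _
  by_cases hN : N₀ ≤ N
  · obtain ⟨hg, h1⟩ := hN₀ N hN
    have := key N h1 hg
    have hmax : Cg + 2*C ≤ max (Cg + 2*C) 0 := le_max_left _ _
    linarith
  · push_neg at hN
    have hmem : N ∈ Finset.range N₀ := Finset.mem_range.2 hN
    have := Finset.single_le_sum (f := fun k => |∑ n ∈ Finset.range k, a n|)
      (fun k _ => abs_nonneg _) hmem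
    have hmax : (0:ℝ) ≤ max (Cg + 2*C) 0 := le_max_right _ _
    linarith
end

section
/- Let 0 ≤ λ_0 < λ_1 < ⋯ → ∞. Then for every n, ∑_{k=n+1}^∞ ((λ_k − λ_{k−1})/λ_k)·e^{-λ_k/λ_n} ≤ (1/λ_{n+1})·∫_{λ_n}^∞ e^{-x/λ_n} dx = λ_n/(e·λ_{n+1}), so in particular the tail sum is bounded by 1/e. -/
open Filter Real Topology MeasureTheory

/-- Tail estimate in the generalized Dirichlet Tauberian theorem. -/
theorem dirichlet_tail_estimate
    (lam : ℕ → ℝ) (hlam0 : 0 ≤ lam 0) (hmono : StrictMono lam)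
    (hinf : Tendsto lam atTop atTop) (n : ℕ) (hn : 1 ≤ n) :
    (∑' j : ℕ, (lam (n + 1 + j) - lam (n + j)) / lam (n + 1 + j) *
        Real.exp (-(lam (n + 1 + j)) / lam n)) ≤
      (1 / lam (n + 1)) * (∫ x in Set.Ioi (lam n), Real.exp (-x / lam n)) ∧
    (1 / lam (n + 1)) * (∫ x in Set.Ioi (lam n), Real.exp (-x / lam n)) =
      lam n / (Real.exp 1 * lam (n + 1)) ∧
    (∑' j : ℕ, (lam (n + 1 + j) - lam (n + j)) / lam (n + 1 + j) *
        Real.exp (-(lam (n + 1 + j)) / lam n)) ≤ 1 / Real.exp 1 := by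
  set c := lam n with hc_def
  have hc : 0 < c := lt_of_le_of_lt hlam0 (hmono (by omega))
  have hL : c < lam (n + 1) := hmono (by omega)
  have hLpos : 0 < lam (n + 1) := hc.trans hL
  -- continuity / integrability of the integrand
  have hcont : Continuous (fun x : ℝ => Real.exp (-x / c)) := by
    exact Real.continuous_exp.comp ((continuous_id.neg).div_const c)
  have hint : IntegrableOn (fun x : ℝ => Real.exp (-x / c)) (Set.Ioi c) := by
    have h := exp_neg_integrableOn_Ioi c (show (0:ℝ) < 1 / c by positivity)
    have heq : (fun x : ℝ => Real.exp (-x / c)) = fun x => Real.exp (-(1 / c) * x) := by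
      funext x; congr 1; ring
    rw [heq]; exact h
  -- value of the improper integral
  have hIval : (∫ x in Set.Ioi c, Real.exp (-x / c)) = c * Real.exp (-1) := by
    have hderiv : ∀ x ∈ Set.Ioi c, HasDerivAt (fun x : ℝ => -c * Real.exp (-x / c))
        (Real.exp (-x / c)) x := by
      intro x _
      have h1 : HasDerivAt (fun x : ℝ => -x / c) (-1 / c) x := by
        simpa using ((hasDerivAt_id x).neg.div_const c)
      have h2 := (h1.exp).const_mul (-c)
      refine h2.congr_deriv ?_
      field_simp
    have htend : Tendsto (fun x : ℝ => -c * Real.exp (-x / c)) atTop (𝓝 0) := by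
      have h1 : Tendsto (fun x : ℝ => -x / c) atTop atBot := by
        apply Tendsto.atBot_div_const hc
        exact tendsto_neg_atBot_iff.mpr tendsto_id
      have h2 : Tendsto (fun x : ℝ => Real.exp (-x / c)) atTop (𝓝 0) :=
        Real.tendsto_exp_atBot.comp h1
      have := h2.const_mul (-c)
      simpa using this
    have hcontOn : ContinuousWithinAt (fun x : ℝ => -c * Real.exp (-x / c)) (Set.Ici c) c :=
      (continuous_const.mul hcont).continuousWithinAt
    have := MeasureTheory.integral_Ioi_of_hasDerivAt_of_tendsto hcontOn hderiv hint htend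
    rw [this, neg_div, div_self hc.ne']
    ring
  -- the middle equality
  have hmid : (1 / lam (n + 1)) * (∫ x in Set.Ioi c, Real.exp (-x / c)) =
      c / (Real.exp 1 * lam (n + 1)) := by
    rw [hIval, Real.exp_neg, eq_div_iff (by positivity)]
    field_simp
  -- nonnegativity of the terms
  have hterm_nonneg : ∀ j : ℕ, 0 ≤ (lam (n + 1 + j) - lam (n + j)) / lam (n + 1 + j) *
      Real.exp (-(lam (n + 1 + j)) / c) := by
    intro j
    have h1 : lam (n + j) < lam (n + 1 + j) := hmono (by omega)
    have h2 : 0 < lam (n + 1 + j) := hc.trans_le (hmono.monotone (by omega))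
    exact mul_nonneg (div_nonneg (by linarith) h2.le) (Real.exp_nonneg _)
  -- per-term bound via the interval integral
  have hterm : ∀ j : ℕ, (lam (n + 1 + j) - lam (n + j)) / lam (n + 1 + j) *
      Real.exp (-(lam (n + 1 + j)) / c) ≤
      (1 / lam (n + 1)) * ∫ x in lam (n + j)..lam (n + 1 + j), Real.exp (-x / c) := by
    intro j
    have h1 : lam (n + j) < lam (n + 1 + j) := hmono (by omega)
    have h2 : lam (n + 1) ≤ lam (n + 1 + j) := hmono.monotone (by omega)
    have h3 : 0 < lam (n + 1 + j) := hLpos.trans_le h2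
    have hIc : (lam (n + 1 + j) - lam (n + j)) * Real.exp (-(lam (n + 1 + j)) / c) ≤
        ∫ x in lam (n + j)..lam (n + 1 + j), Real.exp (-x / c) := by
      have hconst : ∫ x in lam (n + j)..lam (n + 1 + j),
          Real.exp (-(lam (n + 1 + j)) / c) =
          (lam (n + 1 + j) - lam (n + j)) * Real.exp (-(lam (n + 1 + j)) / c) := by
        rw [intervalIntegral.integral_const]; simp [smul_eq_mul]
      rw [← hconst]
      apply intervalIntegral.integral_mono_on h1.le
        (intervalIntegrable_const) (hcont.intervalIntegrable _ _)
      intro x hx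
      apply Real.exp_le_exp.mpr
      have hx2 : x ≤ lam (n + 1 + j) := hx.2
      gcongr
    calc (lam (n + 1 + j) - lam (n + j)) / lam (n + 1 + j) *
        Real.exp (-(lam (n + 1 + j)) / c)
        = (1 / lam (n + 1 + j)) * ((lam (n + 1 + j) - lam (n + j)) *
          Real.exp (-(lam (n + 1 + j)) / c)) := by ring
      _ ≤ (1 / lam (n + 1)) * ((lam (n + 1 + j) - lam (n + j)) *
          Real.exp (-(lam (n + 1 + j)) / c)) := by
          apply mul_le_mul_of_nonneg_right
          · exact one_div_le_one_div_of_le hLpos h2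
          · exact mul_nonneg (by linarith) (Real.exp_nonneg _)
      _ ≤ (1 / lam (n + 1)) * ∫ x in lam (n + j)..lam (n + 1 + j), Real.exp (-x / c) := by
          apply mul_le_mul_of_nonneg_left hIc (by positivity)
  -- partial sums are bounded
  have hpartial : ∀ N : ℕ, ∑ j ∈ Finset.range N,
      (lam (n + 1 + j) - lam (n + j)) / lam (n + 1 + j) *
        Real.exp (-(lam (n + 1 + j)) / c) ≤
      (1 / lam (n + 1)) * (∫ x in Set.Ioi c, Real.exp (-x / c)) := by
    intro N
    have hsum_le : ∑ j ∈ Finset.range N,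
        (lam (n + 1 + j) - lam (n + j)) / lam (n + 1 + j) *
          Real.exp (-(lam (n + 1 + j)) / c) ≤
        ∑ j ∈ Finset.range N, (1 / lam (n + 1)) *
          ∫ x in lam (n + j)..lam (n + 1 + j), Real.exp (-x / c) :=
      Finset.sum_le_sum fun j _ => hterm j
    have htel : ∑ j ∈ Finset.range N,
        (∫ x in lam (n + j)..lam (n + 1 + j), Real.exp (-x / c)) =
        ∫ x in lam n..lam (n + N), Real.exp (-x / c) := by
      have := intervalIntegral.sum_integral_adjacent_intervals
        (μ := volume) (a := fun k => lam (n + k)) (n := N)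
        (fun k _ => hcont.intervalIntegrable _ _)
      simp only [Nat.add_zero] at this
      rw [← this]
      apply Finset.sum_congr rfl
      intro j _
      congr 2
      omega
    have hIoc : (∫ x in lam n..lam (n + N), Real.exp (-x / c)) ≤
        ∫ x in Set.Ioi c, Real.exp (-x / c) := by
      have hle : c ≤ lam (n + N) := hmono.monotone (by omega)
      rw [intervalIntegral.integral_of_le hle]
      apply MeasureTheory.setIntegral_mono_set hint
      · filter_upwards with x using Real.exp_nonneg _
      · exact HasSubset.Subset.eventuallyLE Set.Ioc_subset_Ioi_self
    calc ∑ j ∈ Finset.range N,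
        (lam (n + 1 + j) - lam (n + j)) / lam (n + 1 + j) *
          Real.exp (-(lam (n + 1 + j)) / c)
        ≤ ∑ j ∈ Finset.range N, (1 / lam (n + 1)) *
          ∫ x in lam (n + j)..lam (n + 1 + j), Real.exp (-x / c) := hsum_le
      _ = (1 / lam (n + 1)) * ∑ j ∈ Finset.range N,
          ∫ x in lam (n + j)..lam (n + 1 + j), Real.exp (-x / c) := by
          rw [Finset.mul_sum]
      _ = (1 / lam (n + 1)) * ∫ x in lam n..lam (n + N), Real.exp (-x / c) := by
          rw [htel]
      _ ≤ (1 / lam (n + 1)) * ∫ x in Set.Ioi c, Real.exp (-x / c) := by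
          apply mul_le_mul_of_nonneg_left hIoc (by positivity)
  have hIpos : 0 ≤ ∫ x in Set.Ioi c, Real.exp (-x / c) := by
    rw [hIval]; positivity
  have hfirst : (∑' j : ℕ, (lam (n + 1 + j) - lam (n + j)) / lam (n + 1 + j) *
        Real.exp (-(lam (n + 1 + j)) / c)) ≤
      (1 / lam (n + 1)) * (∫ x in Set.Ioi c, Real.exp (-x / c)) := by
    exact Real.tsum_le_of_sum_range_le hterm_nonneg hpartial
  refine ⟨hfirst, hmid, ?_⟩
  refine hfirst.trans (hmid.le.trans ?_)
  calc c / (Real.exp 1 * lam (n + 1)) ≤ lam (n + 1) / (Real.exp 1 * lam (n + 1)) := by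
        gcongr
    _ = 1 / Real.exp 1 := by
        rw [mul_comm]
        field_simp
end

section
/- If a series ∑ a_n of real numbers converges to L, and (φ_n) is a sequence of continuous functions φ_n : [0,∞) → ℝ with 0 ≤ φ_{n+1}(s) ≤ φ_n(s) ≤ M for all n, s, and φ_n(0) = 1 for all n, and additionally lim_{s→0⁺} φ_n(s) = 1 for each n, then ∑_{n=0}^∞ a_n φ_n(s) converges for every s ≥ 0 and lim_{s→0⁺} ∑_{n=0}^∞ a_n φ_n(s) = L. -/
open Filter Real Topology

/-- Triangle inequality for real `tsum`. -/
lemma abs_tsum_le_aux {f : ℕ → ℝ} (h : Summable fun i => |f i|) :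
    |∑' i, f i| ≤ ∑' i, |f i| := by
  have h' : Summable fun i => ‖f i‖ := h
  simpa [Real.norm_eq_abs] using norm_tsum_le_tsum_norm h'

set_option maxHeartbeats 1000000 in
/-- Main lemma: the `L = 0` case. -/
lemma phi_method_regular_zero
    (a : ℕ → ℝ)
    (hsum : Tendsto (fun N => ∑ n ∈ Finset.range N, a n) atTop (𝓝 0))
    (phi : ℕ → ℝ → ℝ) (M : ℝ)
    (hnonneg : ∀ n, ∀ s : ℝ, 0 ≤ s → 0 ≤ phi n s)
    (hmono : ∀ n, ∀ s : ℝ, 0 ≤ s → phi (n + 1) s ≤ phi n s)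
    (hbdd : ∀ n, ∀ s : ℝ, 0 ≤ s → phi n s ≤ M)
    (hlim1 : ∀ n, Tendsto (phi n) (𝓝[>] (0 : ℝ)) (𝓝 1)) :
    ∃ F : ℝ → ℝ,
      (∀ s : ℝ, 0 ≤ s →
        Tendsto (fun N => ∑ n ∈ Finset.range N, a n * phi n s) atTop (𝓝 (F s))) ∧
      Tendsto F (𝓝[>] (0 : ℝ)) (𝓝 0) := by
  set S : ℕ → ℝ := fun N => ∑ n ∈ Finset.range N, a n with hS
  -- boundedness of the partial sums
  obtain ⟨C, hC⟩ : ∃ C, ∀ n, |S n| ≤ C := by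
    have h1 : Tendsto (fun n => |S n|) atTop (𝓝 |(0 : ℝ)|) := hsum.abs
    obtain ⟨C, hC⟩ := h1.bddAbove_range
    exact ⟨C, fun n => hC ⟨n, rfl⟩⟩
  have hC0 : 0 ≤ C := le_trans (abs_nonneg _) (hC 0)
  -- the difference sequence
  set c : ℝ → ℕ → ℝ := fun s i => phi i s - phi (i + 1) s with hc
  have hc_nonneg : ∀ s : ℝ, 0 ≤ s → ∀ i, 0 ≤ c s i := fun s hs i =>
    sub_nonneg.2 (hmono i s hs)
  have hc_sum : ∀ (s : ℝ), ∀ K N : ℕ,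
      ∑ i ∈ Finset.range K, c s (N + i) = phi N s - phi (N + K) s := by
    intro s K N
    induction K with
    | zero => simp
    | succ K ih =>
        rw [Finset.sum_range_succ, ih]
        have h1 : N + (K + 1) = (N + K) + 1 := by omega
        rw [h1]
        simp only [hc]
        ring
  have hc_sum0 : ∀ (s : ℝ), ∀ K : ℕ,
      ∑ i ∈ Finset.range K, c s i = phi 0 s - phi K s := by
    intro s K
    have := hc_sum s K 0
    simpa using this
  -- summability of c itself
  have hc_summable : ∀ s : ℝ, 0 ≤ s → Summable (c s) := by
    intro s hs
    apply summable_of_sum_range_le (hc_nonneg s hs)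
    intro n
    rw [hc_sum0]
    have := hnonneg n s hs
    have := hbdd 0 s hs
    linarith
  -- summability of the Abel-transformed series
  have hsummable : ∀ s : ℝ, 0 ≤ s → Summable (fun i => c s i * S (i + 1)) := by
    intro s hs
    apply Summable.of_abs
    refine Summable.of_nonneg_of_le (fun i => abs_nonneg _) (fun i => ?_)
      ((hc_summable s hs).mul_left C)
    rw [abs_mul, abs_of_nonneg (hc_nonneg s hs i)]
    calc c s i * |S (i + 1)| ≤ c s i * C :=
          mul_le_mul_of_nonneg_left (hC _) (hc_nonneg s hs i)
      _ = C * c s i := mul_comm _ _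
  -- definition of F
  refine ⟨fun s => ∑' i, c s i * S (i + 1), ?_, ?_⟩
  · -- convergence for each fixed s ≥ 0
    intro s hs
    -- Abel summation
    have habel : ∀ N : ℕ,
        ∑ n ∈ Finset.range N, a n * phi n s =
          phi (N - 1) s * S N + ∑ i ∈ Finset.range (N - 1), c s i * S (i + 1) := by
      intro N
      have := Finset.sum_range_by_parts (fun n => phi n s) a N
      simp only [smul_eq_mul] at this
      rw [show ∑ n ∈ Finset.range N, a n * phi n s
            = ∑ n ∈ Finset.range N, phi n s * a n from
          Finset.sum_congr rfl fun n _ => mul_comm _ _, this]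
      rw [sub_eq_add_neg, ← Finset.sum_neg_distrib]
      congr 1
      apply Finset.sum_congr rfl
      intro i _
      simp [hc, hS]
      ring
    rw [← tendsto_add_atTop_iff_nat 1]
    have heq : ∀ N : ℕ,
        ∑ n ∈ Finset.range (N + 1), a n * phi n s =
          phi N s * S (N + 1) + ∑ i ∈ Finset.range N, c s i * S (i + 1) := by
      intro N; simpa using habel (N + 1)
    simp only [heq]
    -- limit of each piece
    have hphi_tendsto : Tendsto (fun N => phi N s) atTop
        (𝓝 (⨅ n, phi n s)) := by
      apply tendsto_atTop_ciInf
      · intro m n hmn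
        induction hmn with
        | refl => exact le_rfl
        | step h ih => exact le_trans (hmono _ s hs) ih
      · exact ⟨0, fun x ⟨n, hn⟩ => hn ▸ hnonneg n s hs⟩
    have hfirst : Tendsto (fun N => phi N s * S (N + 1)) atTop (𝓝 0) := by
      have hS1 : Tendsto (fun N => S (N + 1)) atTop (𝓝 0) := by
        rw [tendsto_add_atTop_iff_nat 1]; exact hsum
      have := hphi_tendsto.mul hS1
      simpa using this
    have hsecond : Tendsto (fun N => ∑ i ∈ Finset.range N, c s i * S (i + 1))
        atTop (𝓝 (∑' i, c s i * S (i + 1))) :=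
      (hsummable s hs).hasSum.tendsto_sum_nat
    simpa using hfirst.add hsecond
  · -- limit as s → 0⁺
    rw [show (0 : ℝ) = 0 from rfl]
    have hM1 : (0 : ℝ) < max M 1 := lt_of_lt_of_le one_pos (le_max_right _ _)
    rw [NormedAddCommGroup.tendsto_nhds_zero]
    intro ε hε
    -- choose N such that |S n| ≤ ε' for n ≥ N
    set ε' : ℝ := ε / (2 * max M 1) with hε'
    have hε'pos : 0 < ε' := div_pos hε (by linarith)
    obtain ⟨N, hN⟩ : ∃ N, ∀ n, N ≤ n → |S n| ≤ ε' := by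
      have := (Metric.tendsto_atTop.1 hsum) ε' hε'pos
      obtain ⟨N, hN⟩ := this
      exact ⟨N, fun n hn => by
        have := hN n hn
        rw [Real.dist_eq, sub_zero] at this
        exact this.le⟩
    -- the head tends to 0
    have hhead : Tendsto (fun s => ∑ i ∈ Finset.range N, c s i * S (i + 1))
        (𝓝[>] (0 : ℝ)) (𝓝 0) := by
      have : Tendsto (fun s => ∑ i ∈ Finset.range N, c s i * S (i + 1))
          (𝓝[>] (0 : ℝ)) (𝓝 (∑ i ∈ Finset.range N, (0 : ℝ))) := by
        apply tendsto_finset_sum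
        intro i _
        have h1 : Tendsto (fun s => c s i) (𝓝[>] (0 : ℝ)) (𝓝 0) := by
          have := (hlim1 i).sub (hlim1 (i + 1))
          simpa using this
        simpa using h1.mul_const (S (i + 1))
      simpa using this
    rw [NormedAddCommGroup.tendsto_nhds_zero] at hhead
    filter_upwards [hhead (ε / 2) (by linarith), self_mem_nhdsWithin] with s hs1 hs2
    have hs0 : (0 : ℝ) ≤ s := le_of_lt hs2
    -- split into head and tail
    have hsplit : ∑' i, c s i * S (i + 1) =
        (∑ i ∈ Finset.range N, c s i * S (i + 1)) +
          ∑' i, c s (N + i) * S (N + i + 1) := by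
      rw [← Summable.sum_add_tsum_nat_add N (hsummable s hs0)]
      congr 1
      apply tsum_congr
      intro i
      congr 2 <;> omega
    -- bound the tail
    have htail_summable : Summable (fun i => c s (N + i) * S (N + i + 1)) := by
      have := (hsummable s hs0).comp_injective (add_right_injective N)
      exact this
    have htail : |∑' i, c s (N + i) * S (N + i + 1)| ≤ ε' * max M 1 := by
      calc |∑' i, c s (N + i) * S (N + i + 1)|
          ≤ ∑' i, |c s (N + i) * S (N + i + 1)| := by
            exact abs_tsum_le_aux htail_summable.abs
        _ ≤ ∑' i, ε' * c s (N + i) := by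
            apply Summable.tsum_le_tsum
            · intro i
              rw [abs_mul, abs_of_nonneg (hc_nonneg s hs0 _)]
              calc c s (N + i) * |S (N + i + 1)| ≤ c s (N + i) * ε' :=
                    mul_le_mul_of_nonneg_left (hN _ (by omega)) (hc_nonneg s hs0 _)
                _ = ε' * c s (N + i) := mul_comm _ _
            · exact htail_summable.abs
            · exact ((hc_summable s hs0).comp_injective
                (add_right_injective N)).mul_left ε' |>.congr (fun i => by
                  simp [Function.comp])
        _ = ε' * ∑' i, c s (N + i) := by rw [tsum_mul_left]
        _ ≤ ε' * max M 1 := by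
            apply mul_le_mul_of_nonneg_left _ hε'pos.le
            apply Real.tsum_le_of_sum_range_le (fun i => hc_nonneg s hs0 _)
            intro n
            rw [hc_sum s n N]
            have := hnonneg (N + n) s hs0
            have := hbdd N s hs0
            have := le_max_left M 1
            linarith
    have : ε' * max M 1 = ε / 2 := by
      field_simp [hε']
      rw [hε']; field_simp [hM1.ne']
    calc ‖∑' i, c s i * S (i + 1)‖
        = |(∑ i ∈ Finset.range N, c s i * S (i + 1)) +
            ∑' i, c s (N + i) * S (N + i + 1)| := by rw [Real.norm_eq_abs, hsplit]
      _ ≤ |∑ i ∈ Finset.range N, c s i * S (i + 1)| +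
            |∑' i, c s (N + i) * S (N + i + 1)| := abs_add_le _ _
      _ < ε / 2 + ε / 2 := by
          have h1 : |∑ i ∈ Finset.range N, c s i * S (i + 1)| < ε / 2 := by
            simpa [Real.norm_eq_abs] using hs1
          have h2 := htail.trans_eq this
          linarith
      _ = ε := by ring

/-- Regularity of the `(φ)` summation method (real-valued version). -/
theorem phi_method_regular
    (a : ℕ → ℝ) (L : ℝ)
    (hsum : Tendsto (fun N => ∑ n ∈ Finset.range N, a n) atTop (𝓝 L))
    (phi : ℕ → ℝ → ℝ) (M : ℝ)
    (hcont : ∀ n, ContinuousOn (phi n) (Set.Ici 0))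
    (hnonneg : ∀ n, ∀ s : ℝ, 0 ≤ s → 0 ≤ phi n s)
    (hmono : ∀ n, ∀ s : ℝ, 0 ≤ s → phi (n + 1) s ≤ phi n s)
    (hbdd : ∀ n, ∀ s : ℝ, 0 ≤ s → phi n s ≤ M)
    (hone : ∀ n, phi n 0 = 1)
    (hlim1 : ∀ n, Tendsto (phi n) (𝓝[>] (0 : ℝ)) (𝓝 1)) :
    ∃ F : ℝ → ℝ,
      (∀ s : ℝ, 0 ≤ s →
        Tendsto (fun N => ∑ n ∈ Finset.range N, a n * phi n s) atTop (𝓝 (F s))) ∧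
      Tendsto F (𝓝[>] (0 : ℝ)) (𝓝 L) := by
  -- shift `a 0` by `L` to reduce to the `L = 0` case
  set a' : ℕ → ℝ := fun n => if n = 0 then a 0 - L else a n with ha'
  have hsum' : Tendsto (fun N => ∑ n ∈ Finset.range N, a' n) atTop (𝓝 0) := by
    have heq : ∀ N : ℕ, 1 ≤ N →
        ∑ n ∈ Finset.range N, a' n = (∑ n ∈ Finset.range N, a n) - L := by
      intro N hN
      have : ∀ n ∈ Finset.range N, a' n = a n - (if n = 0 then L else 0) := by
        intro n _
        by_cases h : n = 0 <;> simp [ha', h]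
      rw [Finset.sum_congr rfl this, Finset.sum_sub_distrib]
      congr 1
      rw [Finset.sum_ite_eq' (Finset.range N) 0 (fun _ => L),
        if_pos (Finset.mem_range.mpr hN)]
    have h2 : Tendsto (fun N => (∑ n ∈ Finset.range N, a n) - L) atTop (𝓝 0) := by
      have := hsum.sub_const L
      simpa using this
    apply h2.congr'
    filter_upwards [eventually_ge_atTop 1] with N hN
    exact (heq N hN).symm
  obtain ⟨F, hF1, hF2⟩ := phi_method_regular_zero a' hsum' phi M hnonneg hmono hbdd hlim1
  refine ⟨fun s => F s + L * phi 0 s, ?_, ?_⟩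
  · intro s hs
    have heq : ∀ N : ℕ, 1 ≤ N →
        ∑ n ∈ Finset.range N, a n * phi n s =
          (∑ n ∈ Finset.range N, a' n * phi n s) + L * phi 0 s := by
      intro N hN
      have : ∀ n ∈ Finset.range N,
          a n * phi n s = a' n * phi n s + (if n = 0 then L * phi 0 s else 0) := by
        intro n _
        by_cases h : n = 0 <;> simp [ha', h] <;> ring
      rw [Finset.sum_congr rfl this, Finset.sum_add_distrib]
      congr 1
      rw [Finset.sum_ite_eq' (Finset.range N) 0 (fun _ => L * phi 0 s),
        if_pos (Finset.mem_range.mpr hN)]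
    have h2 : Tendsto (fun N => (∑ n ∈ Finset.range N, a' n * phi n s) + L * phi 0 s)
        atTop (𝓝 (F s + L * phi 0 s)) := (hF1 s hs).add_const _
    apply h2.congr'
    filter_upwards [eventually_ge_atTop 1] with N hN
    exact (heq N hN).symm
  · have h1 : Tendsto (fun s => L * phi 0 s) (𝓝[>] (0 : ℝ)) (𝓝 L) := by
      have := (hlim1 0).const_mul L
      simpa using this
    have := hF2.add h1
    simpa using this
end

section
/- If ∑_{n=1}^∞ a_n n^{-s} converges for all s > 0 and tends to L as s → 0⁺, and n·(ln n)·|a_n| → 0 as n → ∞, then ∑_{n=1}^∞ a_n converges to L. -/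
open Filter Real Topology

lemma aux_one_sub_rpow {x s : ℝ} (hx : 1 ≤ x) :
    1 - x ^ (-s) ≤ s * Real.log x := by
  have hx0 : (0:ℝ) < x := lt_of_lt_of_le one_pos hx
  have h1 : x ^ (-s) = Real.exp (Real.log x * (-s)) := Real.rpow_def_of_pos hx0 _
  have h2 := Real.add_one_le_exp (Real.log x * (-s))
  rw [← h1] at h2
  nlinarith

lemma aux_telescope_s10 {k s : ℝ} (hk : 1 ≤ k) (hs : 0 < s) (hs1 : s ≤ 1) :
    s * (k + 1) ^ (-(1 + s)) ≤ k ^ (-s) - (k + 1) ^ (-s) := by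
  have hk0 : (0:ℝ) < k := lt_of_lt_of_le one_pos hk
  have hk1 : (0:ℝ) < k + 1 := by linarith
  -- Bernoulli: (1 - 1/(k+1))^s ≤ 1 - s/(k+1)
  have hb : (1 + (-(1/(k+1)))) ^ s ≤ 1 + s * (-(1/(k+1))) := by
    apply rpow_one_add_le_one_add_mul_self _ hs.le hs1
    rw [neg_le, neg_neg, div_le_one hk1]; linarith
  have he : (1:ℝ) + (-(1/(k+1))) = k / (k+1) := by field_simp; ring
  rw [he] at hb
  have hdiv : (k / (k+1)) ^ s = k ^ s / (k+1) ^ s := Real.div_rpow hk0.le hk1.le _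
  rw [hdiv] at hb
  have hks : (0:ℝ) < k ^ s := Real.rpow_pos_of_pos hk0 s
  have hk1s : (0:ℝ) < (k+1) ^ s := Real.rpow_pos_of_pos hk1 s
  -- so (k+1)^(-s) ≤ (1 - s/(k+1)) * k^(-s)
  have hkn : k ^ (-s) = (k ^ s)⁻¹ := Real.rpow_neg hk0.le s
  have hk1n : (k+1) ^ (-s) = ((k+1) ^ s)⁻¹ := Real.rpow_neg hk1.le s
  have hmono : (k+1) ^ (-s) ≤ k ^ (-s) := by
    rw [hkn, hk1n]
    apply inv_anti₀ hks
    exact Real.rpow_le_rpow hk0.le (by linarith) hs.le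
  have key : (k+1) ^ (-s) ≤ k ^ (-s) - s / (k+1) * k ^ (-s) := by
    rw [hkn, hk1n]
    rw [div_le_iff₀ hk1s] at hb
    have h2 : (k ^ s)⁻¹ * (k^s) = 1 := inv_mul_cancel₀ hks.ne'
    have h3 : ((k+1) ^ s)⁻¹ * ((k+1)^s) = 1 := inv_mul_cancel₀ hk1s.ne'
    have hinv : (0:ℝ) < (k^s)⁻¹ := by positivity
    calc ((k+1)^s)⁻¹ = ((k+1)^s)⁻¹ * ((k^s)⁻¹ * k^s) := by rw [h2]; ring
      _ = (k^s)⁻¹ * (((k+1)^s)⁻¹ * k^s) := by ring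
      _ ≤ (k^s)⁻¹ * (((k+1)^s)⁻¹ * ((1 + s * (-(1/(k+1)))) * (k+1)^s)) := by
          apply mul_le_mul_of_nonneg_left _ hinv.le
          apply mul_le_mul_of_nonneg_left hb (by positivity)
      _ = (k^s)⁻¹ * (1 + s * (-(1/(k+1)))) * (((k+1)^s)⁻¹ * (k+1)^s) := by ring
      _ = (k^s)⁻¹ - s/(k+1) * (k^s)⁻¹ := by rw [h3]; ring
  have hsplit : (k+1) ^ (-(1+s)) = (k+1)⁻¹ * (k+1) ^ (-s) := by
    rw [neg_add, Real.rpow_add hk1, Real.rpow_neg_one]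
  rw [hsplit]
  have hfin : s * ((k+1)⁻¹ * (k+1) ^ (-s)) ≤ s / (k+1) * k ^ (-s) := by
    have h4 : s * ((k+1)⁻¹ * (k+1) ^ (-s)) ≤ s * ((k+1)⁻¹ * k ^ (-s)) := by gcongr
    calc s * ((k+1)⁻¹ * (k+1) ^ (-s)) ≤ s * ((k+1)⁻¹ * k ^ (-s)) := h4
      _ = s / (k+1) * k ^ (-s) := by ring
  linarith

lemma aux_tail_sum {s : ℝ} (hs : 0 < s) (hs1 : s ≤ 1) (N : ℕ) (hN : 1 ≤ N) :
    ∑' n : ℕ, ((N:ℝ) + 1 + n) ^ (-(1 + s)) ≤ (N:ℝ) ^ (-s) / s := by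
  have hN1 : (1:ℝ) ≤ (N:ℝ) := by exact_mod_cast hN
  apply Real.tsum_le_of_sum_range_le (fun n => Real.rpow_nonneg (by positivity) _)
  intro m
  have key : ∀ n ∈ Finset.range m,
      ((N:ℝ) + 1 + n) ^ (-(1 + s)) ≤
        (((N:ℝ) + n) ^ (-s) - ((N:ℝ) + (n+1)) ^ (-s)) / s := by
    intro n _
    have hn0 : (0:ℝ) ≤ (n:ℝ) := Nat.cast_nonneg n
    have hk : (1:ℝ) ≤ (N:ℝ) + n := by linarith
    have ht := aux_telescope_s10 hk hs hs1
    rw [le_div_iff₀ hs]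
    have e1 : (N:ℝ) + 1 + n = (N:ℝ) + n + 1 := by ring
    have e2 : (N:ℝ) + ((n:ℝ)+1) = (N:ℝ) + n + 1 := by ring
    rw [e1, e2]
    linarith
  calc ∑ n ∈ Finset.range m, ((N:ℝ) + 1 + n) ^ (-(1 + s))
      ≤ ∑ n ∈ Finset.range m, (((N:ℝ) + n) ^ (-s) - ((N:ℝ) + (n+1)) ^ (-s)) / s :=
        Finset.sum_le_sum key
    _ = (∑ n ∈ Finset.range m,
          ((fun j : ℕ => ((N:ℝ) + j) ^ (-s)) n - (fun j : ℕ => ((N:ℝ) + j) ^ (-s)) (n+1))) / s := by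
        rw [← Finset.sum_div]
        congr 1
        exact Finset.sum_congr rfl fun n _ => by push_cast; ring_nf
    _ = (((N:ℝ) + 0) ^ (-s) - ((N:ℝ) + m) ^ (-s)) / s := by
        rw [Finset.sum_range_sub' (fun j : ℕ => ((N:ℝ) + j) ^ (-s)) m]
        norm_num
    _ ≤ (N:ℝ) ^ (-s) / s := by
        have h1 : (0:ℝ) ≤ ((N:ℝ) + m) ^ (-s) := Real.rpow_nonneg (by positivity) _
        have : ((N:ℝ) + 0) ^ (-s) = (N:ℝ) ^ (-s) := by norm_num
        rw [this]
        gcongr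
        linarith

set_option maxHeartbeats 1000000

lemma aux_abs_le {a : ℕ → ℝ} {c : ℝ} {k : ℕ} (hk : 2 ≤ k)
    (h : (k:ℝ) * Real.log k * |a k| ≤ c) : |a k| ≤ c / ((k:ℝ) * Real.log k) := by
  have hk2 : (2:ℝ) ≤ (k:ℝ) := by exact_mod_cast hk
  have hkpos : (0:ℝ) < (k:ℝ) := by linarith
  have hlog : (0:ℝ) < Real.log k := Real.log_pos (by linarith)
  rw [le_div_iff₀ (by positivity)]
  linarith [h]

lemma aux_summable_rpow {s : ℝ} (hs : 0 < s) (k : ℕ) :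
    Summable (fun n : ℕ => ((n:ℝ) + k) ^ (-(1 + s))) := by
  have h1 : Summable (fun n : ℕ => (n:ℝ) ^ (-(1 + s))) :=
    Real.summable_nat_rpow.2 (by linarith)
  have h2 := (summable_nat_add_iff k).2 h1
  apply h2.congr
  intro n
  push_cast
  ring_nf

lemma aux_summable_abs {a : ℕ → ℝ} {B : ℝ}
    (hB : ∀ n : ℕ, (n:ℝ) * Real.log n * |a n| ≤ B) {s : ℝ} (hs : 0 < s) :
    Summable (fun n : ℕ => |a (n + 1)| * ((n:ℝ) + 1) ^ (-s)) := by
  rw [← summable_nat_add_iff 1]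
  have hB0 : 0 ≤ B := le_trans (by simp) (hB 0)
  have hlog2 : (0:ℝ) < Real.log 2 := Real.log_pos (by norm_num)
  apply Summable.of_nonneg_of_le (fun n => by positivity)
    (f := fun n : ℕ => B / Real.log 2 * ((n:ℝ) + 2) ^ (-(1 + s)))
  · intro n
    have hk : 2 ≤ n + 2 := by omega
    have hk2 : (2:ℝ) ≤ ((n:ℕ):ℝ) + 2 := by linarith [Nat.cast_nonneg (α := ℝ) n]
    have hkpos : (0:ℝ) < (n:ℝ) + 2 := by positivity
    have hcast : ((n + 2 : ℕ):ℝ) = (n:ℝ) + 2 := by push_cast; ring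
    have hlogk : Real.log 2 ≤ Real.log ((n:ℝ) + 2) :=
      Real.log_le_log (by norm_num) hk2
    have hlogkpos : (0:ℝ) < Real.log ((n:ℝ) + 2) := lt_of_lt_of_le hlog2 hlogk
    have habs : |a (n + 2)| ≤ B / (((n:ℝ) + 2) * Real.log ((n:ℝ) + 2)) := by
      have := aux_abs_le hk (hB (n + 2))
      rwa [hcast] at this
    have hrw : ((n:ℝ) + 2) ^ (-(1 + s)) = ((n:ℝ) + 2)⁻¹ * ((n:ℝ) + 2) ^ (-s) := by
      rw [neg_add, Real.rpow_add hkpos, Real.rpow_neg_one]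
    have hrpos : (0:ℝ) ≤ ((n:ℝ) + 2) ^ (-s) := Real.rpow_nonneg hkpos.le _
    have step1 : |a (n + 1 + 1)| * (((n+1:ℕ):ℝ) + 1) ^ (-s)
        ≤ B / (((n:ℝ) + 2) * Real.log ((n:ℝ) + 2)) * ((n:ℝ) + 2) ^ (-s) := by
      have e : ((n+1:ℕ):ℝ) + 1 = (n:ℝ) + 2 := by push_cast; ring
      rw [e, show n + 1 + 1 = n + 2 from rfl]
      exact mul_le_mul_of_nonneg_right habs hrpos
    refine step1.trans ?_
    rw [hrw, ← mul_assoc]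
    apply mul_le_mul_of_nonneg_right ?_ hrpos
    have heq : B / Real.log 2 * ((n:ℝ) + 2)⁻¹ = B / (((n:ℝ) + 2) * Real.log 2) := by
      rw [mul_comm ((n:ℝ) + 2) (Real.log 2), ← div_div]; ring
    rw [heq]
    gcongr
  · exact ((aux_summable_rpow hs 2).mul_left _)

/-- Tauberian theorem for ordinary Dirichlet series summability:
means `∑_{n≥1} a_n n^{-s}`, condition `n ln n |a_n| → 0`. -/
theorem ordinary_dirichlet_tauber_o
    (a : ℕ → ℝ) (g : ℝ → ℝ) (L : ℝ)
    (hconv : ∀ s : ℝ, 0 < s →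
      Tendsto (fun N => ∑ n ∈ Finset.range N,
          a (n + 1) * ((n + 1 : ℝ) ^ (-s : ℝ)))
        atTop (𝓝 (g s)))
    (hlim : Tendsto g (𝓝[>] (0 : ℝ)) (𝓝 L))
    (htauber : Tendsto (fun n : ℕ => (n : ℝ) * Real.log n * |a n|) atTop (𝓝 0)) :
    Tendsto (fun N => ∑ n ∈ Finset.range N, a (n + 1)) atTop (𝓝 L) := by
  have hEnn : ∀ k : ℕ, 0 ≤ (k:ℝ) * Real.log k * |a k| := fun k =>
    mul_nonneg (mul_nonneg (Nat.cast_nonneg k) (Real.log_natCast_nonneg k)) (abs_nonneg _)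
  obtain ⟨B, hB'⟩ := htauber.bddAbove_range
  have hB : ∀ n : ℕ, (n:ℝ) * Real.log n * |a n| ≤ B := fun n => hB' (Set.mem_range_self n)
  -- the Dirichlet series has sum `g s`
  have hg : ∀ s : ℝ, 0 < s → HasSum (fun n : ℕ => a (n+1) * ((n:ℝ)+1) ^ (-s)) (g s) := by
    intro s hs
    have habs := aux_summable_abs hB hs
    have hsum : Summable (fun n : ℕ => a (n+1) * ((n:ℝ)+1) ^ (-s)) := by
      apply Summable.of_abs
      apply habs.congr
      intro n
      rw [abs_mul, abs_of_nonneg (Real.rpow_nonneg (by positivity) _)]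
    have h1 := hsum.hasSum
    rwa [tendsto_nhds_unique h1.tendsto_sum_nat (hconv s hs)] at h1
  rw [Metric.tendsto_atTop]
  intro ε hε
  have hε8 : 0 < ε/8 := by positivity
  rw [Metric.tendsto_nhdsWithin_nhds] at hlim
  obtain ⟨δ, hδ, hδ'⟩ := hlim (ε/8) hε8
  rw [Metric.tendsto_atTop] at htauber
  obtain ⟨M₀, hM₀⟩ := htauber (ε/8) hε8
  set M := max M₀ 2 with hMdef
  have hM2 : 2 ≤ M := le_max_right _ _
  have hM : ∀ k, M ≤ k → (k:ℝ) * Real.log k * |a k| ≤ ε/8 := by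
    intro k hk
    have h := hM₀ k (le_trans (le_max_left _ _) hk)
    rw [Real.dist_eq, sub_zero, abs_of_nonneg (hEnn k)] at h
    exact h.le
  set C := ∑ n ∈ Finset.range M, Real.log ((n:ℝ)+1) * |a (n+1)| with hCdef
  have hC0 : 0 ≤ C := Finset.sum_nonneg fun n _ =>
    mul_nonneg (Real.log_nonneg (by linarith [Nat.cast_nonneg (α := ℝ) n])) (abs_nonneg _)
  have hlogtend : Tendsto (fun N : ℕ => Real.log N) atTop atTop :=
    Real.tendsto_log_atTop.comp tendsto_natCast_atTop_atTop
  obtain ⟨N₁, hN₁⟩ := eventually_atTop.1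
    (hlogtend.eventually_gt_atTop (max (max δ⁻¹ 1) (8*C/ε + 1)))
  refine ⟨max N₁ (M + 3), fun N hN => ?_⟩
  have hNN₁ : N₁ ≤ N := le_trans (le_max_left _ _) hN
  have hNM3 : M + 3 ≤ N := le_trans (le_max_right _ _) hN
  have hNM : M ≤ N := by omega
  have hN1R : (1:ℝ) ≤ (N:ℝ) := by exact_mod_cast (by omega : 1 ≤ N)
  have hlogR : max (max δ⁻¹ 1) (8*C/ε + 1) < Real.log N := hN₁ N hNN₁
  have hlog1 : 1 < Real.log N :=
    lt_of_le_of_lt (le_trans (le_max_right _ _) (le_max_left _ _)) hlogR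
  have hlogpos : 0 < Real.log N := by linarith
  set s := (Real.log (N:ℝ))⁻¹ with hsdef
  have hs : 0 < s := inv_pos.2 hlogpos
  have hslog : s * Real.log N = 1 := inv_mul_cancel₀ hlogpos.ne'
  have hs1 : s ≤ 1 := by
    rw [hsdef]
    have := inv_lt_one_of_one_lt₀ hlog1
    linarith
  have hsδ : s < δ := by
    have hδinv : δ⁻¹ < Real.log N :=
      lt_of_le_of_lt (le_trans (le_max_left _ _) (le_max_left _ _)) hlogR
    have h1 := mul_lt_mul_of_pos_left hδinv (mul_pos hs hδ)
    have e1 : s * δ * δ⁻¹ = s := by field_simp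
    have e2 : s * δ * Real.log N = δ := by rw [hsdef]; field_simp
    nlinarith
  -- split the sum at N
  have hgs := hg s hs
  have hsplit := Summable.sum_add_tsum_nat_add N hgs.summable
  rw [hgs.tsum_eq] at hsplit
  set P := ∑ n ∈ Finset.range N, a (n+1) * ((n:ℝ)+1) ^ (-s) with hPdef
  set T := ∑' (i : ℕ), a (i + N + 1) * (((i + N : ℕ):ℝ) + 1) ^ (-s) with hTdef
  -- head estimate
  set D := ∑ n ∈ Finset.range N, Real.log ((n:ℝ)+1) * |a (n+1)| with hDdef
  have hhead : |(∑ n ∈ Finset.range N, a (n+1)) - P| ≤ s * D := by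
    have hres : (∑ n ∈ Finset.range N, a (n+1)) - P
        = ∑ n ∈ Finset.range N, a (n+1) * (1 - ((n:ℝ)+1) ^ (-s)) := by
      rw [hPdef, ← Finset.sum_sub_distrib]
      exact Finset.sum_congr rfl fun n _ => by ring
    rw [hres]
    refine (Finset.abs_sum_le_sum_abs _ _).trans ?_
    have hterm : ∀ n ∈ Finset.range N,
        |a (n+1) * (1 - ((n:ℝ)+1) ^ (-s))| ≤ s * (Real.log ((n:ℝ)+1) * |a (n+1)|) := by
      intro n _
      have h1 : (1:ℝ) ≤ (n:ℝ) + 1 := by linarith [Nat.cast_nonneg (α := ℝ) n]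
      have hle1 : ((n:ℝ)+1) ^ (-s) ≤ 1 :=
        Real.rpow_le_one_of_one_le_of_nonpos h1 (by linarith)
      rw [abs_mul, abs_of_nonneg (by linarith : (0:ℝ) ≤ 1 - ((n:ℝ)+1) ^ (-s))]
      have h2 := aux_one_sub_rpow h1 (s := s)
      calc |a (n+1)| * (1 - ((n:ℝ)+1) ^ (-s)) ≤ |a (n+1)| * (s * Real.log ((n:ℝ)+1)) :=
            mul_le_mul_of_nonneg_left h2 (abs_nonneg _)
        _ = s * (Real.log ((n:ℝ)+1) * |a (n+1)|) := by ring
    refine (Finset.sum_le_sum hterm).trans ?_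
    rw [hDdef, Finset.mul_sum]
  have hD : D ≤ C + ε/8 * (1 + Real.log N) := by
    rw [hDdef, ← Finset.sum_range_add_sum_Ico _ hNM, ← hCdef]
    have h2 : ∑ n ∈ Finset.Ico M N, Real.log ((n:ℝ)+1) * |a (n+1)|
        ≤ ∑ n ∈ Finset.Ico M N, ε/8 * ((n:ℝ)+1)⁻¹ := by
      apply Finset.sum_le_sum
      intro n hn
      have hnM : M ≤ n := (Finset.mem_Ico.1 hn).1
      have h3 := hM (n+1) (by omega)
      have hc : ((n+1:ℕ):ℝ) = (n:ℝ)+1 := by push_cast; ring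
      rw [hc] at h3
      have hpos : (0:ℝ) < (n:ℝ)+1 := by positivity
      have h4 : ((n:ℝ)+1) * (Real.log ((n:ℝ)+1) * |a (n+1)|) ≤ ε/8 := by
        rw [← mul_assoc]; exact h3
      calc Real.log ((n:ℝ)+1) * |a (n+1)|
          = (((n:ℝ)+1) * (Real.log ((n:ℝ)+1) * |a (n+1)|)) * ((n:ℝ)+1)⁻¹ := by
            field_simp
        _ ≤ ε/8 * ((n:ℝ)+1)⁻¹ := by
            apply mul_le_mul_of_nonneg_right h4 (by positivity)
    have h4 : ∑ n ∈ Finset.Ico M N, ε/8 * ((n:ℝ)+1)⁻¹ ≤ ε/8 * (1 + Real.log N) := by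
      have hsub : Finset.Ico M N ⊆ Finset.range N := by
        intro x hx
        simp only [Finset.mem_Ico, Finset.mem_range] at *
        omega
      have h5 : ∑ n ∈ Finset.Ico M N, ε/8 * ((n:ℝ)+1)⁻¹
          ≤ ∑ n ∈ Finset.range N, ε/8 * ((n:ℝ)+1)⁻¹ :=
        Finset.sum_le_sum_of_subset_of_nonneg hsub (fun i _ _ => by positivity)
      have hharm : ∑ n ∈ Finset.range N, ((n:ℝ)+1)⁻¹ ≤ 1 + Real.log N := by
        have h6 := harmonic_le_one_add_log N
        have h7 : ((harmonic N : ℚ) : ℝ) = ∑ n ∈ Finset.range N, ((n:ℝ)+1)⁻¹ := by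
          rw [harmonic]
          push_cast
          rfl
        rw [h7] at h6
        exact h6
      calc ∑ n ∈ Finset.Ico M N, ε/8 * ((n:ℝ)+1)⁻¹
          ≤ ∑ n ∈ Finset.range N, ε/8 * ((n:ℝ)+1)⁻¹ := h5
        _ = ε/8 * ∑ n ∈ Finset.range N, ((n:ℝ)+1)⁻¹ := by rw [Finset.mul_sum]
        _ ≤ ε/8 * (1 + Real.log N) := by
            apply mul_le_mul_of_nonneg_left hharm (by positivity)
    linarith
  have hsC : s * C ≤ ε/8 := by
    have h8C : 8*C/ε + 1 < Real.log N := lt_of_le_of_lt (le_max_right _ _) hlogR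
    have h1 : 8*C + ε ≤ ε * Real.log N := by
      have h2 := mul_lt_mul_of_pos_left h8C hε
      have e : ε * (8*C/ε + 1) = 8*C + ε := by field_simp
      linarith [e ▸ h2]
    rw [hsdef, inv_mul_le_iff₀ hlogpos]
    linarith
  have hheadfin : |(∑ n ∈ Finset.range N, a (n+1)) - P| ≤ 3*ε/8 := by
    have h1 : s * D ≤ s * (C + ε/8 * (1 + Real.log N)) :=
      mul_le_mul_of_nonneg_left hD hs.le
    have h2 : s * (C + ε/8 * (1 + Real.log N)) = s * C + ε/8 * (s + s * Real.log N) := by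
      ring
    rw [hslog] at h2
    have h3 : ε/8 * (s + 1) ≤ ε/8 * 2 := by
      apply mul_le_mul_of_nonneg_left (by linarith) (by positivity)
    linarith [hhead]
  -- tail estimate
  have htail : |T| ≤ ε/8 := by
    have habssum : Summable (fun i : ℕ => |a (i + N + 1)| * (((i + N:ℕ):ℝ) + 1) ^ (-s)) :=
      ((summable_nat_add_iff (f := fun n : ℕ => |a (n + 1)| * ((n:ℝ) + 1) ^ (-s)) N).2
        (aux_summable_abs hB hs) : _)
    have hT1 : |T| ≤ ∑' (i : ℕ), |a (i + N + 1)| * (((i + N:ℕ):ℝ) + 1) ^ (-s) := by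
      rw [hTdef, ← Real.norm_eq_abs]
      have hnorm : Summable (fun i : ℕ => ‖a (i + N + 1) * (((i + N:ℕ):ℝ) + 1) ^ (-s)‖) := by
        apply habssum.congr
        intro i
        rw [Real.norm_eq_abs, abs_mul, abs_of_nonneg (Real.rpow_nonneg (by positivity) _)]
      refine le_trans (norm_tsum_le_tsum_norm hnorm) (le_of_eq (tsum_congr fun i => ?_))
      rw [Real.norm_eq_abs, abs_mul, abs_of_nonneg (Real.rpow_nonneg (by positivity) _)]
    have hrsummable : Summable (fun i : ℕ => ε/8/Real.log N * (((N:ℝ) + 1 + i) ^ (-(1+s)))) := by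
      apply Summable.mul_left
      apply (aux_summable_rpow hs (N+1)).congr
      intro n
      congr 1
      push_cast
      ring
    have hterm : ∀ i : ℕ, |a (i + N + 1)| * (((i + N:ℕ):ℝ) + 1) ^ (-s)
        ≤ ε/8/Real.log N * (((N:ℝ) + 1 + i) ^ (-(1+s))) := by
      intro i
      set x : ℝ := (N:ℝ) + 1 + i with hxdef
      have hxc : ((i + N:ℕ):ℝ) + 1 = x := by rw [hxdef]; push_cast; ring
      have hxc2 : ((i + N + 1:ℕ):ℝ) = x := by rw [hxdef]; push_cast; ring
      have hx2 : (2:ℝ) ≤ x := by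
        rw [hxdef]
        have : (1:ℝ) ≤ (N:ℝ) := hN1R
        have := Nat.cast_nonneg (α := ℝ) i
        linarith
      have hxpos : (0:ℝ) < x := by linarith
      have hNx : (N:ℝ) ≤ x := by
        rw [hxdef]; have := Nat.cast_nonneg (α := ℝ) i; linarith
      have hlogx : Real.log N ≤ Real.log x := Real.log_le_log (by linarith) hNx
      have hlogxpos : 0 < Real.log x := by linarith
      have habs : |a (i + N + 1)| ≤ ε/8 / (x * Real.log x) := by
        have h1 := aux_abs_le (a := a) (by omega : 2 ≤ i + N + 1) (hM (i + N + 1) (by omega))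
        rwa [hxc2] at h1
      have hrw : x ^ (-(1 + s)) = x⁻¹ * x ^ (-s) := by
        rw [neg_add, Real.rpow_add hxpos, Real.rpow_neg_one]
      have hrpos : (0:ℝ) ≤ x ^ (-s) := Real.rpow_nonneg hxpos.le _
      rw [hxc]
      have step1 : |a (i + N + 1)| * x ^ (-s) ≤ ε/8 / (x * Real.log x) * x ^ (-s) :=
        mul_le_mul_of_nonneg_right habs hrpos
      refine step1.trans ?_
      rw [hrw, ← mul_assoc]
      apply mul_le_mul_of_nonneg_right ?_ hrpos
      have heq : ε/8 / Real.log N * x⁻¹ = ε/8 / (x * Real.log N) := by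
        rw [mul_comm x (Real.log N), ← div_div]; ring
      rw [heq]
      gcongr
    have hT2 : ∑' (i : ℕ), |a (i + N + 1)| * (((i + N:ℕ):ℝ) + 1) ^ (-s)
        ≤ ∑' (i : ℕ), ε/8/Real.log N * (((N:ℝ) + 1 + i) ^ (-(1+s))) :=
      Summable.tsum_le_tsum hterm habssum hrsummable
    have hT3 : ∑' (i : ℕ), ε/8/Real.log N * (((N:ℝ) + 1 + i) ^ (-(1+s)))
        ≤ ε/8/Real.log N * ((N:ℝ) ^ (-s) / s) := by
      rw [tsum_mul_left]
      apply mul_le_mul_of_nonneg_left (aux_tail_sum hs hs1 N (by omega)) (by positivity)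
    have hT4 : ε/8/Real.log N * ((N:ℝ) ^ (-s) / s) ≤ ε/8 := by
      have e : ε/8/Real.log N * ((N:ℝ) ^ (-s) / s) = ε/8 * (N:ℝ) ^ (-s) / (s * Real.log N) := by
        ring
      rw [e, hslog, div_one]
      have h1 : (N:ℝ) ^ (-s) ≤ 1 :=
        Real.rpow_le_one_of_one_le_of_nonpos hN1R (by linarith)
      nlinarith [Real.rpow_nonneg (by positivity : (0:ℝ) ≤ (N:ℝ)) (-s)]
    linarith
  -- limit estimate
  have hgsL : |g s - L| < ε/8 := by
    have h1 : s ∈ Set.Ioi (0:ℝ) := Set.mem_Ioi.2 hs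
    have h2 : dist s 0 < δ := by
      rw [Real.dist_eq, sub_zero, abs_of_pos hs]; exact hsδ
    have := hδ' h1 h2
    rwa [Real.dist_eq] at this
  -- conclude
  rw [Real.dist_eq]
  have hdecomp : (∑ n ∈ Finset.range N, a (n+1)) - L
      = ((∑ n ∈ Finset.range N, a (n+1)) - P) + (g s - L) + (-T) := by
    rw [← hsplit]; ring
  rw [hdecomp]
  calc |((∑ n ∈ Finset.range N, a (n+1)) - P) + (g s - L) + (-T)|
      ≤ |(∑ n ∈ Finset.range N, a (n+1)) - P| + |g s - L| + |(-T)| := abs_add_three _ _ _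
    _ < ε := by rw [abs_neg]; linarith
end

section
/- If ∑_{n=1}^∞ a_n n^{-s} converges for all s > 0 and stays bounded as s → 0⁺, and n·(ln n)·|a_n| = O(1), then the partial sums ∑_{k=1}^n a_k are bounded. -/
open Filter Real Topology

-- Lemma B: telescope term
private lemma lemB (m : ℕ) (hm : 1 ≤ m) (s : ℝ) (hs : 0 < s) :
    s * ((m + 1 : ℝ)) ^ (-(1 + s)) ≤ (m : ℝ) ^ (-s) - ((m + 1 : ℝ)) ^ (-s) := by
  have hm0 : (0:ℝ) < m := by exact_mod_cast hm
  have hm1 : (0:ℝ) < (m:ℝ) + 1 := by linarith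
  -- log((m+1)/m) ≥ 1/(m+1)
  have hy : (0:ℝ) < (m:ℝ) / ((m:ℝ)+1) := by positivity
  have h1 : Real.log ((m:ℝ) / ((m:ℝ)+1)) ≤ (m:ℝ)/((m:ℝ)+1) - 1 :=
    Real.log_le_sub_one_of_pos hy
  have hlogdiv : Real.log (((m:ℝ)+1) / m) = - Real.log ((m:ℝ)/((m:ℝ)+1)) := by
    rw [Real.log_div (by positivity) (by positivity), Real.log_div (by positivity) (by positivity)]
    ring
  have hlog : 1/((m:ℝ)+1) ≤ Real.log (((m:ℝ)+1) / m) := by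
    rw [hlogdiv]
    have : (m:ℝ)/((m:ℝ)+1) - 1 = -(1/((m:ℝ)+1)) := by field_simp; ring
    linarith [h1.trans_eq this]
  -- ((m+1)/m)^s ≥ 1 + s/(m+1)
  have hrat : (0:ℝ) < ((m:ℝ)+1)/m := by positivity
  have h2 : 1 + s/((m:ℝ)+1) ≤ (((m:ℝ)+1)/m) ^ s := by
    rw [Real.rpow_def_of_pos hrat]
    have he := Real.add_one_le_exp (Real.log (((m:ℝ)+1)/m) * s)
    have : s/((m:ℝ)+1) ≤ Real.log (((m:ℝ)+1)/m) * s := by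
      rw [div_eq_mul_one_div, mul_comm s]
      exact mul_le_mul_of_nonneg_right hlog hs.le
    linarith
  -- rewrite rpow's
  have hA : (0:ℝ) < (m:ℝ) ^ s := Real.rpow_pos_of_pos hm0 s
  have hB : (0:ℝ) < ((m:ℝ)+1) ^ s := Real.rpow_pos_of_pos hm1 s
  have hdiv : (((m:ℝ)+1)/m) ^ s = ((m:ℝ)+1)^s / (m:ℝ)^s :=
    Real.div_rpow (by positivity) (by positivity) s
  have e1 : (m:ℝ) ^ (-s) = ((m:ℝ)^s)⁻¹ := by rw [Real.rpow_neg hm0.le]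
  have e2 : ((m:ℝ)+1) ^ (-s) = (((m:ℝ)+1)^s)⁻¹ := by rw [Real.rpow_neg hm1.le]
  have e3 : ((m:ℝ)+1) ^ (-(1+s)) = (((m:ℝ)+1) * (((m:ℝ)+1)^s))⁻¹ := by
    rw [Real.rpow_neg hm1.le, Real.rpow_add hm1, Real.rpow_one]
  have hcast : ((m:ℝ)+1) = ((m+1 : ℕ) : ℝ) := by push_cast; ring
  rw [hdiv] at h2
  have k3 : (1 + s/((m:ℝ)+1)) * ((m:ℝ)^s) ≤ ((m:ℝ)+1)^s := by
    rw [← le_div_iff₀ hA]; exact h2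
  have hdm : s/((m:ℝ)+1)*((m:ℝ)+1) = s := div_mul_cancel₀ s hm1.ne'
  have key2 : (m:ℝ)^s * s ≤ ((m:ℝ)+1) * (((m:ℝ)+1)^s - (m:ℝ)^s) := by
    nlinarith [mul_le_mul_of_nonneg_left k3 hm1.le]
  have hmm : ((m + 1 : ℝ)) = (m:ℝ) + 1 := by norm_num
  rw [hmm, e1, e2, e3]
  have hpos : (0:ℝ) < ((m:ℝ)+1) * (((m:ℝ)+1)^s) := by positivity
  rw [← div_eq_mul_inv, inv_eq_one_div, inv_eq_one_div,
    div_sub_div _ _ hA.ne' hB.ne', div_le_div_iff₀ hpos (by positivity)]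
  nlinarith [mul_le_mul_of_nonneg_right key2 hB.le, mul_pos hA hB]

private lemma lemC (N : ℕ) (hN : 1 ≤ N) (s : ℝ) (hs : 0 < s) :
    ∀ M, N ≤ M → ∑ n ∈ Finset.Ico N M, ((n + 1 : ℝ)) ^ (-(1 + s)) ≤ ((N : ℝ) ^ (-s) - (M:ℝ)^(-s)) / s := by
  intro M hM
  induction M with
  | zero => have : N = 0 := Nat.le_zero.mp hM; omega
  | succ M ih =>
    rcases Nat.lt_or_ge M N with h | h
    · have hNM : N = M + 1 := by omega
      subst hNM
      simp [Finset.Ico_self]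
    · rw [Finset.sum_Ico_succ_top h]
      have hb := lemB M (le_trans hN h) s hs
      have ihh := ih h
      have : ((M + 1 : ℝ)) ^ (-(1+s)) ≤ ((M:ℝ)^(-s) - ((M+1:ℝ))^(-s))/s := by
        rw [le_div_iff₀ hs]; linarith
      rw [le_div_iff₀ hs] at ihh ⊢
      push_cast
      nlinarith [ihh, hb]

private lemma lemA (n : ℕ) (hn : 1 ≤ n) (s : ℝ) (hs : 0 ≤ s) :
    1 - (n : ℝ) ^ (-s) ≤ s * Real.log n := by
  have hn0 : (0:ℝ) < n := by exact_mod_cast hn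
  rw [Real.rpow_def_of_pos hn0]
  have := Real.add_one_le_exp (Real.log n * (-s))
  nlinarith [this]

private lemma lemD (a : ℕ → ℝ) (Ct : ℝ) (hCt : 0 ≤ Ct)
    (ht : ∀ n : ℕ, (n : ℝ) * Real.log n * |a n| ≤ Ct)
    (N : ℕ) (hN : 2 ≤ N) (s : ℝ) (hs : 0 < s) (M : ℕ) (hM : N ≤ M) :
    |∑ n ∈ Finset.range M, a (n + 1) * ((n + 1 : ℝ) ^ (-s : ℝ))
      - ∑ n ∈ Finset.range N, a (n + 1) * ((n + 1 : ℝ) ^ (-s : ℝ))|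
      ≤ Ct / (Real.log N * s) := by
  have hlogN : 0 < Real.log N := by
    apply Real.log_pos; exact_mod_cast hN
  rw [← Finset.sum_Ico_eq_sub _ hM]
  calc |∑ n ∈ Finset.Ico N M, a (n + 1) * ((n + 1 : ℝ) ^ (-s : ℝ))|
      ≤ ∑ n ∈ Finset.Ico N M, |a (n + 1) * ((n + 1 : ℝ) ^ (-s : ℝ))| :=
        Finset.abs_sum_le_sum_abs _ _
    _ ≤ ∑ n ∈ Finset.Ico N M, (Ct / Real.log N) * ((n + 1 : ℝ) ^ (-(1+s) : ℝ)) := by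
        apply Finset.sum_le_sum
        intro n hn
        obtain ⟨hn1, _⟩ := Finset.mem_Ico.mp hn
        have hnp : (0:ℝ) < (n:ℝ) + 1 := by positivity
        have hnN : (N:ℝ) ≤ (n:ℝ) + 1 := by
          have : N ≤ n + 1 := by omega
          exact_mod_cast this
        have hlogn : Real.log N ≤ Real.log ((n:ℝ)+1) :=
          Real.log_le_log (by exact_mod_cast (by omega : 0 < N)) hnN
        have hlognp : 0 < Real.log ((n:ℝ)+1) := lt_of_lt_of_le hlogN hlogn
        have hta := ht (n+1)
        rw [abs_mul]
        have habs : |((n:ℝ) + 1) ^ (-s)| = ((n:ℝ) + 1) ^ (-s) :=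
          abs_of_pos (Real.rpow_pos_of_pos hnp _)
        rw [habs]
        have hsplit : ((n:ℝ) + 1) ^ (-(1+s)) = (((n:ℝ)+1))⁻¹ * (((n:ℝ)+1) ^ (-s)) := by
          rw [neg_add, Real.rpow_add hnp, Real.rpow_neg_one]
        rw [hsplit, ← mul_assoc]
        apply mul_le_mul_of_nonneg_right _ (Real.rpow_pos_of_pos hnp (-s)).le
        -- |a (n+1)| ≤ Ct / log N * (n+1)⁻¹
        have h1 : |a (n+1)| ≤ Ct / (((n:ℝ)+1) * Real.log ((n:ℝ)+1)) := by
          rw [le_div_iff₀ (by positivity)]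
          have : ((n+1:ℕ):ℝ) = (n:ℝ)+1 := by push_cast; ring
          calc |a (n+1)| * (((n:ℝ)+1) * Real.log ((n:ℝ)+1))
              = ((n+1:ℕ):ℝ) * Real.log ((n+1:ℕ):ℝ) * |a (n+1)| := by rw [this]; ring
            _ ≤ Ct := hta
        refine h1.trans ?_
        calc Ct / (((n:ℝ)+1) * Real.log ((n:ℝ)+1))
            ≤ Ct / (((n:ℝ)+1) * Real.log N) := by gcongr
          _ = Ct / Real.log N * (((n:ℝ)+1))⁻¹ := by
              rw [mul_comm, ← div_div, div_eq_mul_inv (Ct / Real.log N)]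
    _ = (Ct / Real.log N) * ∑ n ∈ Finset.Ico N M, ((n + 1 : ℝ) ^ (-(1+s) : ℝ)) := by
        rw [Finset.mul_sum]
    _ ≤ (Ct / Real.log N) * (((N:ℝ) ^ (-s) - (M:ℝ) ^ (-s)) / s) := by
        apply mul_le_mul_of_nonneg_left (lemC N (by omega) s hs M hM) (by positivity)
    _ ≤ (Ct / Real.log N) * (1 / s) := by
        apply mul_le_mul_of_nonneg_left _ (by positivity)
        have h1 : (N:ℝ) ^ (-s) ≤ 1 :=
          Real.rpow_le_one_of_one_le_of_nonpos (by exact_mod_cast Nat.one_le_of_lt hN) (by linarith)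
        have h2 : (0:ℝ) ≤ (M:ℝ) ^ (-s) := Real.rpow_nonneg (by positivity) _
        gcongr
        linarith
    _ = Ct / (Real.log N * s) := by rw [div_mul_div_comm, mul_one]

private lemma lemE (a : ℕ → ℝ) (Ct : ℝ) (hCt : 0 ≤ Ct)
    (ht : ∀ n : ℕ, (n : ℝ) * Real.log n * |a n| ≤ Ct)
    (N : ℕ) (s : ℝ) (hs : 0 < s) :
    |∑ n ∈ Finset.range N, a (n + 1)
      - ∑ n ∈ Finset.range N, a (n + 1) * ((n + 1 : ℝ) ^ (-s : ℝ))|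
      ≤ Ct * s * (1 + Real.log N) := by
  rw [← Finset.sum_sub_distrib]
  calc |∑ n ∈ Finset.range N, (a (n + 1) - a (n + 1) * ((n + 1 : ℝ) ^ (-s : ℝ)))|
      ≤ ∑ n ∈ Finset.range N, |a (n + 1) - a (n + 1) * ((n + 1 : ℝ) ^ (-s : ℝ))| :=
        Finset.abs_sum_le_sum_abs _ _
    _ ≤ ∑ n ∈ Finset.range N, (Ct * s) * (((n:ℝ)+1))⁻¹ := by
        apply Finset.sum_le_sum
        intro n _
        have hnp : (0:ℝ) < (n:ℝ) + 1 := by positivity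
        have hfac : a (n + 1) - a (n + 1) * ((n + 1 : ℝ) ^ (-s : ℝ))
            = a (n + 1) * (1 - ((n + 1 : ℝ) ^ (-s : ℝ))) := by ring
        rw [hfac, abs_mul]
        have hge : (0:ℝ) ≤ 1 - ((n + 1 : ℝ) ^ (-s : ℝ)) := by
          have : ((n:ℝ) + 1) ^ (-s) ≤ 1 :=
            Real.rpow_le_one_of_one_le_of_nonpos (by linarith) (by linarith)
          linarith
        rw [abs_of_nonneg hge]
        have hA : 1 - ((n + 1 : ℝ) ^ (-s : ℝ)) ≤ s * Real.log ((n:ℝ)+1) := by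
          have := lemA (n+1) (by omega) s hs.le
          push_cast at this
          convert this using 2 <;> push_cast <;> ring
        calc |a (n + 1)| * (1 - ((n + 1 : ℝ) ^ (-s : ℝ)))
            ≤ |a (n + 1)| * (s * Real.log ((n:ℝ)+1)) :=
              mul_le_mul_of_nonneg_left hA (abs_nonneg _)
          _ ≤ (Ct * s) * (((n:ℝ)+1))⁻¹ := by
              have hta := ht (n+1)
              have hcast : ((n+1:ℕ):ℝ) = (n:ℝ)+1 := by push_cast; ring
              rw [hcast] at hta
              have hlognn : 0 ≤ Real.log ((n:ℝ)+1) := Real.log_nonneg (by linarith)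
              rw [mul_comm (Ct * s), ← mul_assoc]
              rw [inv_mul_eq_div, le_div_iff₀ hnp]
              nlinarith [abs_nonneg (a (n+1))]
    _ = (Ct * s) * ∑ n ∈ Finset.range N, (((n:ℝ)+1))⁻¹ := by rw [← Finset.mul_sum]
    _ ≤ Ct * s * (1 + Real.log N) := by
        apply mul_le_mul_of_nonneg_left _ (by positivity)
        have h1 := harmonic_le_one_add_log N
        have h2 : ((harmonic N : ℚ) : ℝ) = ∑ n ∈ Finset.range N, (((n:ℝ)+1))⁻¹ := by
          rw [harmonic]
          push_cast
          rfl
        rw [← h2]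
        exact h1

/-- Boundedness Tauberian theorem for ordinary Dirichlet series summability. -/
theorem ordinary_dirichlet_tauber_O
    (a : ℕ → ℝ) (g : ℝ → ℝ)
    (hconv : ∀ s : ℝ, 0 < s →
      Tendsto (fun N => ∑ n ∈ Finset.range N,
          a (n + 1) * ((n + 1 : ℝ) ^ (-s : ℝ)))
        atTop (𝓝 (g s)))
    (hbdd : ∃ C : ℝ, ∀ᶠ s in 𝓝[>] (0 : ℝ), |g s| ≤ C)
    (htauber : ∃ C : ℝ, ∀ n : ℕ, (n : ℝ) * Real.log n * |a n| ≤ C) :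
    ∃ M : ℝ, ∀ N, |∑ n ∈ Finset.range N, a (n + 1)| ≤ M := by
  obtain ⟨C₀, hg⟩ := hbdd
  obtain ⟨Ct, ht⟩ := htauber
  have hCt : 0 ≤ Ct := by have := ht 0; simpa using this
  -- extract ε from the eventual bound
  rw [eventually_nhdsWithin_iff, Metric.eventually_nhds_iff] at hg
  obtain ⟨ε, hε, hgε⟩ := hg
  have hg' : ∀ s : ℝ, 0 < s → s < ε → |g s| ≤ C₀ := by
    intro s hs1 hs2
    apply hgε _ (Set.mem_Ioi.mpr hs1)
    rw [Real.dist_eq, sub_zero, abs_of_pos hs1]; exact hs2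
  set N₀ : ℕ := max 3 (⌈Real.exp (1/ε)⌉₊ + 1) with hN₀
  -- main estimate for large N
  have main : ∀ N : ℕ, N₀ ≤ N → |∑ n ∈ Finset.range N, a (n + 1)| ≤ 3 * Ct + C₀ := by
    intro N hN
    have hN3 : 3 ≤ N := le_trans (le_max_left _ _) hN
    have hNe : Real.exp (1/ε) < N := by
      have h1 : (⌈Real.exp (1/ε)⌉₊ : ℝ) < N := by
        have : ⌈Real.exp (1/ε)⌉₊ + 1 ≤ N := le_trans (le_max_right _ _) hN
        exact_mod_cast this
      exact lt_of_le_of_lt (Nat.le_ceil _) h1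
    have hlog1 : 1 ≤ Real.log N := by
      have h3 : Real.exp 1 < 3 := lt_trans (Real.exp_one_lt_d9) (by norm_num)
      have : Real.exp 1 < (N:ℝ) := lt_of_lt_of_le h3 (by exact_mod_cast hN3)
      calc (1:ℝ) = Real.log (Real.exp 1) := (Real.log_exp 1).symm
        _ ≤ Real.log N := Real.log_le_log (Real.exp_pos 1) this.le
    have hlogε : 1/ε < Real.log N := by
      have := Real.log_lt_log (Real.exp_pos _) hNe
      rwa [Real.log_exp] at this
    have hlogpos : 0 < Real.log N := by linarith
    set s : ℝ := 1 / Real.log N with hsdef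
    have hs : 0 < s := by positivity
    have hs1 : s ≤ 1 := by
      rw [hsdef, div_le_one hlogpos]; exact hlog1
    have hsε : s < ε := by
      rw [hsdef, div_lt_iff₀ hlogpos]
      rw [← div_lt_iff₀' hε]
      exact hlogε
    have hslog : Real.log N * s = 1 := by
      rw [hsdef]; field_simp
    set P : ℕ → ℝ := fun K => ∑ n ∈ Finset.range K, a (n + 1) * ((n + 1 : ℝ) ^ (-s : ℝ)) with hP
    -- tail bound in the limit
    have htail : |g s - P N| ≤ Ct / (Real.log N * s) := by
      have htend : Tendsto (fun M => |P M - P N|) atTop (𝓝 |g s - P N|) :=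
        (((hconv s hs).sub_const (P N)).abs)
      apply le_of_tendsto htend
      filter_upwards [eventually_ge_atTop N] with M hM
      exact lemD a Ct hCt ht N (by omega) s hs M hM
    rw [hslog, div_one] at htail
    have hhead : |∑ n ∈ Finset.range N, a (n + 1) - P N| ≤ Ct * s * (1 + Real.log N) :=
      lemE a Ct hCt ht N s hs
    have hhead2 : Ct * s * (1 + Real.log N) ≤ 2 * Ct := by
      have : Ct * s * (1 + Real.log N) = Ct * s + Ct * (Real.log N * s) := by ring
      rw [this, hslog, mul_one]
      nlinarith
    have hgs : |g s| ≤ C₀ := hg' s hs hsε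
    calc |∑ n ∈ Finset.range N, a (n + 1)|
        = |(∑ n ∈ Finset.range N, a (n + 1) - P N) + (P N - g s) + g s| := by
          congr 1; ring
      _ ≤ |(∑ n ∈ Finset.range N, a (n + 1) - P N) + (P N - g s)| + |g s| := abs_add_le _ _
      _ ≤ |∑ n ∈ Finset.range N, a (n + 1) - P N| + |P N - g s| + |g s| := by
          exact add_le_add (abs_add_le _ _) le_rfl
      _ ≤ 2 * Ct + Ct + C₀ := by
          rw [abs_sub_comm (P N)]
          exact add_le_add (add_le_add (hhead.trans hhead2) htail) hgs
      _ = 3 * Ct + C₀ := by ring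
  -- combine with small N
  refine ⟨max (∑ k ∈ Finset.range N₀, |∑ n ∈ Finset.range k, a (n + 1)|) (3 * Ct + C₀), ?_⟩
  intro N
  rcases le_or_gt N₀ N with h | h
  · exact (main N h).trans (le_max_right _ _)
  · refine le_trans ?_ (le_max_left _ _)
    exact Finset.single_le_sum (f := fun k => |∑ n ∈ Finset.range k, a (n + 1)|)
      (fun i _ => abs_nonneg _) (Finset.mem_range.mpr h)
end

section
/- Let f : ℝ → ℝ be continuous and 2π-periodic. Define for 0 < r < 1 the Poisson integral P_r(f)(x) = (1−r²)/(2π) · ∫_{−π}^{π} f(x−t)/(1 − 2r cos t + r²) dt. Then P_r(f) → f uniformly on ℝ as r → 1⁻. -/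
open Filter Real Topology intervalIntegral

lemma denom_cont (r : ℝ) : Continuous fun t : ℝ => 1 - 2 * r * Real.cos t + r ^ 2 :=
  (continuous_const.sub (continuous_const.mul Real.continuous_cos)).add continuous_const

lemma denom_pos {r : ℝ} (hr0 : 0 < r) (hr1 : r < 1) (t : ℝ) :
    0 < 1 - 2 * r * Real.cos t + r ^ 2 := by
  nlinarith [Real.cos_le_one t, mul_pos (sub_pos.2 hr1) (sub_pos.2 hr1)]

lemma hasDerivAt_F {r : ℝ} (hr0 : 0 < r) (hr1 : r < 1) {t : ℝ}
    (ht : t ∈ Set.Ioo (-Real.pi) Real.pi) :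
    HasDerivAt (fun u => 2 * Real.arctan ((1 + r) / (1 - r) * Real.tan (u / 2)))
      ((1 - r ^ 2) / (1 - 2 * r * Real.cos t + r ^ 2)) t := by
  have hc : 0 < Real.cos (t / 2) := by
    apply Real.cos_pos_of_mem_Ioo
    constructor <;> [linarith [ht.1]; linarith [ht.2]]
  have h1 : HasDerivAt (fun u : ℝ => u / 2) (1 / 2) t := (hasDerivAt_id t).div_const 2
  have h2 : HasDerivAt Real.tan (1 / Real.cos (t / 2) ^ 2) (t / 2) :=
    Real.hasDerivAt_tan hc.ne'
  have h3 : HasDerivAt (fun u => Real.tan (u / 2)) (1 / Real.cos (t / 2) ^ 2 * (1 / 2)) t :=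
    by have := h2.comp t h1; exact this
  have h4 := h3.const_mul ((1 + r) / (1 - r))
  have h5 := Real.hasDerivAt_arctan ((1 + r) / (1 - r) * Real.tan (t / 2))
  have h6 := (h5.comp t h4).const_mul 2
  refine h6.congr_deriv (Eq.symm ?_)
  have hr1' : (1 : ℝ) - r ≠ 0 := by linarith
  have hD : 1 - 2 * r * Real.cos t + r ^ 2 ≠ 0 := (denom_pos hr0 hr1 t).ne'
  have hct : Real.cos t = 2 * Real.cos (t / 2) ^ 2 - 1 := by
    have h := Real.cos_sq (t / 2)
    rw [show 2 * (t / 2) = t by ring] at h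
    linarith
  have hst : Real.sin (t / 2) ^ 2 = 1 - Real.cos (t / 2) ^ 2 := by
    nlinarith [Real.sin_sq_add_cos_sq (t / 2)]
  have key : 1 + ((1 + r) / (1 - r) * Real.tan (t / 2)) ^ 2
      = (1 - 2 * r * Real.cos t + r ^ 2) / ((1 - r) ^ 2 * Real.cos (t / 2) ^ 2) := by
    rw [Real.tan_eq_sin_div_cos, hct]
    field_simp
    linear_combination (1 + r) ^ 2 * hst
  rw [key]
  rw [div_div_eq_mul_div, one_mul]
  field_simp
  ring_nf

lemma poisson_kernel_cont {r : ℝ} (hr0 : 0 < r) (hr1 : r < 1) :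
    Continuous fun t => (1 - r ^ 2) / (1 - 2 * r * Real.cos t + r ^ 2) :=
  continuous_const.div (denom_cont r) fun t => (denom_pos hr0 hr1 t).ne'

lemma poisson_kernel_integral {r : ℝ} (hr0 : 0 < r) (hr1 : r < 1) :
    ∫ t in (-Real.pi)..Real.pi, (1 - r ^ 2) / (1 - 2 * r * Real.cos t + r ^ 2)
      = 2 * Real.pi := by
  set g : ℝ → ℝ := fun t => (1 - r ^ 2) / (1 - 2 * r * Real.cos t + r ^ 2) with hg_def
  have hg : Continuous g := poisson_kernel_cont hr0 hr1
  set H : ℝ → ℝ := fun u => ∫ t in (0:ℝ)..u, g t with hH_def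
  have hH : Continuous H :=
    intervalIntegral.continuous_primitive (fun a b => hg.intervalIntegrable a b) 0
  have hsub : ∀ s : ℝ, H s - H (-s) = ∫ t in (-s)..s, g t := by
    intro s
    exact intervalIntegral.integral_interval_sub_left
      (hg.intervalIntegrable 0 s) (hg.intervalIntegrable 0 (-s))
  have h1 : Tendsto (fun s => H s - H (-s)) (𝓝[<] Real.pi) (𝓝 (H Real.pi - H (-Real.pi))) := by
    apply Tendsto.sub
    · exact (hH.tendsto _).mono_left nhdsWithin_le_nhds
    · exact ((hH.tendsto _).comp (tendsto_neg _)).mono_left nhdsWithin_le_nhds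
  have h2 : ∀ s ∈ Set.Ioo (0:ℝ) Real.pi,
      H s - H (-s) = 4 * Real.arctan ((1 + r) / (1 - r) * Real.tan (s / 2)) := by
    intro s hs
    rw [hsub s]
    have hF : ∀ t ∈ Set.uIcc (-s) s,
        HasDerivAt (fun u => 2 * Real.arctan ((1 + r) / (1 - r) * Real.tan (u / 2))) (g t) t := by
      intro t ht
      apply hasDerivAt_F hr0 hr1
      rw [Set.uIcc_of_le (by linarith [hs.1] : -s ≤ s)] at ht
      exact ⟨by linarith [ht.1, hs.2], by linarith [ht.2, hs.2]⟩
    rw [intervalIntegral.integral_eq_sub_of_hasDerivAt hF (hg.intervalIntegrable _ _)]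
    rw [show (-s) / 2 = -(s / 2) by ring, Real.tan_neg, mul_neg, Real.arctan_neg]
    ring
  have h3 : Tendsto (fun s => 4 * Real.arctan ((1 + r) / (1 - r) * Real.tan (s / 2)))
      (𝓝[<] Real.pi) (𝓝 (2 * Real.pi)) := by
    have ha : 0 < (1 + r) / (1 - r) := by
      apply div_pos <;> linarith
    have hhalf : Tendsto (fun s : ℝ => s / 2) (𝓝[<] Real.pi) (𝓝[<] (Real.pi / 2)) := by
      apply tendsto_nhdsWithin_of_tendsto_nhds_of_eventually_within
      · exact ((continuous_id.div_const 2).tendsto _).mono_left nhdsWithin_le_nhds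
      · filter_upwards [self_mem_nhdsWithin] with s hs
        have : s < Real.pi := hs
        simp only [Set.mem_Iio]
        linarith
    have htan : Tendsto (fun s : ℝ => Real.tan (s / 2)) (𝓝[<] Real.pi) atTop :=
      Real.tendsto_tan_pi_div_two.comp hhalf
    have hmul : Tendsto (fun s : ℝ => (1 + r) / (1 - r) * Real.tan (s / 2)) (𝓝[<] Real.pi)
        atTop := htan.const_mul_atTop ha
    have harc : Tendsto (fun s : ℝ => Real.arctan ((1 + r) / (1 - r) * Real.tan (s / 2)))
        (𝓝[<] Real.pi) (𝓝 (Real.pi / 2)) :=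
      (Real.tendsto_arctan_atTop.comp hmul).mono_right nhdsWithin_le_nhds
    have h4 := harc.const_mul (4 : ℝ)
    rw [show (2 : ℝ) * Real.pi = 4 * (Real.pi / 2) by ring]
    exact h4
  have huniq : H Real.pi - H (-Real.pi) = 2 * Real.pi := by
    have : Tendsto (fun s => H s - H (-s)) (𝓝[<] Real.pi) (𝓝 (2 * Real.pi)) := by
      apply h3.congr'
      filter_upwards [Ioo_mem_nhdsLT_of_mem (⟨Real.pi_pos, le_refl _⟩ :
        Real.pi ∈ Set.Ioc (0:ℝ) Real.pi)] with s hs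
      exact (h2 s hs).symm
    exact tendsto_nhds_unique h1 this
  rw [← hsub Real.pi]
  exact huniq

lemma periodic_uniformContinuous {f : ℝ → ℝ} (hf : Continuous f)
    (hperiodic : Function.Periodic f (2 * Real.pi)) : UniformContinuous f := by
  rw [Metric.uniformContinuous_iff]
  intro ε hε
  have hK : IsCompact (Set.Icc (-1 : ℝ) (2 * Real.pi + 1)) := isCompact_Icc
  have hUCon := hK.uniformContinuousOn_of_continuous hf.continuousOn
  rw [Metric.uniformContinuousOn_iff] at hUCon
  obtain ⟨δ, hδpos, hδ⟩ := hUCon ε hε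
  refine ⟨min δ 1, lt_min hδpos one_pos, fun {x y} hxy => ?_⟩
  have h2π : (0:ℝ) < 2 * Real.pi := by positivity
  set k : ℤ := ⌊x / (2 * Real.pi)⌋ with hk
  set x' := x - k * (2 * Real.pi) with hx'
  set y' := y - k * (2 * Real.pi) with hy'
  have hx'mem : x' ∈ Set.Icc (-1 : ℝ) (2 * Real.pi + 1) := by
    constructor
    · linarith [Int.sub_floor_div_mul_nonneg x h2π]
    · linarith [Int.sub_floor_div_mul_lt x h2π]
  have hxy' : dist x' y' < min δ 1 := by
    simpa [hx', hy', Real.dist_eq, sub_sub_sub_cancel_right] using hxy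
  have hy'mem : y' ∈ Set.Icc (-1 : ℝ) (2 * Real.pi + 1) := by
    have h1 : |x' - y'| < 1 := lt_of_lt_of_le (by simpa [Real.dist_eq] using hxy') (min_le_right _ _)
    have h2 := abs_lt.1 h1
    constructor
    · linarith [Int.sub_floor_div_mul_nonneg x h2π, h2.2]
    · linarith [Int.sub_floor_div_mul_lt x h2π, h2.1]
  have hfx : f x' = f x := by
    rw [hx']
    exact hperiodic.sub_int_mul_eq k
  have hfy : f y' = f y := by
    rw [hy']
    exact hperiodic.sub_int_mul_eq k
  have := hδ x' hx'mem y' hy'mem (lt_of_lt_of_le hxy' (min_le_left _ _))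
  rwa [hfx, hfy] at this

set_option maxHeartbeats 1000000 in
/-- Abel–Poisson summability: the Poisson integrals of a continuous `2π`-periodic
function converge to it uniformly as `r → 1⁻`. -/
theorem poisson_integral_tendstoUniformly
    (f : ℝ → ℝ) (hf : Continuous f) (hper : ∀ x, f (x + 2 * Real.pi) = f x) :
    TendstoUniformly
      (fun r : ℝ => fun x : ℝ =>
        (1 - r ^ 2) / (2 * Real.pi) *
          ∫ t in (-Real.pi)..Real.pi,
            f (x - t) / (1 - 2 * r * Real.cos t + r ^ 2))
      f (𝓝[<] (1 : ℝ)) := by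
  have hperiodic : Function.Periodic f (2 * Real.pi) := hper
  have hπ : (0:ℝ) < Real.pi := Real.pi_pos
  obtain ⟨M, hM0, hM⟩ : ∃ M, 0 ≤ M ∧ ∀ x, |f x| ≤ M := by
    obtain ⟨C, hC⟩ := isBounded_iff_forall_norm_le.1
      (hperiodic.isBounded_of_continuous (by positivity) hf)
    exact ⟨max C 0, le_max_right _ _, fun x =>
      le_trans (hC _ ⟨x, rfl⟩) (le_max_left _ _)⟩
  have hUC := periodic_uniformContinuous hf hperiodic
  rw [Metric.tendstoUniformly_iff]
  intro ε hε
  obtain ⟨δ₀, hδ₀, hδuc⟩ := Metric.uniformContinuous_iff.1 hUC (ε / 4) (by positivity)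
  set δ : ℝ := min (δ₀ / 2) 1 with hδdef
  have hδpos : 0 < δ := lt_min (by positivity) one_pos
  have hδ1 : δ ≤ 1 := min_le_right _ _
  have hδπ : δ < Real.pi := lt_of_le_of_lt hδ1 (by linarith [Real.pi_gt_three])
  have hcosδ : Real.cos δ < 1 := by
    have := Real.strictAntiOn_cos ⟨le_refl (0:ℝ), hπ.le⟩ ⟨hδpos.le, hδπ.le⟩ hδpos
    simpa using this
  have hcd : 0 < 1 - Real.cos δ := by linarith
  have hE : Tendsto (fun r : ℝ => (1 - r ^ 2) * (2 * M / (1 - Real.cos δ)))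
      (𝓝[<] (1:ℝ)) (𝓝 0) := by
    have : Tendsto (fun r : ℝ => (1 - r ^ 2) * (2 * M / (1 - Real.cos δ))) (𝓝 (1:ℝ))
        (𝓝 ((1 - 1 ^ 2) * (2 * M / (1 - Real.cos δ)))) := by
      apply Tendsto.mul_const
      exact (continuous_const.sub (continuous_pow 2)).tendsto 1
    simpa using this.mono_left nhdsWithin_le_nhds
  have hEev : ∀ᶠ r in 𝓝[<] (1:ℝ), (1 - r ^ 2) * (2 * M / (1 - Real.cos δ)) < ε / 2 := by
    have := hE.eventually (eventually_lt_nhds (show (0:ℝ) < ε / 2 by positivity))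
    simpa using this
  filter_upwards [hEev, Ioo_mem_nhdsLT_of_mem
    (⟨by norm_num, le_refl (1:ℝ)⟩ : (1:ℝ) ∈ Set.Ioc (1/2 : ℝ) 1)] with r hEr hrmem
  intro x
  obtain ⟨hrhalf, hr1⟩ := hrmem
  have hr0 : 0 < r := lt_trans (by norm_num) hrhalf
  have hr2 : 0 < 1 - r ^ 2 := by nlinarith
  have hDpos : ∀ t, 0 < 1 - 2 * r * Real.cos t + r ^ 2 := denom_pos hr0 hr1
  have hPK := poisson_kernel_integral hr0 hr1
  have hcont1 : Continuous fun t => f (x - t) / (1 - 2 * r * Real.cos t + r ^ 2) :=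
    (hf.comp (continuous_const.sub continuous_id)).div (denom_cont r) fun t => (hDpos t).ne'
  have hcont2 : Continuous fun t => f x / (1 - 2 * r * Real.cos t + r ^ 2) :=
    continuous_const.div (denom_cont r) fun t => (hDpos t).ne'
  have hcontk : Continuous fun t => (1 - r ^ 2) / (1 - 2 * r * Real.cos t + r ^ 2) :=
    poisson_kernel_cont hr0 hr1
  have hconth : Continuous fun t => (f (x - t) - f x) / (1 - 2 * r * Real.cos t + r ^ 2) :=
    ((hf.comp (continuous_const.sub continuous_id)).sub continuous_const).div
      (by continuity) fun t => (hDpos t).ne'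
  have e2 : (∫ t in (-Real.pi)..Real.pi, f x / (1 - 2 * r * Real.cos t + r ^ 2))
      = f x * (2 * Real.pi) / (1 - r ^ 2) := by
    have h2 : ∀ t : ℝ, f x / (1 - 2 * r * Real.cos t + r ^ 2)
        = f x / (1 - r ^ 2) * ((1 - r ^ 2) / (1 - 2 * r * Real.cos t + r ^ 2)) := by
      intro t
      have hne : (1 - r ^ 2) ≠ 0 := hr2.ne'
      have hDne : (1 - 2 * r * Real.cos t + r ^ 2) ≠ 0 := (hDpos t).ne'
      field_simp
    simp_rw [h2]
    rw [intervalIntegral.integral_const_mul, hPK]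
    ring
  have e1 : (∫ t in (-Real.pi)..Real.pi,
        (f (x - t) - f x) / (1 - 2 * r * Real.cos t + r ^ 2))
      = (∫ t in (-Real.pi)..Real.pi, f (x - t) / (1 - 2 * r * Real.cos t + r ^ 2))
        - ∫ t in (-Real.pi)..Real.pi, f x / (1 - 2 * r * Real.cos t + r ^ 2) := by
    rw [← intervalIntegral.integral_sub (hcont1.intervalIntegrable _ _)
      (hcont2.intervalIntegrable _ _)]
    congr 1
    ext t
    ring
  have hdiff : (1 - r ^ 2) / (2 * Real.pi) *
        (∫ t in (-Real.pi)..Real.pi, f (x - t) / (1 - 2 * r * Real.cos t + r ^ 2)) - f x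
      = (1 - r ^ 2) / (2 * Real.pi) *
        ∫ t in (-Real.pi)..Real.pi, (f (x - t) - f x) / (1 - 2 * r * Real.cos t + r ^ 2) := by
    rw [e1, e2]
    field_simp
  set bound : ℝ → ℝ := fun t =>
    (ε / 4) * (1 / (1 - r ^ 2)) * ((1 - r ^ 2) / (1 - 2 * r * Real.cos t + r ^ 2))
      + 2 * M / (1 - Real.cos δ) with hbdef
  have hboundint : IntervalIntegrable bound MeasureTheory.volume (-Real.pi) Real.pi :=
    ((continuous_const.mul hcontk).add continuous_const).intervalIntegrable _ _
  have hptwise : ∀ t ∈ Set.uIoc (-Real.pi) Real.pi,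
      ‖(f (x - t) - f x) / (1 - 2 * r * Real.cos t + r ^ 2)‖ ≤ bound t := by
    intro t ht
    rw [Set.uIoc_of_le (by linarith : -Real.pi ≤ Real.pi)] at ht
    have htπ : |t| ≤ Real.pi := by
      rw [abs_le]; exact ⟨ht.1.le, ht.2⟩
    have hb1 : 0 ≤ (ε / 4) * (1 / (1 - r ^ 2)) *
        ((1 - r ^ 2) / (1 - 2 * r * Real.cos t + r ^ 2)) := by
      have := hDpos t
      positivity
    have hb2 : (0:ℝ) ≤ 2 * M / (1 - Real.cos δ) := by positivity
    rw [Real.norm_eq_abs, abs_div, abs_of_pos (hDpos t), hbdef]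
    rcases le_or_gt |t| δ with hcase | hcase
    · have hft : |f (x - t) - f x| ≤ ε / 4 := by
        have hd : dist (x - t) x < δ₀ := by
          rw [Real.dist_eq, show x - t - x = -t by ring, abs_neg]
          calc |t| ≤ δ := hcase
            _ ≤ δ₀ / 2 := min_le_left _ _
            _ < δ₀ := by linarith
        have := hδuc hd
        rw [Real.dist_eq] at this
        exact this.le
      calc |f (x - t) - f x| / (1 - 2 * r * Real.cos t + r ^ 2)
          ≤ (ε / 4) / (1 - 2 * r * Real.cos t + r ^ 2) :=
            (div_le_div_iff_of_pos_right (hDpos t)).2 hft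
        _ = (ε / 4) * (1 / (1 - r ^ 2)) *
            ((1 - r ^ 2) / (1 - 2 * r * Real.cos t + r ^ 2)) := by
            have hne : (1 - r ^ 2) ≠ 0 := hr2.ne'
            have hDne : (1 - 2 * r * Real.cos t + r ^ 2) ≠ 0 := (hDpos t).ne'
            field_simp
        _ ≤ _ := le_add_of_nonneg_right hb2
    · have hcos : Real.cos t ≤ Real.cos δ := by
        have h1 : Real.cos |t| ≤ Real.cos δ :=
          Real.cos_le_cos_of_nonneg_of_le_pi hδpos.le htπ hcase.le
        rwa [Real.cos_abs] at h1
      have hDlb : 1 - Real.cos δ ≤ 1 - 2 * r * Real.cos t + r ^ 2 := by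
        nlinarith [sq_nonneg (1 - r), hcos, hcd]
      have hnum : |f (x - t) - f x| ≤ 2 * M := by
        calc |f (x - t) - f x| ≤ |f (x - t)| + |f x| := abs_sub _ _
          _ ≤ M + M := add_le_add (hM _) (hM _)
          _ = 2 * M := by ring
      calc |f (x - t) - f x| / (1 - 2 * r * Real.cos t + r ^ 2)
          ≤ 2 * M / (1 - Real.cos δ) :=
            div_le_div₀ (by positivity) hnum hcd hDlb
        _ ≤ _ := le_add_of_nonneg_left hb1
  have hnormle : |∫ t in (-Real.pi)..Real.pi,
      (f (x - t) - f x) / (1 - 2 * r * Real.cos t + r ^ 2)|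
      ≤ |∫ t in (-Real.pi)..Real.pi, bound t| := by
    have := intervalIntegral.norm_integral_le_of_norm_le
      (f := fun t => (f (x - t) - f x) / (1 - 2 * r * Real.cos t + r ^ 2))
      (by linarith) (MeasureTheory.ae_of_all _ (fun t ht =>
        hptwise t (by rw [Set.uIoc_of_le (by linarith)]; exact ht))) hboundint
    rw [Real.norm_eq_abs] at this
    exact this.trans (le_abs_self _)
  have hbint : (∫ t in (-Real.pi)..Real.pi, bound t)
      = ε / 4 * (1 / (1 - r ^ 2)) * (2 * Real.pi)
        + 2 * M / (1 - Real.cos δ) * (2 * Real.pi) := by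
    rw [hbdef]
    beta_reduce
    rw [intervalIntegral.integral_add (f := fun t =>
      ε / 4 * (1 / (1 - r ^ 2)) * ((1 - r ^ 2) / (1 - 2 * r * Real.cos t + r ^ 2)))
      (g := fun _ => 2 * M / (1 - Real.cos δ)) ((continuous_const.mul hcontk).intervalIntegrable _ _)
      intervalIntegrable_const]
    rw [intervalIntegral.integral_const_mul, hPK, intervalIntegral.integral_const]
    simp only [smul_eq_mul]
    ring
  have hbnn : (0:ℝ) ≤ ∫ t in (-Real.pi)..Real.pi, bound t := by
    rw [hbint]
    positivity
  have hle : |(1 - r ^ 2) / (2 * Real.pi) *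
        (∫ t in (-Real.pi)..Real.pi, f (x - t) / (1 - 2 * r * Real.cos t + r ^ 2)) - f x|
      ≤ ε / 4 + (1 - r ^ 2) * (2 * M / (1 - Real.cos δ)) := by
    rw [hdiff, abs_mul, abs_of_pos (show (0:ℝ) < (1 - r ^ 2) / (2 * Real.pi) by positivity)]
    calc (1 - r ^ 2) / (2 * Real.pi) * |∫ t in (-Real.pi)..Real.pi,
          (f (x - t) - f x) / (1 - 2 * r * Real.cos t + r ^ 2)|
        ≤ (1 - r ^ 2) / (2 * Real.pi) * |∫ t in (-Real.pi)..Real.pi, bound t| :=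
          mul_le_mul_of_nonneg_left hnormle (by positivity)
      _ = (1 - r ^ 2) / (2 * Real.pi) *
            (ε / 4 * (1 / (1 - r ^ 2)) * (2 * Real.pi)
              + 2 * M / (1 - Real.cos δ) * (2 * Real.pi)) := by
          rw [abs_of_nonneg hbnn, hbint]
      _ = ε / 4 + (1 - r ^ 2) * (2 * M / (1 - Real.cos δ)) := by
          field_simp
  rw [Real.dist_eq, abs_sub_comm]
  calc |(1 - r ^ 2) / (2 * Real.pi) *
        (∫ t in (-Real.pi)..Real.pi, f (x - t) / (1 - 2 * r * Real.cos t + r ^ 2)) - f x|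
      ≤ ε / 4 + (1 - r ^ 2) * (2 * M / (1 - Real.cos δ)) := hle
    _ < ε / 4 + ε / 2 := by linarith
    _ < ε := by linarith
end

section
/- Let (L̃_n) be a sequence of positive linear operators from the space of continuous 2π-periodic real functions to itself such that ‖L̃_n(f_i) − f_i‖_∞ → 0 for f_0 = 1, f_1 = cos, f_2 = sin. Then ‖L̃_n(f) − f‖_∞ → 0 for every continuous 2π-periodic f. -/
open Filter Real Topology

private lemma mul_le_abs_bound {a b A B : ℝ} (ha : |a| ≤ A) (hb : |b| ≤ B) : a * b ≤ A * B :=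
  (le_abs_self _).trans (by
    rw [abs_mul]
    exact mul_le_mul ha hb (abs_nonneg _) ((abs_nonneg a).trans ha))

/-- Korovkin's theorem for `2π`-periodic continuous real functions with test
system `{1, cos, sin}`. -/
theorem korovkin_periodic
    (L : ℕ → (ℝ → ℝ) → (ℝ → ℝ))
    (hmaps : ∀ n f, Continuous f → (∀ x, f (x + 2 * Real.pi) = f x) →
      Continuous (L n f) ∧ ∀ x, L n f (x + 2 * Real.pi) = L n f x)
    (hlin : ∀ n (c₁ c₂ : ℝ) (f g : ℝ → ℝ),
      Continuous f → (∀ x, f (x + 2 * Real.pi) = f x) →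
      Continuous g → (∀ x, g (x + 2 * Real.pi) = g x) →
      ∀ x, L n (fun y => c₁ * f y + c₂ * g y) x = c₁ * L n f x + c₂ * L n g x)
    (hpos : ∀ n (f g : ℝ → ℝ),
      Continuous f → (∀ x, f (x + 2 * Real.pi) = f x) →
      Continuous g → (∀ x, g (x + 2 * Real.pi) = g x) →
      (∀ x, f x ≤ g x) → ∀ x, L n f x ≤ L n g x)
    (h0 : TendstoUniformly (fun n => L n (fun _ => (1 : ℝ))) (fun _ => (1 : ℝ)) atTop)
    (h1 : TendstoUniformly (fun n => L n Real.cos) Real.cos atTop)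
    (h2 : TendstoUniformly (fun n => L n Real.sin) Real.sin atTop) :
    ∀ f : ℝ → ℝ, Continuous f → (∀ x, f (x + 2 * Real.pi) = f x) →
      TendstoUniformly (fun n => L n f) f atTop := by
  intro f hf hper
  have two_pi_pos : (0:ℝ) < 2 * Real.pi := by positivity
  have hperiodic : Function.Periodic f (2 * Real.pi) := hper
  -- basic continuity/periodicity facts
  have hcont1 : Continuous (fun _ : ℝ => (1:ℝ)) := continuous_const
  have hper1 : ∀ x : ℝ, (fun _ : ℝ => (1:ℝ)) (x + 2 * Real.pi) = (fun _ : ℝ => (1:ℝ)) x :=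
    fun _ => rfl
  have hccos : Continuous Real.cos := Real.continuous_cos
  have hpcos : ∀ x, Real.cos (x + 2 * Real.pi) = Real.cos x := Real.cos_add_two_pi
  have hcsin : Continuous Real.sin := Real.continuous_sin
  have hpsin : ∀ x, Real.sin (x + 2 * Real.pi) = Real.sin x := Real.sin_add_two_pi
  have hconttp : ∀ a b c : ℝ, Continuous (fun y => a + b * Real.cos y + c * Real.sin y) := by
    intro a b c; fun_prop
  have hpertp : ∀ a b c : ℝ, ∀ x,
      (fun y => a + b * Real.cos y + c * Real.sin y) (x + 2 * Real.pi)
        = (fun y => a + b * Real.cos y + c * Real.sin y) x := by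
    intro a b c x
    simp only [Real.cos_add_two_pi, Real.sin_add_two_pi]
  -- trigonometric polynomial expansion for L
  have htp : ∀ n (a b c : ℝ) (x : ℝ),
      L n (fun y => a + b * Real.cos y + c * Real.sin y) x
        = a * L n (fun _ => (1:ℝ)) x + b * L n Real.cos x + c * L n Real.sin x := by
    intro n a b c x
    have hcont2 : Continuous (fun y => b * Real.cos y + c * Real.sin y) := by fun_prop
    have hper2 : ∀ x, (fun y => b * Real.cos y + c * Real.sin y) (x + 2 * Real.pi)
        = (fun y => b * Real.cos y + c * Real.sin y) x := by
      intro x; simp only [Real.cos_add_two_pi, Real.sin_add_two_pi]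
    have e1 : (fun y => a + b * Real.cos y + c * Real.sin y)
        = (fun y => a * (fun _ : ℝ => (1:ℝ)) y
            + 1 * ((fun y => b * Real.cos y + c * Real.sin y) y)) := by
      funext y; simp only []; ring
    rw [e1, hlin n a 1 _ _ hcont1 hper1 hcont2 hper2 x,
      hlin n b c Real.cos Real.sin hccos hpcos hcsin hpsin x]
    ring
  -- boundedness of f
  obtain ⟨M, hM0, hMf⟩ : ∃ M : ℝ, 0 ≤ M ∧ ∀ x, |f x| ≤ M := by
    obtain ⟨C, hC⟩ :=
      (isCompact_Icc (a := (0:ℝ)) (b := 2 * Real.pi)).exists_bound_of_continuousOn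
        hf.continuousOn
    refine ⟨max C 0, le_max_right _ _, fun x => ?_⟩
    have hx : f (toIcoMod two_pi_pos 0 x) = f x :=
      hperiodic.sub_zsmul_eq (toIcoDiv two_pi_pos 0 x)
    have hmem := toIcoMod_mem_Ico' two_pi_pos x
    have : ‖f (toIcoMod two_pi_pos 0 x)‖ ≤ C :=
      hC _ ⟨hmem.1, hmem.2.le⟩
    rw [hx] at this
    exact le_trans this (le_max_left _ _)
  -- uniform continuity modulus
  have hUC : ∀ ε : ℝ, 0 < ε → ∃ δ : ℝ, 0 < δ ∧ δ ≤ Real.pi ∧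
      ∀ x s : ℝ, |s| ≤ δ → |f (x + s) - f x| ≤ ε := by
    intro ε hε
    have hKc : IsCompact (Set.Icc (-1 : ℝ) (2 * Real.pi + 1)) := isCompact_Icc
    have hucOn := hKc.uniformContinuousOn_of_continuous hf.continuousOn
    rw [Metric.uniformContinuousOn_iff] at hucOn
    obtain ⟨δ₀, hδ₀, hδ⟩ := hucOn ε hε
    refine ⟨min (δ₀ / 2) (min 1 Real.pi), by positivity, ?_, ?_⟩
    · exact le_trans (min_le_right _ _) (min_le_right _ _)
    · intro x s hs
      set x' := toIcoMod two_pi_pos 0 x with hx'def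
      have hx'mem := toIcoMod_mem_Ico' two_pi_pos x
      have hfx : f x' = f x := hperiodic.sub_zsmul_eq (toIcoDiv two_pi_pos 0 x)
      have hfxs : f (x' + s) = f (x + s) := by
        have hrw : x' + s = (x + s) - toIcoDiv two_pi_pos 0 x • (2 * Real.pi) := by
          have : x' = x - toIcoDiv two_pi_pos 0 x • (2 * Real.pi) := rfl
          rw [this]; ring
        rw [hrw]
        exact hperiodic.sub_zsmul_eq (toIcoDiv two_pi_pos 0 x)
      have hs1 : |s| ≤ 1 :=
        le_trans hs (le_trans (min_le_right _ _) (min_le_left _ _))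
      have habs := abs_le.mp hs1
      have hx'K : x' ∈ Set.Icc (-1 : ℝ) (2 * Real.pi + 1) :=
        ⟨by linarith [hx'mem.1], by linarith [hx'mem.2]⟩
      have hx'sK : x' + s ∈ Set.Icc (-1 : ℝ) (2 * Real.pi + 1) :=
        ⟨by linarith [hx'mem.1], by linarith [hx'mem.2]⟩
      have hdist : dist (x' + s) x' < δ₀ := by
        rw [Real.dist_eq]
        have : |x' + s - x'| = |s| := by ring_nf
        rw [this]
        have : |s| ≤ δ₀ / 2 := le_trans hs (min_le_left _ _)
        linarith
      have := hδ (x' + s) hx'sK x' hx'K hdist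
      rw [Real.dist_eq, hfxs, hfx] at this
      exact this.le
  -- main estimate
  rw [Metric.tendstoUniformly_iff]
  intro ε' hε'
  set ε := ε' / 3 with hεdef
  have hε : 0 < ε := by positivity
  obtain ⟨δ, hδpos, hδpi, hδ⟩ := hUC ε hε
  -- the "far" comparison constant
  have hcosδ : Real.cos δ < 1 := by
    have := Real.cos_lt_cos_of_nonneg_of_le_pi le_rfl hδpi hδpos
    simpa using this
  set K := 2 * M / (1 - Real.cos δ) with hKdef
  have hK0 : 0 ≤ K := by
    apply div_nonneg (by linarith) (by linarith)
  have hKeq : K * (1 - Real.cos δ) = 2 * M := by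
    have hne : (1 - Real.cos δ) ≠ 0 := by linarith
    rw [hKdef]
    field_simp
  -- key pointwise inequality
  have hA : ∀ x y : ℝ, Real.cos δ ≤ Real.cos (y - x) → |f y - f x| ≤ ε := by
    intro x y h
    set s := y - x with hsdef
    set s' := toIocMod two_pi_pos (-Real.pi) s with hs'def
    have hs'mem := toIocMod_mem_Ioc two_pi_pos (-Real.pi) s
    have hs'pi : |s'| ≤ Real.pi := by
      rw [abs_le]
      constructor
      · linarith [hs'mem.1]
      · have := hs'mem.2; linarith
    have hcs' : Real.cos s' = Real.cos s := by
      have : s' = s - toIocDiv two_pi_pos (-Real.pi) s • (2 * Real.pi) := rfl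
      rw [this]
      exact Real.cos_periodic.sub_zsmul_eq _
    have hs'δ : |s'| ≤ δ := by
      by_contra hcon
      push_neg at hcon
      have := Real.cos_lt_cos_of_nonneg_of_le_pi hδpos.le hs'pi hcon
      rw [Real.cos_abs, hcs'] at this
      linarith
    have hfy : f (x + s') = f (x + s) := by
      have hrw : x + s' = (x + s) - toIocDiv two_pi_pos (-Real.pi) s • (2 * Real.pi) := by
        have : s' = s - toIocDiv two_pi_pos (-Real.pi) s • (2 * Real.pi) := rfl
        rw [this]; ring
      rw [hrw]
      exact hperiodic.sub_zsmul_eq _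
    have hxy : y = x + s := by rw [hsdef]; ring
    have := hδ x s' hs'δ
    rw [hfy, ← hxy] at this
    exact this
  have hkey : ∀ x y : ℝ, |f y - f x| ≤ ε + K * (1 - Real.cos (y - x)) := by
    intro x y
    by_cases h : Real.cos δ ≤ Real.cos (y - x)
    · have h1 := hA x y h
      have h2 : Real.cos (y - x) ≤ 1 := Real.cos_le_one _
      nlinarith
    · push_neg at h
      have h1 : |f y - f x| ≤ 2 * M := by
        calc |f y - f x| ≤ |f y| + |f x| := abs_sub _ _
          _ ≤ 2 * M := by linarith [hMf y, hMf x]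
      have h2 : K * (1 - Real.cos δ) ≤ K * (1 - Real.cos (y - x)) := by
        apply mul_le_mul_of_nonneg_left (by linarith) hK0
      linarith [hKeq ▸ h2]
  -- pick η
  set η := ε / (M + ε + 3 * K + 1) with hηdef
  have hηpos : 0 < η := by positivity
  have hηeq : η * (M + ε + 3 * K + 1) = ε := by
    rw [hηdef]; field_simp
  -- eventual closeness of the test functions
  rw [Metric.tendstoUniformly_iff] at h0 h1 h2
  filter_upwards [h0 η hηpos, h1 η hηpos, h2 η hηpos] with n hn0 hn1 hn2
  intro x₀
  -- abbreviations
  set u := L n (fun _ => (1:ℝ)) x₀ with hudef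
  set cc := L n Real.cos x₀ with hcdef
  set ss := L n Real.sin x₀ with hsdef
  have hAu : |u - 1| ≤ η := by
    have := hn0 x₀
    rw [Real.dist_eq] at this
    rw [abs_sub_comm]; exact this.le
  have hBc : |cc - Real.cos x₀| ≤ η := by
    have := hn1 x₀
    rw [Real.dist_eq] at this
    rw [abs_sub_comm]; exact this.le
  have hCs : |ss - Real.sin x₀| ≤ η := by
    have := hn2 x₀
    rw [Real.dist_eq] at this
    rw [abs_sub_comm]; exact this.le
  -- upper comparison
  have hfleQ : ∀ y, f y ≤ (f x₀ + ε + K) + (-(K * Real.cos x₀)) * Real.cos y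
      + (-(K * Real.sin x₀)) * Real.sin y := by
    intro y
    have h := (abs_le.mp (hkey x₀ y)).2
    rw [Real.cos_sub] at h
    linarith [h]
  have hPlef : ∀ y, (f x₀ - ε - K) + (K * Real.cos x₀) * Real.cos y
      + (K * Real.sin x₀) * Real.sin y ≤ f y := by
    intro y
    have h := (abs_le.mp (hkey x₀ y)).1
    rw [Real.cos_sub] at h
    linarith [h]
  have hQ : L n f x₀ ≤ (f x₀ + ε + K) * u + (-(K * Real.cos x₀)) * cc
      + (-(K * Real.sin x₀)) * ss := by
    have := hpos n f (fun y => (f x₀ + ε + K) + (-(K * Real.cos x₀)) * Real.cos y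
        + (-(K * Real.sin x₀)) * Real.sin y) hf hper (hconttp _ _ _) (hpertp _ _ _) hfleQ x₀
    rwa [htp n _ _ _ x₀] at this
  have hP : (f x₀ - ε - K) * u + (K * Real.cos x₀) * cc
      + (K * Real.sin x₀) * ss ≤ L n f x₀ := by
    have := hpos n (fun y => (f x₀ - ε - K) + (K * Real.cos x₀) * Real.cos y
        + (K * Real.sin x₀) * Real.sin y) f (hconttp _ _ _) (hpertp _ _ _) hf hper hPlef x₀
    rwa [htp n _ _ _ x₀] at this
  -- product bounds
  have hfx : |f x₀| ≤ M := hMf x₀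
  have habsQ : |f x₀ + ε + K| ≤ M + ε + K := by
    have := abs_le.mp hfx
    rw [abs_le]; constructor <;> linarith
  have habsP : |-(f x₀ - ε - K)| ≤ M + ε + K := by
    have := abs_le.mp hfx
    rw [abs_le]; constructor <;> linarith
  have habscos : |-(K * Real.cos x₀)| ≤ K := by
    rw [abs_neg, abs_mul, abs_of_nonneg hK0]
    calc K * |Real.cos x₀| ≤ K * 1 :=
          mul_le_mul_of_nonneg_left (Real.abs_cos_le_one _) hK0
      _ = K := mul_one K
  have habssin : |-(K * Real.sin x₀)| ≤ K := by
    rw [abs_neg, abs_mul, abs_of_nonneg hK0]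
    calc K * |Real.sin x₀| ≤ K * 1 :=
          mul_le_mul_of_nonneg_left (Real.abs_sin_le_one _) hK0
      _ = K := mul_one K
  have habscos' : |K * Real.cos x₀| ≤ K := by rwa [← abs_neg]
  have habssin' : |K * Real.sin x₀| ≤ K := by rwa [← abs_neg]
  have e1 : (f x₀ + ε + K) * (u - 1) ≤ (M + ε + K) * η := mul_le_abs_bound habsQ hAu
  have e2 : (-(K * Real.cos x₀)) * (cc - Real.cos x₀) ≤ K * η := mul_le_abs_bound habscos hBc
  have e3 : (-(K * Real.sin x₀)) * (ss - Real.sin x₀) ≤ K * η := mul_le_abs_bound habssin hCs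
  have e4 : (-(f x₀ - ε - K)) * (u - 1) ≤ (M + ε + K) * η := mul_le_abs_bound habsP hAu
  have e6 : (K * Real.cos x₀) * (cc - Real.cos x₀) ≤ K * η := mul_le_abs_bound habscos' hBc
  have e7 : (K * Real.sin x₀) * (ss - Real.sin x₀) ≤ K * η := mul_le_abs_bound habssin' hCs
  have pyth : Real.sin x₀ ^ 2 + Real.cos x₀ ^ 2 = 1 := Real.sin_sq_add_cos_sq x₀
  have hpythK : K * (Real.sin x₀ ^ 2 + Real.cos x₀ ^ 2) = K * 1 := by rw [pyth]
  rw [Real.dist_eq, abs_sub_lt_iff]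
  constructor
  · -- f x₀ - L n f x₀ < ε'
    linarith [hP, e4, e6, e7, hpythK, hηeq, hηpos, hε]
  · -- L n f x₀ - f x₀ < ε'
    linarith [hQ, e1, e2, e3, hpythK, hηeq, hηpos, hε]
end

section
/- Define u_n : ℝ → [0,1] by u_n(t) = (n+1)²(t + (−1)^{n+1}) for (−1)^n ≤ t ≤ (−1)^n + (n+1)^{-2}, u_n(t) = 2 − (n+1)²(t + (−1)^{n+1}) for (−1)^n + (n+1)^{-2} ≤ t ≤ (−1)^n + 2(n+1)^{-2}, and 0 otherwise. Then for each α ∈ [0,1], the α-level endpoints are u_n^-(α) = (−1)^n + α(n+1)^{-2} and u_n^+(α) = (−1)^n + (2−α)(n+1)^{-2}, and the series ∑_{n=0}^∞ u_n^-(α) e^{-s ln(n+1)} converges for every s > 0 with limit 1/2 + α·π²/6 as s → 0⁺, while ∑_{n=0}^∞ u_n^+(α) e^{-s ln(n+1)} converges with limit 1/2 + (2−α)·π²/6. -/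
open Filter Real Topology Finset

/-- The membership function of the triangular fuzzy number `u_n`. -/
noncomputable def uFun (n : ℕ) (t : ℝ) : ℝ :=
  if (-1 : ℝ) ^ n ≤ t ∧ t ≤ (-1 : ℝ) ^ n + 1 / (n + 1 : ℝ) ^ 2 then
    (n + 1 : ℝ) ^ 2 * (t + (-1 : ℝ) ^ (n + 1))
  else if (-1 : ℝ) ^ n + 1 / (n + 1 : ℝ) ^ 2 ≤ t ∧
      t ≤ (-1 : ℝ) ^ n + 2 / (n + 1 : ℝ) ^ 2 then
    2 - (n + 1 : ℝ) ^ 2 * (t + (-1 : ℝ) ^ (n + 1))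
  else 0

/-- The `α`-level set of `u_n` (closure of the support when `α = 0`). -/
noncomputable def uLevel (n : ℕ) (α : ℝ) : Set ℝ :=
  if α = 0 then closure {t : ℝ | 0 < uFun n t} else {t : ℝ | α ≤ uFun n t}

/-! ### Auxiliary lemmas: the exponential weights -/

noncomputable def bb (s : ℝ) (n : ℕ) : ℝ := Real.exp (-s * Real.log ((n : ℝ) + 1))

lemma bb_pos (s : ℝ) (n : ℕ) : 0 < bb s n := Real.exp_pos _

lemma bb_le_one {s : ℝ} (hs : 0 ≤ s) (n : ℕ) : bb s n ≤ 1 := by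
  rw [bb, Real.exp_le_one_iff]
  have h1 : 0 ≤ Real.log ((n : ℝ) + 1) := Real.log_nonneg (by norm_num)
  nlinarith

lemma bb_zero {s : ℝ} : bb s 0 = 1 := by simp [bb]

lemma bb_antitone {s : ℝ} (hs : 0 < s) : Antitone (bb s) := by
  intro m n hmn
  apply Real.exp_le_exp.2
  have : Real.log ((m : ℝ) + 1) ≤ Real.log ((n : ℝ) + 1) := by
    apply Real.log_le_log (by positivity)
    have := (Nat.cast_le (α := ℝ)).2 hmn
    linarith
  nlinarith

lemma bb_tendsto (s : ℝ) (hs : 0 < s) : Tendsto (bb s) atTop (𝓝 0) := by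
  apply Real.tendsto_exp_atBot.comp
  have h1 : Tendsto (fun n : ℕ => Real.log ((n : ℝ) + 1)) atTop atTop :=
    Real.tendsto_log_atTop.comp (tendsto_atTop_add_const_right _ 1 tendsto_natCast_atTop_atTop)
  simpa using h1.const_mul_atTop_of_neg (neg_neg_iff_pos.2 hs)

lemma bb_diff_antitone {s : ℝ} (hs : 0 < s) : Antitone (fun n => bb s n - bb s (n + 1)) := by
  apply antitone_nat_of_succ_le
  intro n
  have key : 2 * bb s (n + 1) ≤ bb s n + bb s (n + 2) := by
    set A := -s * Real.log ((n : ℝ) + 1) with hA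
    set B := -s * Real.log (((n : ℕ) + 1 : ℕ) + 1) with hB
    set C := -s * Real.log (((n : ℕ) + 2 : ℕ) + 1) with hC
    have hBC : ((n : ℕ) + 1 : ℕ) + (1:ℝ) = (n : ℝ) + 2 := by push_cast; ring
    have hCC : ((n : ℕ) + 2 : ℕ) + (1:ℝ) = (n : ℝ) + 3 := by push_cast; ring
    have h2B : 2 * B ≤ A + C := by
      rw [hA, hB, hC, hBC, hCC]
      have hlog : Real.log ((n:ℝ)+1) + Real.log ((n:ℝ)+3) ≤ 2 * Real.log ((n:ℝ)+2) := by
        rw [← Real.log_mul (by positivity) (by positivity),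
          show (2:ℝ) * Real.log ((n:ℝ)+2) = Real.log (((n:ℝ)+2)^2) by
            rw [Real.log_pow]; push_cast; ring]
        apply Real.log_le_log (by positivity)
        nlinarith
      nlinarith
    have e1 : Real.exp (A/2) * Real.exp (A/2) = Real.exp A := by
      rw [← Real.exp_add]; ring_nf
    have e2 : Real.exp (C/2) * Real.exp (C/2) = Real.exp C := by
      rw [← Real.exp_add]; ring_nf
    have e3 : Real.exp (A/2) * Real.exp (C/2) = Real.exp ((A+C)/2) := by
      rw [← Real.exp_add]; ring_nf
    have e4 : Real.exp B ≤ Real.exp ((A+C)/2) := Real.exp_le_exp.2 (by linarith)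
    show 2 * Real.exp B ≤ Real.exp A + Real.exp C
    nlinarith [Real.exp_pos (A/2), Real.exp_pos (C/2), sq_nonneg (Real.exp (A/2) - Real.exp (C/2))]
  have h1 : bb s (n + 1 + 1) = bb s (n + 2) := by norm_num
  rw [h1]; linarith

/-! ### The Basel sum -/

lemma basel' : HasSum (fun n : ℕ => (1 : ℝ) / ((n : ℝ) + 1) ^ 2) (π ^ 2 / 6) := by
  have h := hasSum_zeta_two
  rw [← hasSum_nat_add_iff' 1] at h
  simpa using h

/-! ### Alternating series with bounds -/

lemma alt_bounds {b : ℕ → ℝ} (hma : Antitone b) (h0 : Tendsto b atTop (𝓝 0)) :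
    ∃ l, Tendsto (fun N => ∑ n ∈ range N, (-1 : ℝ)^n * b n) atTop (𝓝 l) ∧ 0 ≤ l ∧ l ≤ b 0 := by
  obtain ⟨l, hl⟩ := hma.tendsto_alternating_series_of_tendsto_zero h0
  refine ⟨l, hl, ?_, ?_⟩
  · simpa using hma.alternating_series_le_tendsto hl 0
  · simpa using hma.tendsto_le_alternating_series hl 0

lemma eta_facts {s : ℝ} (hs : 0 < s) :
    ∃ l : ℝ, Tendsto (fun N => ∑ n ∈ range N, (-1:ℝ)^n * bb s n) atTop (𝓝 l) ∧
      1/2 ≤ l ∧ l ≤ 1/2 + (1 - bb s 1)/2 := by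
  obtain ⟨l, hl, -, -⟩ := alt_bounds (bb_antitone hs) (bb_tendsto s hs)
  obtain ⟨m, hm, hm0, hmle⟩ := alt_bounds (bb_diff_antitone hs)
      (by simpa using (bb_tendsto s hs).sub ((bb_tendsto s hs).comp (tendsto_add_atTop_nat 1)))
  have hid : ∀ N, ∑ n ∈ range N, (-1:ℝ)^n * (bb s n - bb s (n+1)) =
      (∑ n ∈ range N, (-1:ℝ)^n * bb s n) + (∑ n ∈ range (N+1), (-1:ℝ)^n * bb s n) - 1 := by
    intro N
    induction N with
    | zero => simp [bb_zero]
    | succ N ih =>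
      simp only [sum_range_succ, pow_succ] at ih ⊢
      rw [ih]; ring
  have h2 : Tendsto (fun N => (∑ n ∈ range N, (-1:ℝ)^n * bb s n) +
      (∑ n ∈ range (N+1), (-1:ℝ)^n * bb s n) - 1) atTop (𝓝 (l + l - 1)) :=
    (hl.add (hl.comp (tendsto_add_atTop_nat 1))).sub tendsto_const_nhds
  have hmeq : m = l + l - 1 := tendsto_nhds_unique hm (h2.congr fun N => (hid N).symm)
  norm_num [bb_zero] at hmle
  exact ⟨l, hl, by linarith, by linarith⟩

/-! ### The Abel-summability lemma -/

lemma abel_summable (c : ℝ) :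
    ∃ g : ℝ → ℝ,
      (∀ s : ℝ, 0 < s →
        Tendsto (fun N => ∑ n ∈ Finset.range N,
            ((-1 : ℝ) ^ n + c / (n + 1 : ℝ) ^ 2) * Real.exp (-s * Real.log (n + 1)))
          atTop (𝓝 (g s))) ∧
      Tendsto g (𝓝[>] (0 : ℝ)) (𝓝 (1 / 2 + c * Real.pi ^ 2 / 6)) := by
  classical
  set η : ℝ → ℝ := fun s => limUnder atTop (fun N => ∑ n ∈ range N, (-1:ℝ)^n * bb s n) with hηdef
  set Z : ℝ → ℝ := fun s => ∑' n : ℕ, bb s n / ((n:ℝ)+1)^2 with hZdef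
  have hsummable : ∀ s : ℝ, 0 ≤ s → Summable (fun n : ℕ => bb s n / ((n:ℝ)+1)^2) := by
    intro s hs
    apply Summable.of_nonneg_of_le
      (fun n => div_nonneg (bb_pos s n).le (by positivity)) (fun n => ?_) basel'.summable
    gcongr
    exact bb_le_one hs n
  refine ⟨fun s => η s + c * Z s, ?_, ?_⟩
  · intro s hs
    obtain ⟨l, hl, -, -⟩ := eta_facts hs
    have hηs : η s = l := hl.limUnder_eq
    have hZt : Tendsto (fun N => ∑ n ∈ range N, bb s n / ((n:ℝ)+1)^2) atTop (𝓝 (Z s)) :=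
      (hsummable s hs.le).hasSum.tendsto_sum_nat
    have hadd := hl.add (hZt.const_mul c)
    rw [show (fun s => η s + c * Z s) s = l + c * Z s from by
      rw [show (fun s => η s + c * Z s) s = η s + c * Z s from rfl, hηs]]
    refine hadd.congr fun N => ?_
    rw [mul_sum, ← sum_add_distrib]
    refine Finset.sum_congr rfl fun n _ => ?_
    simp only [bb]
    ring
  · have hηlim : Tendsto η (𝓝[>] (0:ℝ)) (𝓝 (1/2)) := by
      have hup : Tendsto (fun s : ℝ => 1/2 + (1 - Real.exp (-s * Real.log 2))/2)
          (𝓝[>] (0:ℝ)) (𝓝 (1/2)) := by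
        have hcont : Continuous (fun s : ℝ => 1/2 + (1 - Real.exp (-s * Real.log 2))/2) := by
          continuity
        have := (hcont.tendsto 0).mono_left (nhdsWithin_le_nhds (s := Set.Ioi (0:ℝ)))
        simpa using this
      apply tendsto_of_tendsto_of_tendsto_of_le_of_le' tendsto_const_nhds hup
      · filter_upwards [self_mem_nhdsWithin] with s hs
        obtain ⟨l, hl, hl1, -⟩ := eta_facts (hs : (0:ℝ) < s)
        rw [show η s = l from hl.limUnder_eq]
        exact hl1
      · filter_upwards [self_mem_nhdsWithin] with s hs
        obtain ⟨l, hl, -, hl2⟩ := eta_facts (hs : (0:ℝ) < s)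
        rw [show η s = l from hl.limUnder_eq]
        have hb1 : bb s 1 = Real.exp (-s * Real.log 2) := by norm_num [bb]
        rw [hb1] at hl2
        linarith
    have hZlim : Tendsto Z (𝓝[>] (0:ℝ)) (𝓝 (π^2/6)) := by
      have hdct := tendsto_tsum_of_dominated_convergence (𝓕 := 𝓝[>] (0:ℝ))
        (f := fun (s : ℝ) (n : ℕ) => bb s n / ((n:ℝ)+1)^2)
        (g := fun n : ℕ => 1 / ((n:ℝ)+1)^2)
        (bound := fun n : ℕ => 1 / ((n:ℝ)+1)^2)
        basel'.summable ?_ ?_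
      · rw [basel'.tsum_eq] at hdct
        exact hdct
      · intro n
        have hcont : Continuous (fun s : ℝ => bb s n / ((n:ℝ)+1)^2) := by
          unfold bb; continuity
        have := (hcont.tendsto 0).mono_left (nhdsWithin_le_nhds (s := Set.Ioi (0:ℝ)))
        simpa [bb] using this
      · filter_upwards [self_mem_nhdsWithin] with s hs
        intro n
        rw [Real.norm_eq_abs, abs_of_nonneg (div_nonneg (bb_pos s n).le (by positivity))]
        gcongr
        exact bb_le_one (le_of_lt hs) n
    have := hηlim.add (hZlim.const_mul c)
    convert this using 2
    ring

/-! ### Level sets -/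

section level

variable (n : ℕ) (t : ℝ)

lemma lkey0 : (-1:ℝ)^n ≤ t ↔ 0 ≤ ((n:ℝ)+1)^2 * (t + -(-1:ℝ)^n) := by
  have hq : (0:ℝ) < ((n:ℝ) + 1)^2 := by positivity
  constructor
  · intro h; nlinarith
  · intro h; nlinarith

lemma lkey0' : (-1:ℝ)^n < t ↔ 0 < ((n:ℝ)+1)^2 * (t + -(-1:ℝ)^n) := by
  have hq : (0:ℝ) < ((n:ℝ) + 1)^2 := by positivity
  constructor
  · intro h; nlinarith
  · intro h; nlinarith

lemma lkey1 (x : ℝ) :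
    (-1:ℝ)^n + x / (n + 1 : ℝ)^2 ≤ t ↔ x ≤ ((n:ℝ)+1)^2 * (t + -(-1:ℝ)^n) := by
  have hq : (0:ℝ) < ((n:ℝ) + 1)^2 := by positivity
  constructor
  · intro h
    have h' : x / ((n:ℝ)+1)^2 ≤ t - (-1:ℝ)^n := by linarith
    rw [div_le_iff₀ hq] at h'
    nlinarith
  · intro h
    have h' : x / ((n:ℝ)+1)^2 ≤ t - (-1:ℝ)^n := by
      rw [div_le_iff₀ hq]; nlinarith
    linarith

lemma lkey2 (x : ℝ) :
    t ≤ (-1:ℝ)^n + x / (n + 1 : ℝ)^2 ↔ ((n:ℝ)+1)^2 * (t + -(-1:ℝ)^n) ≤ x := by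
  have hq : (0:ℝ) < ((n:ℝ) + 1)^2 := by positivity
  constructor
  · intro h
    have h' : t - (-1:ℝ)^n ≤ x / ((n:ℝ)+1)^2 := by linarith
    rw [le_div_iff₀ hq] at h'
    nlinarith
  · intro h
    have h' : t - (-1:ℝ)^n ≤ x / ((n:ℝ)+1)^2 := by
      rw [le_div_iff₀ hq]; nlinarith
    linarith

lemma lkey2' (x : ℝ) :
    t < (-1:ℝ)^n + x / (n + 1 : ℝ)^2 ↔ ((n:ℝ)+1)^2 * (t + -(-1:ℝ)^n) < x := by
  have hq : (0:ℝ) < ((n:ℝ) + 1)^2 := by positivity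
  constructor
  · intro h
    have h' : t - (-1:ℝ)^n < x / ((n:ℝ)+1)^2 := by linarith
    rw [lt_div_iff₀ hq] at h'
    nlinarith
  · intro h
    have h' : t - (-1:ℝ)^n < x / ((n:ℝ)+1)^2 := by
      rw [lt_div_iff₀ hq]; nlinarith
    linarith

lemma neg_one_pow_succ : ((-1:ℝ))^(n+1) = -(-1:ℝ)^n := by rw [pow_succ]; ring

lemma uLevel_pos_eq {α : ℝ} (hpos : 0 < α) (h1 : α ≤ 1) :
    {t : ℝ | α ≤ uFun n t} =
      Set.Icc ((-1:ℝ)^n + α / (n + 1 : ℝ)^2) ((-1:ℝ)^n + (2 - α) / (n + 1 : ℝ)^2) := by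
  ext t
  simp only [Set.mem_setOf_eq, Set.mem_Icc, uFun, neg_one_pow_succ, lkey0, lkey1, lkey2]
  set X := ((n:ℝ)+1)^2 * (t + -(-1:ℝ)^n) with hX
  constructor
  · intro ht
    split_ifs at ht with hc1 hc2
    · exact ⟨ht, by linarith [hc1.2]⟩
    · exact ⟨by linarith [hc2.1], by linarith⟩
    · linarith
  · rintro ⟨ha, hb⟩
    rcases le_or_gt X 1 with hx | hx
    · rw [if_pos ⟨by linarith, hx⟩]; linarith
    · rw [if_neg (fun hcon => absurd hcon.2 (not_le.2 hx)), if_pos ⟨hx.le, by linarith⟩]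
      linarith

lemma uFun_support_eq :
    {t : ℝ | 0 < uFun n t} = Set.Ioo ((-1:ℝ)^n) ((-1:ℝ)^n + 2 / (n + 1 : ℝ)^2) := by
  ext t
  simp only [Set.mem_setOf_eq, Set.mem_Ioo, uFun, neg_one_pow_succ, lkey0, lkey0', lkey1,
    lkey2, lkey2']
  set X := ((n:ℝ)+1)^2 * (t + -(-1:ℝ)^n) with hX
  constructor
  · intro ht
    split_ifs at ht with hc1 hc2
    · exact ⟨ht, by linarith [hc1.2]⟩
    · exact ⟨by linarith [hc2.1], by linarith⟩
    · linarith
  · rintro ⟨ha, hb⟩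
    rcases le_or_gt X 1 with hx | hx
    · rw [if_pos ⟨by linarith, hx⟩]; linarith
    · rw [if_neg (fun hcon => absurd hcon.2 (not_le.2 hx)), if_pos ⟨hx.le, by linarith⟩]
      linarith

end level

/-- Levelwise counterexample: level endpoints of `u_n` and `(A, ln(n+1))`-summability
of the level series to `1/2 + απ²/6` and `1/2 + (2-α)π²/6`. -/
theorem fuzzy_counterexample_levelwise :
    (∀ n : ℕ, ∀ α ∈ Set.Icc (0 : ℝ) 1,
      sInf (uLevel n α) = (-1 : ℝ) ^ n + α / (n + 1 : ℝ) ^ 2 ∧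
      sSup (uLevel n α) = (-1 : ℝ) ^ n + (2 - α) / (n + 1 : ℝ) ^ 2) ∧
    (∀ α ∈ Set.Icc (0 : ℝ) 1, ∃ g : ℝ → ℝ,
      (∀ s : ℝ, 0 < s →
        Tendsto (fun N => ∑ n ∈ Finset.range N,
            ((-1 : ℝ) ^ n + α / (n + 1 : ℝ) ^ 2) * Real.exp (-s * Real.log (n + 1)))
          atTop (𝓝 (g s))) ∧
      Tendsto g (𝓝[>] (0 : ℝ)) (𝓝 (1 / 2 + α * Real.pi ^ 2 / 6))) ∧
    (∀ α ∈ Set.Icc (0 : ℝ) 1, ∃ g : ℝ → ℝ,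
      (∀ s : ℝ, 0 < s →
        Tendsto (fun N => ∑ n ∈ Finset.range N,
            ((-1 : ℝ) ^ n + (2 - α) / (n + 1 : ℝ) ^ 2) *
              Real.exp (-s * Real.log (n + 1)))
          atTop (𝓝 (g s))) ∧
      Tendsto g (𝓝[>] (0 : ℝ)) (𝓝 (1 / 2 + (2 - α) * Real.pi ^ 2 / 6))) := by
  refine ⟨?_, fun α _ => abel_summable α, fun α _ => abel_summable (2 - α)⟩
  intro n α hα
  obtain ⟨h0, h1⟩ := hα
  rcases eq_or_lt_of_le h0 with rfl | hpos
  · rw [uLevel, if_pos rfl, uFun_support_eq]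
    have hlt : (-1:ℝ)^n < (-1:ℝ)^n + 2/((n:ℝ)+1)^2 := by
      have : (0:ℝ) < 2/((n:ℝ)+1)^2 := by positivity
      linarith
    rw [closure_Ioo hlt.ne, csInf_Icc hlt.le, csSup_Icc hlt.le]
    norm_num
  · rw [uLevel, if_neg (ne_of_gt hpos), uLevel_pos_eq n hpos h1]
    have hab : (-1:ℝ)^n + α/((n:ℝ)+1)^2 ≤ (-1:ℝ)^n + (2-α)/((n:ℝ)+1)^2 := by
      have h2 : α/((n:ℝ)+1)^2 ≤ (2-α)/((n:ℝ)+1)^2 := by gcongr <;> linarith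
      linarith
    rw [csInf_Icc hab, csSup_Icc hab]
    exact ⟨rfl, rfl⟩
end
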